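/- arXiv:2405.07637 — 9 statements merged into one kernel-verified Lean document; each statement's English description precedes it below -/
import Mathlib

section
/- Let d ≥ 1 and T ≥ 1 be integers, λ > 0, and let z_1, …, z_T ∈ R^d satisfy ‖z_t‖² ≤ λ for all t. Define V_t = λ·I_d + Σ_{s=1}^{t−1} z_s z_sᵀ for t = 1, …, T. Then Σ_{t=1}^{T} z_tᵀ V_t^{−1} z_t ≤ 2·d·log(T + 1). -/
open Matrix
open scoped BigOperators

private lemma cs_aux {d : ℕ} (u v : Fin d → ℝ) :
    (u ⬝ᵥ v) ^ 2 ≤ (∑ i, u i ^ 2) * (∑ i, v i ^ 2) := by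
  simpa [dotProduct] using Finset.sum_mul_sq_le_sq_mul_sq Finset.univ u v

private lemma log_aux {x : ℝ} (h0 : 0 ≤ x) (h1 : x ≤ 1) : x ≤ 2 * Real.log (1 + x) := by
  have hx : (0:ℝ) < 1 + x := by linarith
  have key : Real.exp (x / 2) ≤ 1 + x := by
    have h2 := Real.add_one_le_exp (-(x / 2))
    have h3 : Real.exp (x / 2) * Real.exp (-(x / 2)) = 1 := by
      rw [← Real.exp_add]; simp
    nlinarith [Real.exp_pos (x / 2), Real.exp_pos (-(x / 2))]
  have := (Real.le_log_iff_exp_le hx).2 key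
  linarith

private lemma sum_mulVec_aux {α : Type*} {m : ℕ} (s : Finset α)
    (f : α → Matrix (Fin m) (Fin m) ℝ) (x : Fin m → ℝ) :
    (∑ a ∈ s, f a) *ᵥ x = ∑ a ∈ s, f a *ᵥ x := by
  induction s using Finset.cons_induction with
  | empty => simp [Matrix.zero_mulVec]
  | cons a s ha ih => simp [Finset.sum_cons, Matrix.add_mulVec, ih]

private lemma dotProduct_sum_aux {α : Type*} {m : ℕ} (s : Finset α)
    (x : Fin m → ℝ) (f : α → Fin m → ℝ) :
    x ⬝ᵥ (∑ a ∈ s, f a) = ∑ a ∈ s, x ⬝ᵥ f a := by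
  induction s using Finset.cons_induction with
  | empty => simp
  | cons a s ha ih => simp [Finset.sum_cons, dotProduct_add, ih]

private lemma vecMulVec_mulVec_aux {m : ℕ} (u x : Fin m → ℝ) :
    vecMulVec u u *ᵥ x = (u ⬝ᵥ x) • u := by
  ext i
  simp [vecMulVec_apply, mulVec, dotProduct, Finset.mul_sum, mul_assoc, mul_comm, mul_left_comm]

set_option maxHeartbeats 1600000 in
/-- Elliptical potential lemma: let `λ > 0` and `z_1, …, z_T ∈ ℝ^d` with `‖z_t‖² ≤ λ`.
With `V_t = λ·I + Σ_{s<t} z_s z_sᵀ`, we have `Σ_t z_tᵀ V_t⁻¹ z_t ≤ 2 d log (T+1)`. -/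
theorem stmt_3
    (d T : ℕ) (hd : 1 ≤ d) (hT : 1 ≤ T)
    (lam : ℝ) (hlam : 0 < lam)
    (z : Fin T → Fin d → ℝ)
    (hz : ∀ t, (∑ i, z t i ^ 2) ≤ lam)
    (V : Fin T → Matrix (Fin d) (Fin d) ℝ)
    (hV : ∀ t, V t = lam • (1 : Matrix (Fin d) (Fin d) ℝ) +
      ∑ s ∈ Finset.Iio t, vecMulVec (z s) (z s)) :
    (∑ t, z t ⬝ᵥ ((V t)⁻¹ *ᵥ z t)) ≤ 2 * d * Real.log (T + 1) := by
  classical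
  obtain ⟨S, hS⟩ : ∃ S : ℕ → Finset (Fin T),
      ∀ n, S n = Finset.univ.filter (fun s : Fin T => (s : ℕ) < n) := ⟨_, fun _ => rfl⟩
  obtain ⟨M, hM⟩ : ∃ M : ℕ → Matrix (Fin d) (Fin d) ℝ,
      ∀ n, M n = lam • (1 : Matrix (Fin d) (Fin d) ℝ) + ∑ s ∈ S n, vecMulVec (z s) (z s) :=
    ⟨_, fun _ => rfl⟩
  have hVM : ∀ t : Fin T, V t = M t := by
    intro t
    rw [hV, hM]
    congr 1
    apply Finset.sum_congr _ (fun _ _ => rfl)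
    rw [hS]
    ext s
    simp only [Finset.mem_Iio, Finset.mem_filter, Finset.mem_univ, true_and, Fin.lt_def]
  -- each rank-one piece is PSD
  have hpsd : ∀ s : Fin T, (vecMulVec (z s) (z s)).PosSemidef := by
    intro s
    have h1 : vecMulVec (z s) (z s) = replicateCol Unit (z s) * (replicateCol Unit (z s))ᴴ := by
      rw [vecMulVec_eq (ι := Unit), conjTranspose_replicateCol, star_trivial]
    rw [h1]
    exact posSemidef_self_mul_conjTranspose _
  have hMpd : ∀ n, (M n).PosDef := by
    intro n
    rw [hM]
    have h1 : (lam • (1 : Matrix (Fin d) (Fin d) ℝ)).PosDef := by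
      rw [smul_one_eq_diagonal]
      exact Matrix.PosDef.diagonal (fun _ => hlam)
    exact h1.add_posSemidef
      (Finset.sum_induction _ _ (fun a b ha hb => ha.add hb) Matrix.PosSemidef.zero
        (fun s _ => hpsd s))
  -- quadratic form of M n
  have hquad : ∀ (n : ℕ) (x : Fin d → ℝ), x ⬝ᵥ (M n *ᵥ x) =
      lam * (x ⬝ᵥ x) + ∑ s ∈ S n, (z s ⬝ᵥ x) ^ 2 := by
    intro n x
    rw [hM, add_mulVec, dotProduct_add, smul_mulVec, one_mulVec, dotProduct_smul,
      smul_eq_mul, sum_mulVec_aux, dotProduct_sum_aux]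
    congr 1
    refine Finset.sum_congr rfl fun s _ => ?_
    rw [vecMulVec_mulVec_aux, dotProduct_smul, smul_eq_mul, dotProduct_comm, sq]
  -- w t is nonnegative
  have hw0 : ∀ t : Fin T, 0 ≤ z t ⬝ᵥ ((M t)⁻¹ *ᵥ z t) := by
    intro t
    simpa using ((hMpd t).inv).posSemidef.dotProduct_mulVec_nonneg (z t)
  -- w t ≤ 1
  have hw1 : ∀ t : Fin T, z t ⬝ᵥ ((M t)⁻¹ *ᵥ z t) ≤ 1 := by
    intro t
    set y : Fin d → ℝ := (M t)⁻¹ *ᵥ z t with hy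
    set w : ℝ := z t ⬝ᵥ y with hwdef
    have hzy : M t *ᵥ y = z t := by
      rw [hy, mulVec_mulVec, Matrix.mul_nonsing_inv _ (hMpd t).det_pos.ne'.isUnit, one_mulVec]
    have hsym : w = y ⬝ᵥ (M t *ᵥ y) := by
      rw [hwdef, hzy, dotProduct_comm]
    have hquady := hquad t y
    have hyy2 : y ⬝ᵥ y = ∑ i, y i ^ 2 := by simp [dotProduct, sq]
    have hyy : (0:ℝ) ≤ y ⬝ᵥ y := by rw [hyy2]; positivity
    have hsumnn : (0:ℝ) ≤ ∑ s ∈ S t, (z s ⬝ᵥ y) ^ 2 := by positivity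
    have hlow : lam * (y ⬝ᵥ y) ≤ w := by rw [hsym, hquady]; linarith
    have hcs : w ^ 2 ≤ (∑ i, z t i ^ 2) * (∑ i, y i ^ 2) := cs_aux _ _
    rw [← hyy2] at hcs
    have hzb := hz t
    have hwsq : w ^ 2 ≤ w := by nlinarith
    nlinarith [hw0 t]
  -- determinant recursion
  have hdet : ∀ t : Fin T,
      (M ((t : ℕ) + 1)).det = (M t).det * (1 + z t ⬝ᵥ ((M t)⁻¹ *ᵥ z t)) := by
    intro t
    have hnot : t ∉ S (t : ℕ) := by rw [hS]; simp
    have hins : S ((t : ℕ) + 1) = insert t (S (t : ℕ)) := by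
      rw [hS, hS]
      ext s
      simp only [Finset.mem_filter, Finset.mem_univ, true_and, Finset.mem_insert,
        Nat.lt_succ_iff_lt_or_eq, Fin.ext_iff]
      tauto
    have hstep : M ((t : ℕ) + 1) = M t + vecMulVec (z t) (z t) := by
      rw [hM, hM, hins, Finset.sum_insert hnot]
      abel
    rw [hstep, vecMulVec_eq (ι := Unit),
      det_add_replicateCol_mul_replicateRow (hMpd t).det_pos.ne'.isUnit (z t) (z t)]
    congr 1
    rw [det_unique, Matrix.mul_assoc, ← replicateCol_mulVec]
    simp [Matrix.add_apply, Matrix.one_apply_eq, replicateRow_mul_replicateCol_apply]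
  -- telescoping
  have htel : ∀ n, n ≤ T →
      (M n).det = lam ^ d * ∏ t ∈ S n, (1 + z t ⬝ᵥ ((M t)⁻¹ *ᵥ z t)) := by
    intro n hn
    induction n with
    | zero =>
      have h0 : S 0 = ∅ := by rw [hS]; ext s; simp
      rw [hM, h0]
      simp [Matrix.det_smul]
    | succ k ih =>
      have hkT : k < T := hn
      have hk : k ≤ T := hkT.le
      set t : Fin T := ⟨k, hkT⟩ with ht
      have hnot : t ∉ S k := by rw [hS]; simp [ht]
      have hins : S (k + 1) = insert t (S k) := by
        rw [hS, hS]
        ext s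
        simp only [Finset.mem_filter, Finset.mem_univ, true_and, Finset.mem_insert,
          Nat.lt_succ_iff_lt_or_eq, Fin.ext_iff, ht]
        tauto
      have hd1 := hdet t
      rw [show ((t : ℕ) + 1) = k + 1 from rfl] at hd1
      rw [hd1, ih hk, hins, Finset.prod_insert hnot]
      ring
  have hST : S T = Finset.univ := by rw [hS]; ext s; simp [s.isLt]
  -- eigenvalue bound for M T
  have hherm : (M T).IsHermitian := (hMpd T).isHermitian
  have heig : ∀ i, hherm.eigenvalues i ≤ lam * (T + 1) := by
    intro i
    set v : Fin d → ℝ := ⇑(hherm.eigenvectorBasis i) with hv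
    have hnorm : ∑ j, v j ^ 2 = 1 := by
      have h1 : ‖hherm.eigenvectorBasis i‖ = 1 := hherm.eigenvectorBasis.orthonormal.1 i
      rw [EuclideanSpace.norm_eq] at h1
      have h2 := Real.sqrt_eq_one.mp h1
      simpa [Real.norm_eq_abs, sq_abs] using h2
    have heq : hherm.eigenvalues i = v ⬝ᵥ (M T *ᵥ v) := by
      have h3 := hherm.eigenvalues_eq i
      simpa [hv] using h3
    have hxx : v ⬝ᵥ v = 1 := by simpa [dotProduct, sq] using hnorm
    rw [heq, hquad T v, hxx, mul_one]
    have hbound : ∀ s ∈ S T, (z s ⬝ᵥ v) ^ 2 ≤ lam := by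
      intro s _
      calc (z s ⬝ᵥ v) ^ 2 ≤ (∑ i, z s i ^ 2) * (∑ i, v i ^ 2) := cs_aux _ _
        _ = (∑ i, z s i ^ 2) := by rw [hnorm, mul_one]
        _ ≤ lam := hz s
    have hsum : ∑ s ∈ S T, (z s ⬝ᵥ v) ^ 2 ≤ (S T).card • lam :=
      Finset.sum_le_card_nsmul _ _ _ hbound
    have hcard : (S T).card = T := by rw [hST]; simp
    rw [hcard, nsmul_eq_mul] at hsum
    nlinarith
  have hdetle : (M T).det ≤ (lam * (T + 1)) ^ d := by
    have h1 : (M T).det = ∏ i, hherm.eigenvalues i := by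
      have h2 := hherm.det_eq_prod_eigenvalues
      simpa using h2
    rw [h1]
    calc ∏ i, hherm.eigenvalues i ≤ ∏ _i : Fin d, (lam * (T + 1)) :=
          Finset.prod_le_prod (fun i _ => ((hMpd T).eigenvalues_pos i).le) (fun i _ => heig i)
      _ = (lam * (T + 1)) ^ d := by simp
  -- product bound
  have hprod : ∏ t, (1 + z t ⬝ᵥ ((M t)⁻¹ *ᵥ z t)) ≤ ((T : ℝ) + 1) ^ d := by
    have h1 := htel T le_rfl
    rw [hST] at h1
    have h2 : lam ^ d * ∏ t, (1 + z t ⬝ᵥ ((M t)⁻¹ *ᵥ z t)) ≤ lam ^ d * ((T : ℝ) + 1) ^ d := by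
      rw [← h1, ← mul_pow]
      exact hdetle
    have hpow : (0:ℝ) < lam ^ d := by positivity
    exact le_of_mul_le_mul_left h2 hpow
  have hprodpos : (0:ℝ) < ∏ t, (1 + z t ⬝ᵥ ((M t)⁻¹ *ᵥ z t)) :=
    Finset.prod_pos fun t _ => by have := hw0 t; linarith
  -- final chain
  calc (∑ t, z t ⬝ᵥ ((V t)⁻¹ *ᵥ z t))
      = ∑ t, z t ⬝ᵥ ((M t)⁻¹ *ᵥ z t) := by
        refine Finset.sum_congr rfl fun t _ => ?_
        rw [hVM t]
    _ ≤ ∑ t, 2 * Real.log (1 + z t ⬝ᵥ ((M t)⁻¹ *ᵥ z t)) :=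
        Finset.sum_le_sum fun t _ => log_aux (hw0 t) (hw1 t)
    _ = 2 * Real.log (∏ t, (1 + z t ⬝ᵥ ((M t)⁻¹ *ᵥ z t))) := by
        rw [← Finset.mul_sum, Real.log_prod]
        intro t _
        have := hw0 t
        linarith
    _ ≤ 2 * Real.log (((T : ℝ) + 1) ^ d) := by
        have := Real.log_le_log hprodpos hprod
        linarith
    _ = 2 * d * Real.log (T + 1) := by
        rw [Real.log_pow]
        ring
end

section
/- Let d ≥ 1 and T ≥ 1 be integers, λ > 0, and let z_1, …, z_T ∈ R^d satisfy ‖z_t‖² ≤ λ for all t. Define V_t = λ·I_d + Σ_{s=1}^{t−1} z_s z_sᵀ for t = 1, …, T. Then Σ_{t=1}^{T} ‖z_t‖_{V_t^{−1}} ≤ √( T · Σ_{t=1}^{T} ‖z_t‖²_{V_t^{−1}} ) ≤ √( 2·T·d·log(T + 1) ). -/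
open Matrix
open scoped BigOperators

private lemma aux_log_bound (q : ℝ) (h0 : 0 ≤ q) (h1 : q ≤ 1) :
    q ≤ 2 * Real.log (1 + q) := by
  have hq2 : (0:ℝ) < 1 + q := by linarith
  have h2 : q / 2 ≤ Real.log (1 + q) := by
    rw [Real.le_log_iff_exp_le hq2]
    have e1 := Real.add_one_le_exp (-(q/2))
    have e3 : Real.exp (q/2) * Real.exp (-(q/2)) = 1 := by
      rw [← Real.exp_add]; simp
    nlinarith [Real.exp_pos (-(q/2)), Real.exp_pos (q/2)]
  linarith

private lemma aux_det_step (d : ℕ) (A : Matrix (Fin d) (Fin d) ℝ) (hA : A.PosDef)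
    (u : Fin d → ℝ) :
    det (A + vecMulVec u u) = det A * (1 + u ⬝ᵥ A⁻¹ *ᵥ u) := by
  rw [vecMulVec_eq Unit, det_add_replicateCol_mul_replicateRow hA.det_pos.ne'.isUnit]
  congr 1
  rw [det_unique]
  simp only [Matrix.add_apply, Matrix.one_apply_eq, Matrix.mul_apply, Matrix.mulVec,
    dotProduct, Matrix.replicateRow_apply, Matrix.replicateCol_apply, Finset.mul_sum, Finset.sum_mul]
  congr 1
  rw [Finset.sum_comm]
  apply Finset.sum_congr rfl; intro i _
  apply Finset.sum_congr rfl; intro j _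
  ring

private lemma aux_det_le (d : ℕ) (A : Matrix (Fin d) (Fin d) ℝ) (hA : A.PosDef) (B : ℝ)
    (hB : ∀ x : Fin d → ℝ, (∑ i, x i ^ 2) = 1 → x ⬝ᵥ A *ᵥ x ≤ B) :
    det A ≤ B ^ d := by
  have hH := hA.isHermitian
  have hdet : det A = ∏ i, hH.eigenvalues i := by
    have := hH.det_eq_prod_eigenvalues
    simpa using this
  rw [hdet]
  have hb : ∀ i, hH.eigenvalues i ≤ B := by
    intro i
    rw [hH.eigenvalues_eq]
    set v : Fin d → ℝ := ⇑(hH.eigenvectorBasis i) with hv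
    have hnorm : ∑ j, v j ^ 2 = 1 := by
      have h1 : ‖hH.eigenvectorBasis i‖ = 1 := hH.eigenvectorBasis.orthonormal.1 i
      rw [EuclideanSpace.norm_eq] at h1
      have h2 := congrArg (· ^ 2) h1
      simp only [one_pow] at h2
      rw [Real.sq_sqrt (by positivity)] at h2
      simpa [hv, sq_abs] using h2
    have := hB v hnorm
    simpa [dotProduct, Matrix.mulVec] using this
  calc ∏ i, hH.eigenvalues i ≤ ∏ _i : Fin d, B :=
        Finset.prod_le_prod (fun i _ => (hA.eigenvalues_pos i).le) (fun i _ => hb i)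
    _ = B ^ d := by simp

private lemma aux_q_bound (d : ℕ) (lam : ℝ) (hlam : 0 < lam)
    (A : Matrix (Fin d) (Fin d) ℝ) (hA : A.PosDef)
    (hlow : ∀ x : Fin d → ℝ, lam * (x ⬝ᵥ x) ≤ x ⬝ᵥ A *ᵥ x)
    (u : Fin d → ℝ) (hu : u ⬝ᵥ u ≤ lam) :
    0 ≤ u ⬝ᵥ A⁻¹ *ᵥ u ∧ u ⬝ᵥ A⁻¹ *ᵥ u ≤ 1 := by
  have h0 : 0 ≤ u ⬝ᵥ A⁻¹ *ᵥ u := by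
    have := hA.inv.posSemidef.dotProduct_mulVec_nonneg u
    simpa using this
  refine ⟨h0, ?_⟩
  set y : Fin d → ℝ := A⁻¹ *ᵥ u with hy
  set q : ℝ := u ⬝ᵥ y with hqdef
  have hAy : A *ᵥ y = u := by
    rw [hy, Matrix.mulVec_mulVec, Matrix.mul_nonsing_inv _ hA.det_pos.ne'.isUnit,
      Matrix.one_mulVec]
  have h1 : lam * (y ⬝ᵥ y) ≤ q := by
    have := hlow y
    rw [hAy] at this
    rwa [dotProduct_comm y u] at this
  have h2 : q ^ 2 ≤ (u ⬝ᵥ u) * (y ⬝ᵥ y) := by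
    simpa [dotProduct, pow_two, hqdef] using
      Finset.sum_mul_sq_le_sq_mul_sq Finset.univ u y
  have hyy : 0 ≤ y ⬝ᵥ y := by
    simpa [dotProduct, pow_two] using
      Finset.sum_nonneg (fun i (_ : i ∈ Finset.univ) => mul_self_nonneg (y i))
  nlinarith

private lemma aux_quad_vecMulVec (d : ℕ) (u x : Fin d → ℝ) :
    x ⬝ᵥ (vecMulVec u u *ᵥ x) = (u ⬝ᵥ x) ^ 2 := by
  simp only [dotProduct, Matrix.mulVec, vecMulVec_apply, pow_two,
    Finset.mul_sum, Finset.sum_mul]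
  apply Finset.sum_congr rfl; intro i _
  apply Finset.sum_congr rfl; intro j _
  ring

/-- Elliptical potential lemma (norm form): with `V_t = λ·I + Σ_{s<t} z_s z_sᵀ` and
`‖z_t‖² ≤ λ`, writing `‖v‖_A = √(vᵀ A v)`, we have
`Σ_t ‖z_t‖_{V_t⁻¹} ≤ √(T · Σ_t ‖z_t‖²_{V_t⁻¹}) ≤ √(2 T d log(T+1))`. -/
theorem stmt_4
    (d T : ℕ) (hd : 1 ≤ d) (hT : 1 ≤ T)
    (lam : ℝ) (hlam : 0 < lam)
    (z : Fin T → Fin d → ℝ)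
    (hz : ∀ t, (∑ i, z t i ^ 2) ≤ lam)
    (V : Fin T → Matrix (Fin d) (Fin d) ℝ)
    (hV : ∀ t, V t = lam • (1 : Matrix (Fin d) (Fin d) ℝ) +
      ∑ s ∈ Finset.Iio t, vecMulVec (z s) (z s)) :
    (∑ t, Real.sqrt (z t ⬝ᵥ ((V t)⁻¹ *ᵥ z t))) ≤
        Real.sqrt (T * ∑ t, z t ⬝ᵥ ((V t)⁻¹ *ᵥ z t)) ∧
      Real.sqrt (T * ∑ t, z t ⬝ᵥ ((V t)⁻¹ *ᵥ z t)) ≤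
        Real.sqrt (2 * T * d * Real.log (T + 1)) := by
  classical
  -- the extended family of matrices
  set W : ℕ → Matrix (Fin d) (Fin d) ℝ := fun n =>
    lam • (1 : Matrix (Fin d) (Fin d) ℝ) +
      ∑ s ∈ Finset.univ.filter (fun s : Fin T => (s : ℕ) < n), vecMulVec (z s) (z s) with hW
  -- quadratic form of W
  have quadW : ∀ (n : ℕ) (x : Fin d → ℝ),
      x ⬝ᵥ (W n *ᵥ x) = lam * (x ⬝ᵥ x) +
        ∑ s ∈ Finset.univ.filter (fun s : Fin T => (s : ℕ) < n), (z s ⬝ᵥ x) ^ 2 := by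
    intro n x
    rw [hW]
    simp only []
    rw [Matrix.add_mulVec, dotProduct_add]
    congr 1
    · rw [smul_mulVec, Matrix.one_mulVec, dotProduct_smul, smul_eq_mul]
    · induction (Finset.univ.filter (fun s : Fin T => (s : ℕ) < n)) using Finset.induction with
      | empty => simp
      | insert _ _ h ih =>
          rw [Finset.sum_insert h, Finset.sum_insert h, Matrix.add_mulVec,
            dotProduct_add, ih, aux_quad_vecMulVec]
  -- positivity
  have hlowW : ∀ (n : ℕ) (x : Fin d → ℝ), lam * (x ⬝ᵥ x) ≤ x ⬝ᵥ (W n *ᵥ x) := by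
    intro n x
    rw [quadW]
    have : (0:ℝ) ≤ ∑ s ∈ Finset.univ.filter (fun s : Fin T => (s : ℕ) < n), (z s ⬝ᵥ x) ^ 2 :=
      Finset.sum_nonneg fun s _ => sq_nonneg _
    linarith
  have hermW : ∀ n, (W n).IsHermitian := by
    intro n
    have h1 : (lam • (1 : Matrix (Fin d) (Fin d) ℝ)).IsHermitian := by
      unfold Matrix.IsHermitian
      ext i j
      simp [Matrix.one_apply, eq_comm]
    refine h1.add ?_
    unfold Matrix.IsHermitian
    rw [Matrix.conjTranspose_sum]
    apply Finset.sum_congr rfl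
    intro s _
    ext i j
    simp [vecMulVec_apply, mul_comm]
  have posW : ∀ n, (W n).PosDef := by
    intro n
    refine Matrix.PosDef.of_dotProduct_mulVec_pos (hermW n) (fun x hx => ?_)
    have h1 : 0 < x ⬝ᵥ x := by
      have : x ⬝ᵥ x = ∑ i, x i ^ 2 := by simp [dotProduct, pow_two]
      rw [this]
      have hne : ∃ i, x i ≠ 0 := by
        by_contra h
        push_neg at h
        exact hx (funext h)
      obtain ⟨i, hi⟩ := hne
      exact Finset.sum_pos' (fun j _ => sq_nonneg _)
        ⟨i, Finset.mem_univ i, by positivity⟩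
    have := hlowW n x
    simp only [star_trivial]
    nlinarith
  -- V t = W t
  have hVW : ∀ t : Fin T, V t = W (t : ℕ) := by
    intro t
    rw [hV t, hW]
    congr 1
    apply Finset.sum_congr _ (fun _ _ => rfl)
    ext s
    simp only [Finset.mem_Iio, Finset.mem_filter, Finset.mem_univ, true_and, Fin.lt_def]
  -- the q values
  set q : Fin T → ℝ := fun t => z t ⬝ᵥ ((V t)⁻¹ *ᵥ z t) with hq
  have hzz : ∀ t : Fin T, z t ⬝ᵥ z t ≤ lam := by
    intro t
    have : z t ⬝ᵥ z t = ∑ i, z t i ^ 2 := by simp [dotProduct, pow_two]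
    rw [this]; exact hz t
  have hqb : ∀ t : Fin T, 0 ≤ q t ∧ q t ≤ 1 := by
    intro t
    rw [hq]
    simp only []
    rw [hVW t]
    exact aux_q_bound d lam hlam _ (posW t) (hlowW t) (z t) (hzz t)
  -- determinant recursion
  have detpos : ∀ n, 0 < det (W n) := fun n => (posW n).det_pos
  have detstep : ∀ (n : ℕ) (hn : n < T),
      det (W (n + 1)) = det (W n) * (1 + q ⟨n, hn⟩) := by
    intro n hn
    have hsplit : (Finset.univ.filter (fun s : Fin T => (s : ℕ) < n + 1)) =
        insert (⟨n, hn⟩ : Fin T) (Finset.univ.filter (fun s : Fin T => (s : ℕ) < n)) := by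
      ext s
      simp only [Finset.mem_filter, Finset.mem_insert, Finset.mem_univ, true_and, Fin.ext_iff]
      omega
    have hWn1 : W (n + 1) = W n + vecMulVec (z ⟨n, hn⟩) (z ⟨n, hn⟩) := by
      rw [hW]
      simp only []
      rw [hsplit, Finset.sum_insert (by simp)]
      abel
    rw [hWn1, aux_det_step d _ (posW n), hq]
    simp only []
    rw [hVW ⟨n, hn⟩]
  -- telescoping of logs
  set g : ℕ → ℝ := fun n => if h : n < T then Real.log (1 + q ⟨n, h⟩) else 0 with hg
  have tele : ∀ m : ℕ, m ≤ T →
      ∑ n ∈ Finset.range m, g n =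
        Real.log (det (W m)) - Real.log (det (W 0)) := by
    intro m hm
    induction m with
    | zero => simp
    | succ k ih =>
        have hk : k < T := by omega
        have hgk : g k = Real.log (1 + q ⟨k, hk⟩) := by
          rw [hg]; simp only [dif_pos hk]
        rw [Finset.sum_range_succ, ih (by omega), hgk, detstep k hk,
          Real.log_mul (detpos k).ne' (by nlinarith [(hqb ⟨k, hk⟩).1])]
        ring
  -- bound on det W T
  have hdT : det (W T) ≤ (lam * (T + 1)) ^ d := by
    apply aux_det_le d _ (posW T)
    intro x hx
    rw [quadW]
    have hxx : x ⬝ᵥ x = 1 := by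
      have : x ⬝ᵥ x = ∑ i, x i ^ 2 := by simp [dotProduct, pow_two]
      rw [this, hx]
    rw [hxx, mul_one]
    have hsum : ∑ s ∈ Finset.univ.filter (fun s : Fin T => (s : ℕ) < T), (z s ⬝ᵥ x) ^ 2 ≤
        ∑ _s : Fin T, lam := by
      apply le_trans (Finset.sum_le_sum_of_subset_of_nonneg (Finset.filter_subset _ _)
        (fun s _ _ => sq_nonneg _))
      apply Finset.sum_le_sum
      intro s _
      have hcs : (z s ⬝ᵥ x) ^ 2 ≤ (z s ⬝ᵥ z s) * (x ⬝ᵥ x) := by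
        simpa [dotProduct, pow_two] using
          Finset.sum_mul_sq_le_sq_mul_sq Finset.univ (z s) x
      rw [hxx, mul_one] at hcs
      exact le_trans hcs (hzz s)
    simp only [Finset.sum_const, Finset.card_univ, Fintype.card_fin, nsmul_eq_mul] at hsum
    nlinarith
  have hd0 : Real.log (det (W 0)) = d * Real.log lam := by
    have : W 0 = lam • (1 : Matrix (Fin d) (Fin d) ℝ) := by
      rw [hW]; simp
    rw [this, Matrix.det_smul, Matrix.det_one, mul_one, Fintype.card_fin,
      Real.log_pow]
  -- sum of logs bound
  have hlogsum : ∑ t : Fin T, Real.log (1 + q t) ≤ d * Real.log (T + 1) := by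
    have h1 : ∑ t : Fin T, Real.log (1 + q t) = ∑ n ∈ Finset.range T, g n := by
      rw [← Fin.sum_univ_eq_sum_range]
      apply Finset.sum_congr rfl
      intro t _
      rw [hg]
      simp only [dif_pos t.isLt, Fin.eta]
    rw [h1, tele T le_rfl, hd0]
    have h2 : Real.log (det (W T)) ≤ d * (Real.log lam + Real.log (T + 1)) := by
      calc Real.log (det (W T)) ≤ Real.log ((lam * (T + 1)) ^ d) :=
            Real.log_le_log (detpos T) hdT
        _ = d * Real.log (lam * (T + 1)) := by rw [Real.log_pow]
        _ = d * (Real.log lam + Real.log (T + 1)) := by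
            rw [Real.log_mul hlam.ne' (by positivity)]
    linarith
  -- sum of q bound
  have hqsum : ∑ t : Fin T, q t ≤ 2 * d * Real.log (T + 1) := by
    calc ∑ t : Fin T, q t ≤ ∑ t : Fin T, 2 * Real.log (1 + q t) :=
          Finset.sum_le_sum fun t _ => aux_log_bound (q t) (hqb t).1 (hqb t).2
      _ = 2 * ∑ t : Fin T, Real.log (1 + q t) := by rw [Finset.mul_sum]
      _ ≤ 2 * (d * Real.log (T + 1)) := by linarith
      _ = 2 * d * Real.log (T + 1) := by ring
  -- conclude
  have hq0 : ∀ t, 0 ≤ q t := fun t => (hqb t).1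
  constructor
  · have hcs : (∑ t : Fin T, Real.sqrt (q t)) ^ 2 ≤ T * ∑ t : Fin T, q t := by
      have := sq_sum_le_card_mul_sum_sq (s := (Finset.univ : Finset (Fin T)))
        (f := fun t => Real.sqrt (q t))
      simp only [Finset.card_univ, Fintype.card_fin] at this
      calc (∑ t : Fin T, Real.sqrt (q t)) ^ 2
          ≤ (T : ℝ) * ∑ t : Fin T, Real.sqrt (q t) ^ 2 := this
        _ = T * ∑ t : Fin T, q t := by
            congr 1
            exact Finset.sum_congr rfl fun t _ => Real.sq_sqrt (hq0 t)
    have hnn : 0 ≤ ∑ t : Fin T, Real.sqrt (q t) :=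
      Finset.sum_nonneg fun t _ => Real.sqrt_nonneg _
    calc ∑ t : Fin T, Real.sqrt (q t)
        = Real.sqrt ((∑ t : Fin T, Real.sqrt (q t)) ^ 2) := (Real.sqrt_sq hnn).symm
      _ ≤ Real.sqrt (T * ∑ t : Fin T, q t) := Real.sqrt_le_sqrt hcs
  · apply Real.sqrt_le_sqrt
    calc (T : ℝ) * ∑ t : Fin T, q t ≤ T * (2 * d * Real.log (T + 1)) :=
          mul_le_mul_of_nonneg_left hqsum (by positivity)
      _ = 2 * T * d * Real.log (T + 1) := by ring
end

section
/- Let N and M be d×d real symmetric matrices such that M is positive definite and N − M is positive semidefinite. Then for every v ∈ R^d, vᵀ N v ≤ (det N / det M) · vᵀ M v. -/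
open Matrix

variable {n : Type*} [Fintype n] [DecidableEq n]

lemma eig_ge_one {A : Matrix n n ℝ} (hA : A.IsHermitian) (h1 : (A - 1).PosSemidef)
    (i : n) : 1 ≤ hA.eigenvalues i := by
  have hu : A *ᵥ ⇑(hA.eigenvectorBasis i) = hA.eigenvalues i • ⇑(hA.eigenvectorBasis i) :=
    hA.mulVec_eigenvectorBasis i
  set u := ⇑(hA.eigenvectorBasis i) with hudef
  have hnorm : u ⬝ᵥ u = 1 := by
    have h := hA.eigenvectorBasis.orthonormal.1 i
    have : (inner ℝ (hA.eigenvectorBasis i) (hA.eigenvectorBasis i) : ℝ) = 1 := by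
      rw [real_inner_self_eq_norm_sq, h]; norm_num
    rw [EuclideanSpace.inner_eq_star_dotProduct] at this
    simpa [EuclideanSpace.inner_eq_star_dotProduct, dotProduct, mul_comm] using this
  have h2 := h1.dotProduct_mulVec_nonneg u
  rw [sub_mulVec, hu, one_mulVec] at h2
  simp only [star_trivial, dotProduct_sub, dotProduct_smul, smul_eq_mul, hnorm,
    RCLike.re_to_real] at h2
  linarith

lemma key {n : Type*} [Fintype n] [DecidableEq n] {A : Matrix n n ℝ} (hA : A.IsHermitian)
    (h1 : (A - 1).PosSemidef) :
    (A.det • (1 : Matrix n n ℝ) - A).PosSemidef := by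
  have hge : ∀ i, 1 ≤ hA.eigenvalues i := eig_ge_one hA h1
  have hdet : A.det = ∏ i, hA.eigenvalues i := by
    simpa using hA.det_eq_prod_eigenvalues
  have hle : ∀ i, hA.eigenvalues i ≤ A.det := fun i => by
    rw [hdet, ← Finset.mul_prod_erase Finset.univ _ (Finset.mem_univ i)]
    have h1 : (1 : ℝ) ≤ ∏ j ∈ Finset.univ.erase i, hA.eigenvalues j := by
      calc (1 : ℝ) = ∏ _j ∈ Finset.univ.erase i, (1 : ℝ) := by simp
        _ ≤ _ := Finset.prod_le_prod (fun _ _ => zero_le_one) (fun j _ => hge j)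
    nlinarith [hge i]
  have hdiag : PosSemidef (diagonal (fun i => A.det - hA.eigenvalues i)) :=
    posSemidef_diagonal_iff.mpr fun i => sub_nonneg.mpr (hle i)
  have := hdiag.mul_mul_conjTranspose_same (hA.eigenvectorUnitary : Matrix n n ℝ)
  convert this using 1
  have hU : (hA.eigenvectorUnitary : Matrix n n ℝ) *
      (star (hA.eigenvectorUnitary : Matrix n n ℝ)) = 1 :=
    Matrix.mem_unitaryGroup_iff.mp hA.eigenvectorUnitary.2
  have hspec := hA.spectral_theorem
  have hd : diagonal (fun i => A.det - hA.eigenvalues i)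
      = A.det • (1 : Matrix n n ℝ) - diagonal (RCLike.ofReal ∘ hA.eigenvalues) := by
    ext i j
    by_cases h : i = j <;> simp [h, Matrix.one_apply, diagonal_apply]
  rw [Matrix.star_eq_conjTranspose] at hU
  rw [Unitary.conjStarAlgAut_apply, Matrix.star_eq_conjTranspose] at hspec
  rw [hd, Matrix.mul_sub, Matrix.sub_mul, Matrix.mul_smul, Matrix.smul_mul,
    Matrix.mul_one, hU, ← hspec]

lemma sym_dot {n : Type*} [Fintype n] {S : Matrix n n ℝ} (hS : S.IsHermitian)
    (v z : n → ℝ) : (S *ᵥ v) ⬝ᵥ z = v ⬝ᵥ (S *ᵥ z) := by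
  rw [dotProduct_comm, dotProduct_mulVec, ← Matrix.mulVec_transpose,
    ← conjTranspose_eq_transpose_of_trivial, hS.eq, dotProduct_comm, dotProduct_comm v]

/-- If `M` is symmetric positive definite and `N − M` is positive semidefinite
(with `N` symmetric), then for every `v`, `vᵀ N v ≤ (det N / det M) · vᵀ M v`. -/
theorem stmt_5
    (d : ℕ) (N M : Matrix (Fin d) (Fin d) ℝ)
    (hN : N.IsSymm) (hM : M.IsSymm)
    (hMpd : M.PosDef) (hNM : (N - M).PosSemidef) :
    ∀ v : Fin d → ℝ, v ⬝ᵥ (N *ᵥ v) ≤ (N.det / M.det) * (v ⬝ᵥ (M *ᵥ v)) := by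
  intro v
  obtain ⟨S, hSS, hSh⟩ : ∃ S : Matrix (Fin d) (Fin d) ℝ, S * S = M ∧ S.IsHermitian := by
    open scoped MatrixOrder in
    exact ⟨CFC.sqrt M, CFC.sqrt_mul_sqrt_self M hMpd.posSemidef.nonneg,
      (CFC.sqrt_nonneg M).posSemidef.1⟩
  have hdetM : 0 < M.det := hMpd.det_pos
  have hdetS : IsUnit S.det := by
    have : S.det * S.det = M.det := by rw [← det_mul, hSS]
    apply isUnit_iff_ne_zero.mpr
    intro h; rw [h, mul_zero] at this; exact hdetM.ne this
  have hS1 : S * S⁻¹ = 1 := mul_nonsing_inv S hdetS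
  have hS2 : S⁻¹ * S = 1 := nonsing_inv_mul S hdetS
  have hSih : (S⁻¹).IsHermitian := hSh.inv
  have hNh : N.IsHermitian := by
    rw [Matrix.IsHermitian, conjTranspose_eq_transpose_of_trivial]; exact hN
  set A := S⁻¹ * N * S⁻¹ with hAdef
  have hA : A.IsHermitian := by
    rw [Matrix.IsHermitian, hAdef, conjTranspose_mul, conjTranspose_mul, hSih.eq, hNh.eq,
      Matrix.mul_assoc]
  have hSMS : S⁻¹ * M * S⁻¹ = 1 := by
    rw [← hSS, ← Matrix.mul_assoc, hS2, Matrix.one_mul, hS1]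
  have hA1 : (A - 1).PosSemidef := by
    have h := hNM.mul_mul_conjTranspose_same S⁻¹
    have heq : S⁻¹ * (N - M) * (S⁻¹)ᴴ = A - 1 := by
      rw [hSih.eq, Matrix.mul_sub, Matrix.sub_mul, hSMS]
    rwa [heq] at h
  have hdetA : A.det = N.det / M.det := by
    have hm : S.det * S.det = M.det := by rw [← det_mul, hSS]
    rw [hAdef, det_mul, det_mul, det_nonsing_inv, ← hm]
    have h0 : S.det ≠ 0 := hdetS.ne_zero
    rw [Ring.inverse_eq_inv]
    field_simp
  have hpsd := key hA hA1
  have hQ := hpsd.dotProduct_mulVec_nonneg (S *ᵥ v)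
  simp only [star_trivial, sub_mulVec, smul_mulVec, one_mulVec, dotProduct_sub,
    dotProduct_smul, smul_eq_mul, RCLike.re_to_real] at hQ
  have e1 : (S *ᵥ v) ⬝ᵥ (S *ᵥ v) = v ⬝ᵥ (M *ᵥ v) := by
    rw [sym_dot hSh, mulVec_mulVec, hSS]
  have e2 : (S *ᵥ v) ⬝ᵥ (A *ᵥ (S *ᵥ v)) = v ⬝ᵥ (N *ᵥ v) := by
    rw [mulVec_mulVec, hAdef, Matrix.mul_assoc (S⁻¹ * N), hS2, Matrix.mul_one,
      sym_dot hSh, mulVec_mulVec, ← Matrix.mul_assoc, hS1, Matrix.one_mul]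
  rw [e1, e2, hdetA] at hQ
  linarith
end

section
/- Let X and A be finite nonempty sets, d ≥ 1 an integer, φ : X × A → R^d with ‖φ(x,a)‖ ≤ 1 for all (x,a), and Z ⊆ X. For w ∈ R^d define Q(x,a;w) = 1{x∈Z}·φ(x,a)ᵀw and the softmax policy π(a|x;w) = exp(Q(x,a;w)) / Σ_{a'∈A} exp(Q(x,a';w)). Let C ≥ 0 and let w_1, w_1', w_2, w_2' ∈ R^d be such that max_{x∈X, a∈A} |Q(x,a;w_2')| ≤ C. Then for every x ∈ X, | Σ_{a∈A} π(a|x;w_1)·Q(x,a;w_2) − Σ_{a∈A} π(a|x;w_1')·Q(x,a;w_2') | ≤ ‖w_2 − w_2'‖ + 2C·‖w_1 − w_1'‖. -/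
open scoped BigOperators RealInnerProductSpace

lemma aux_exp_ineq (x : ℝ) (hx : 0 ≤ x) :
    2 * (Real.exp x - 1) ≤ x * (1 + Real.exp x) := by
  set f : ℝ → ℝ := fun y => y * (1 + Real.exp y) - 2 * Real.exp y + 2 with hf
  have hder : ∀ y : ℝ, HasDerivAt f (1 + (y - 1) * Real.exp y) y := by
    intro y
    have h1 : HasDerivAt (fun y : ℝ => y * (1 + Real.exp y))
        (1 * (1 + Real.exp y) + y * Real.exp y) y :=
      (hasDerivAt_id y).mul (((Real.hasDerivAt_exp y).const_add 1))
    have h2 : HasDerivAt (fun y : ℝ => 2 * Real.exp y) (2 * Real.exp y) y :=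
      (Real.hasDerivAt_exp y).const_mul 2
    have := (h1.sub h2).add_const 2
    refine this.congr_deriv ?_
    ring
  have hmono : Monotone f := by
    apply monotone_of_deriv_nonneg
    · exact fun y => ((hder y).differentiableAt)
    · intro y
      rw [(hder y).deriv]
      have h1 : Real.exp (-y) * Real.exp y = 1 := by
        rw [← Real.exp_add]; simp
      nlinarith [Real.add_one_le_exp (-y), Real.exp_pos y, Real.exp_pos (-y)]
  have h0 : f 0 = 0 := by simp [hf]
  have := hmono hx
  rw [h0] at this
  simp only [hf] at this
  linarith

lemma aux_abs_exp (s t : ℝ) :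
    |Real.exp s - Real.exp t| ≤ (Real.exp s + Real.exp t) * |s - t| / 2 := by
  have key : ∀ s t : ℝ, s ≤ t →
      |Real.exp s - Real.exp t| ≤ (Real.exp s + Real.exp t) * |s - t| / 2 := by
    intro s t hst
    have hx := aux_exp_ineq (t - s) (by linarith)
    have het : Real.exp t = Real.exp s * Real.exp (t - s) := by
      rw [← Real.exp_add]; ring_nf
    have hle : Real.exp s ≤ Real.exp t := Real.exp_le_exp.mpr hst
    rw [abs_of_nonpos (by linarith), abs_of_nonpos (by linarith)]
    have hes := Real.exp_pos s
    nlinarith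
  rcases le_total s t with h | h
  · exact key s t h
  · have := key t s h
    rw [abs_sub_comm, abs_sub_comm s t]
    linarith [this]

lemma key_softmax {A : Type*} [Fintype A] [Nonempty A] (u v g : A → ℝ) (C δ : ℝ)
    (hC : 0 ≤ C) (hδ : 0 ≤ δ)
    (hg : ∀ a, |g a| ≤ C) (huv : ∀ a, |u a - v a| ≤ δ) :
    |(∑ a, (Real.exp (u a) / ∑ b, Real.exp (u b)) * g a)
     - ∑ a, (Real.exp (v a) / ∑ b, Real.exp (v b)) * g a| ≤ 2 * C * δ := by
  set Su := ∑ b, Real.exp (u b) with hSu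
  set Sv := ∑ b, Real.exp (v b) with hSv
  have hSu0 : 0 < Su := Finset.sum_pos (fun _ _ => Real.exp_pos _) Finset.univ_nonempty
  have hSv0 : 0 < Sv := Finset.sum_pos (fun _ _ => Real.exp_pos _) Finset.univ_nonempty
  set E1 := ∑ a, Real.exp (u a) * g a with hE1
  set E2 := ∑ a, Real.exp (v a) * g a with hE2
  set N := ∑ a, ∑ b, Real.exp (u a) * Real.exp (v b) * (g a - g b) with hN
  have hinner : ∀ a, ∑ b, Real.exp (u a) * Real.exp (v b) * (g a - g b)
      = Real.exp (u a) * g a * Sv - Real.exp (u a) * E2 := by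
    intro a
    rw [hSv, hE2, Finset.mul_sum, Finset.mul_sum, ← Finset.sum_sub_distrib]
    apply Finset.sum_congr rfl; intro b _; ring
  have hN2 : N = Sv * E1 - Su * E2 := by
    rw [hN]
    calc (∑ a, ∑ b, Real.exp (u a) * Real.exp (v b) * (g a - g b))
        = ∑ a, (Real.exp (u a) * g a * Sv - Real.exp (u a) * E2) :=
          Finset.sum_congr rfl (fun a _ => hinner a)
      _ = (∑ a, Real.exp (u a) * g a * Sv) - ∑ a, Real.exp (u a) * E2 :=
          Finset.sum_sub_distrib _ _
      _ = E1 * Sv - Su * E2 := by rw [hE1, hSu, ← Finset.sum_mul, ← Finset.sum_mul]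
      _ = Sv * E1 - Su * E2 := by ring
  have hL1 : (∑ a, (Real.exp (u a) / Su) * g a) = E1 / Su := by
    rw [hE1, Finset.sum_div]; apply Finset.sum_congr rfl; intro a _; ring
  have hL2 : (∑ a, (Real.exp (v a) / Sv) * g a) = E2 / Sv := by
    rw [hE2, Finset.sum_div]; apply Finset.sum_congr rfl; intro a _; ring
  have hrw : (∑ a, (Real.exp (u a) / Su) * g a) - (∑ a, (Real.exp (v a) / Sv) * g a)
      = N / (Su * Sv) := by
    rw [hL1, hL2, hN2]; field_simp
  have hswap : N = ∑ a, ∑ b, Real.exp (u b) * Real.exp (v a) * (g b - g a) := by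
    rw [hN, Finset.sum_comm]
  have h2N : 2 * N = ∑ a, ∑ b,
      (Real.exp (u a) * Real.exp (v b) - Real.exp (u b) * Real.exp (v a)) * (g a - g b) := by
    calc 2 * N = (∑ a, ∑ b, Real.exp (u a) * Real.exp (v b) * (g a - g b))
          + ∑ a, ∑ b, Real.exp (u b) * Real.exp (v a) * (g b - g a) := by
          rw [← hN, ← hswap]; ring
      _ = ∑ a, ∑ b, (Real.exp (u a) * Real.exp (v b) * (g a - g b)
            + Real.exp (u b) * Real.exp (v a) * (g b - g a)) := by
          rw [← Finset.sum_add_distrib]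
          apply Finset.sum_congr rfl; intro a _
          rw [← Finset.sum_add_distrib]
      _ = _ := by
          apply Finset.sum_congr rfl; intro a _
          apply Finset.sum_congr rfl; intro b _
          ring
  have hterm : ∀ a b : A,
      |(Real.exp (u a) * Real.exp (v b) - Real.exp (u b) * Real.exp (v a)) * (g a - g b)|
      ≤ (Real.exp (u a) * Real.exp (v b) + Real.exp (u b) * Real.exp (v a)) * δ * (2 * C) := by
    intro a b
    rw [abs_mul]
    have h1 : |Real.exp (u a) * Real.exp (v b) - Real.exp (u b) * Real.exp (v a)|
        ≤ (Real.exp (u a) * Real.exp (v b) + Real.exp (u b) * Real.exp (v a)) * δ := by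
      have := aux_abs_exp (u a + v b) (u b + v a)
      rw [Real.exp_add, Real.exp_add] at this
      have habs : |u a + v b - (u b + v a)| ≤ 2 * δ := by
        have h3 : u a + v b - (u b + v a) = (u a - v a) - (u b - v b) := by ring
        rw [h3]
        calc |(u a - v a) - (u b - v b)| ≤ |u a - v a| + |u b - v b| := abs_sub _ _
          _ ≤ δ + δ := add_le_add (huv a) (huv b)
          _ = 2 * δ := by ring
      have hpos : 0 ≤ Real.exp (u a) * Real.exp (v b) + Real.exp (u b) * Real.exp (v a) := by
        positivity
      calc |Real.exp (u a) * Real.exp (v b) - Real.exp (u b) * Real.exp (v a)|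
          ≤ (Real.exp (u a) * Real.exp (v b) + Real.exp (u b) * Real.exp (v a))
            * |u a + v b - (u b + v a)| / 2 := this
        _ ≤ (Real.exp (u a) * Real.exp (v b) + Real.exp (u b) * Real.exp (v a)) * (2 * δ) / 2 := by
            apply div_le_div_of_nonneg_right ?_ (by norm_num)
            exact mul_le_mul_of_nonneg_left habs hpos
        _ = (Real.exp (u a) * Real.exp (v b) + Real.exp (u b) * Real.exp (v a)) * δ := by ring
    have h2 : |g a - g b| ≤ 2 * C := by
      calc |g a - g b| ≤ |g a| + |g b| := abs_sub _ _
        _ ≤ C + C := add_le_add (hg a) (hg b)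
        _ = 2 * C := by ring
    calc |Real.exp (u a) * Real.exp (v b) - Real.exp (u b) * Real.exp (v a)| * |g a - g b|
        ≤ ((Real.exp (u a) * Real.exp (v b) + Real.exp (u b) * Real.exp (v a)) * δ) * (2 * C) :=
          mul_le_mul h1 h2 (abs_nonneg _) (by positivity)
      _ = _ := by ring
  have hNbound : |2 * N| ≤ 2 * Su * Sv * δ * (2 * C) := by
    rw [h2N]
    calc |∑ a, ∑ b, (Real.exp (u a) * Real.exp (v b) - Real.exp (u b) * Real.exp (v a)) * (g a - g b)|
        ≤ ∑ a, ∑ b, |(Real.exp (u a) * Real.exp (v b) - Real.exp (u b) * Real.exp (v a)) * (g a - g b)| := by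
          refine (Finset.abs_sum_le_sum_abs _ _).trans ?_
          apply Finset.sum_le_sum; intro a _
          exact Finset.abs_sum_le_sum_abs _ _
      _ ≤ ∑ a, ∑ b, (Real.exp (u a) * Real.exp (v b) + Real.exp (u b) * Real.exp (v a)) * δ * (2 * C) := by
          apply Finset.sum_le_sum; intro a _
          apply Finset.sum_le_sum; intro b _
          exact hterm a b
      _ = 2 * Su * Sv * δ * (2 * C) := by
          simp only [← Finset.sum_mul]
          congr 1; congr 1
          have h1 : ∑ a, ∑ b, Real.exp (u a) * Real.exp (v b) = Su * Sv := by
            rw [hSu, hSv, Finset.sum_mul_sum]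
          have h2 : ∑ a : A, ∑ b : A, Real.exp (u b) * Real.exp (v a) = Su * Sv := by
            rw [Finset.sum_comm]; exact h1
          calc ∑ a, ∑ b, (Real.exp (u a) * Real.exp (v b) + Real.exp (u b) * Real.exp (v a))
              = ∑ a, ((∑ b, Real.exp (u a) * Real.exp (v b))
                + ∑ b, Real.exp (u b) * Real.exp (v a)) := by
                apply Finset.sum_congr rfl; intro a _; exact Finset.sum_add_distrib
            _ = (∑ a, ∑ b, Real.exp (u a) * Real.exp (v b))
                + ∑ a, ∑ b, Real.exp (u b) * Real.exp (v a) := Finset.sum_add_distrib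
            _ = 2 * Su * Sv := by rw [h1, h2]; ring
  rw [hrw, abs_div, abs_of_pos (mul_pos hSu0 hSv0), div_le_iff₀ (mul_pos hSu0 hSv0)]
  have h2N' : |2 * N| = 2 * |N| := by rw [abs_mul, abs_of_nonneg (by norm_num : (0:ℝ) ≤ 2)]
  rw [h2N'] at hNbound
  nlinarith [hNbound, mul_pos hSu0 hSv0]

/-- Lipschitz estimate for softmax-policy values of truncated linear Q-functions:
with `Q(x,a;w) = 1{x ∈ Z} φ(x,a)ᵀ w`, `π(a|x;w)` the softmax of `Q(x,·;w)`, `‖φ‖ ≤ 1`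
and `|Q(x,a;w₂')| ≤ C`, for every state `x`,
`|Σ_a π(a|x;w₁) Q(x,a;w₂) − Σ_a π(a|x;w₁') Q(x,a;w₂')| ≤ ‖w₂ − w₂'‖ + 2C‖w₁ − w₁'‖`. -/
theorem stmt_8
    (X A : Type*) [Fintype X] [DecidableEq X] [Fintype A] [Nonempty X] [Nonempty A]
    (d : ℕ) (hd : 1 ≤ d)
    (φ : X → A → EuclideanSpace ℝ (Fin d))
    (hφ : ∀ x a, ‖φ x a‖ ≤ 1)
    (Z : Finset X)
    (Q : X → A → EuclideanSpace ℝ (Fin d) → ℝ)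
    (hQ : ∀ x a w, Q x a w = (if x ∈ Z then (1 : ℝ) else 0) * ⟪φ x a, w⟫)
    (π : X → A → EuclideanSpace ℝ (Fin d) → ℝ)
    (hπ : ∀ x a w, π x a w = Real.exp (Q x a w) / ∑ a', Real.exp (Q x a' w))
    (C : ℝ) (hC : 0 ≤ C)
    (w₁ w₁' w₂ w₂' : EuclideanSpace ℝ (Fin d))
    (hC' : ∀ x a, |Q x a w₂'| ≤ C) :
    ∀ x, |(∑ a, π x a w₁ * Q x a w₂) - ∑ a, π x a w₁' * Q x a w₂'| ≤
      ‖w₂ - w₂'‖ + 2 * C * ‖w₁ - w₁'‖ := by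
  intro x
  have hlip : ∀ (a : A) (w w' : EuclideanSpace ℝ (Fin d)),
      |Q x a w - Q x a w'| ≤ ‖w - w'‖ := by
    intro a w w'
    rw [hQ, hQ, ← mul_sub, ← inner_sub_right]
    split_ifs with h
    · rw [one_mul]
      exact (abs_real_inner_le_norm _ _).trans
        (mul_le_of_le_one_left (norm_nonneg _) (hφ x a))
    · rw [zero_mul, abs_zero]
      exact norm_nonneg _
  have hSpos : (0:ℝ) < ∑ a' : A, Real.exp (Q x a' w₁) :=
    Finset.sum_pos (fun _ _ => Real.exp_pos _) Finset.univ_nonempty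
  have hp1 : ∑ a, π x a w₁ = 1 := by
    simp only [hπ]
    rw [← Finset.sum_div]
    exact div_self (ne_of_gt hSpos)
  have hpnn : ∀ a, 0 ≤ π x a w₁ := by
    intro a; rw [hπ]; positivity
  have hsplit : (∑ a, π x a w₁ * Q x a w₂) - ∑ a, π x a w₁' * Q x a w₂'
      = (∑ a, π x a w₁ * (Q x a w₂ - Q x a w₂'))
        + ((∑ a, π x a w₁ * Q x a w₂') - ∑ a, π x a w₁' * Q x a w₂') := by
    have h : ∑ a, π x a w₁ * (Q x a w₂ - Q x a w₂')
        = (∑ a, π x a w₁ * Q x a w₂) - ∑ a, π x a w₁ * Q x a w₂' := by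
      rw [← Finset.sum_sub_distrib]
      apply Finset.sum_congr rfl; intro a _; ring
    rw [h]; ring
  have hterm1 : |∑ a, π x a w₁ * (Q x a w₂ - Q x a w₂')| ≤ ‖w₂ - w₂'‖ := by
    calc |∑ a, π x a w₁ * (Q x a w₂ - Q x a w₂')|
        ≤ ∑ a, |π x a w₁ * (Q x a w₂ - Q x a w₂')| := Finset.abs_sum_le_sum_abs _ _
      _ = ∑ a, π x a w₁ * |Q x a w₂ - Q x a w₂'| := by
          apply Finset.sum_congr rfl; intro a _
          rw [abs_mul, abs_of_nonneg (hpnn a)]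
      _ ≤ ∑ a, π x a w₁ * ‖w₂ - w₂'‖ := by
          apply Finset.sum_le_sum; intro a _
          exact mul_le_mul_of_nonneg_left (hlip a w₂ w₂') (hpnn a)
      _ = ‖w₂ - w₂'‖ := by rw [← Finset.sum_mul, hp1, one_mul]
  have hterm2 : |(∑ a, π x a w₁ * Q x a w₂') - ∑ a, π x a w₁' * Q x a w₂'|
      ≤ 2 * C * ‖w₁ - w₁'‖ := by
    have := key_softmax (fun a => Q x a w₁) (fun a => Q x a w₁') (fun a => Q x a w₂')
      C ‖w₁ - w₁'‖ hC (norm_nonneg _) (fun a => hC' x a) (fun a => hlip a w₁ w₁')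
    simpa only [hπ] using this
  calc |(∑ a, π x a w₁ * Q x a w₂) - ∑ a, π x a w₁' * Q x a w₂'|
      ≤ |∑ a, π x a w₁ * (Q x a w₂ - Q x a w₂')|
        + |(∑ a, π x a w₁ * Q x a w₂') - ∑ a, π x a w₁' * Q x a w₂'| := by
        rw [hsplit]; exact abs_add_le _ _
    _ ≤ ‖w₂ - w₂'‖ + 2 * C * ‖w₁ - w₁'‖ := add_le_add hterm1 hterm2
end

section
/- Let X and A be finite nonempty sets, d ≥ 1 an integer, φ : X × A → R^d with ‖φ(x,a)‖ ≤ 1 for all (x,a), and Z ⊆ X. For w ∈ R^d define Q(x,a;w) = 1{x∈Z}·φ(x,a)ᵀw and π(a|x;w) = exp(Q(x,a;w)) / Σ_{a'∈A} exp(Q(x,a';w)). Let ε > 0, W > 0, C ≥ 1, and K ≥ 1 an integer, and consider the function class V̂(Z,W,C) of all functions X → R of the form x ↦ Σ_{a∈A} π(a|x;w_1)·Q(x,a;w_2), where w_1, w_2 ∈ R^d satisfy ‖w_1‖ ≤ W·K, ‖w_2‖ ≤ W, and max_{x,a} |Q(x,a;w_2)| ≤ C. Then there exists a finite set F of functions X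 → R of cardinality at most (1 + 7·W·C·K/ε)^{2d} such that every member of V̂(Z,W,C) is within supremum distance ε of some element of F. -/
open Metric MeasureTheory Set
open scoped ENNReal

private lemma ball_cover (d : ℕ) (R α : ℝ) (hR : 0 ≤ R) (hα : 0 < α) :
    ∃ s : Finset (EuclideanSpace ℝ (Fin d)), (s.card : ℝ) ≤ (1 + 2 * R / α) ^ d ∧
      ∀ w : EuclideanSpace ℝ (Fin d), ‖w‖ ≤ R → ∃ p ∈ s, ‖w - p‖ ≤ α := by
  set E := EuclideanSpace ℝ (Fin d)
  set B : ℝ := (1 + 2 * R / α) ^ d with hB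
  set S : Set (Set E) := {T | T ⊆ closedBall (0:E) R ∧ T.Pairwise (fun p q => α < dist p q)}
    with hS
  obtain ⟨M, hM⟩ : ∃ M, Maximal (· ∈ S) M := by
    apply zorn_subset
    intro c hc hchain
    refine ⟨⋃₀ c, ⟨?_, ?_⟩, fun s hs => subset_sUnion_of_mem hs⟩
    · exact sUnion_subset fun t ht => (hc ht).1
    · intro p hp q hq hpq
      obtain ⟨s, hs, hps⟩ := hp
      obtain ⟨t, ht, hqt⟩ := hq
      rcases hchain.total hs ht with h | h
      · exact (hc ht).2 (h hps) hqt hpq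
      · exact (hc hs).2 hps (h hqt) hpq
  have hMball : M ⊆ closedBall (0:E) R := hM.1.1
  have hMsep : M.Pairwise (fun p q => α < dist p q) := hM.1.2
  have key : ∀ t : Finset E, ↑t ⊆ M → (t.card : ℝ) ≤ B := by
    intro t ht
    have hn : Module.finrank ℝ E = d := finrank_euclideanSpace_fin
    have hdisj : (↑t : Set E).PairwiseDisjoint (fun p => ball p (α/2)) := by
      intro p hp q hq hpq
      exact ball_disjoint_ball (by linarith [hMsep (ht hp) (ht hq) hpq])
    have hmeas : (volume : Measure E) (⋃ p ∈ t, ball p (α/2))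
        = ∑ p ∈ t, volume (ball p (α/2)) :=
      measure_biUnion_finset hdisj fun p _ => measurableSet_ball
    have hsub : (⋃ p ∈ t, ball p (α/2)) ⊆ ball (0:E) (R + α/2) := by
      intro x hx
      simp only [mem_iUnion] at hx
      obtain ⟨p, hp, hxp⟩ := hx
      have h1 : dist p 0 ≤ R := mem_closedBall.1 (hMball (ht hp))
      have h2 : dist x p < α/2 := mem_ball.1 hxp
      have := dist_triangle x p 0
      simp only [mem_ball]
      linarith
    have hball : ∀ p : E, volume (ball p (α/2))
        = ENNReal.ofReal ((α/2) ^ d) * volume (ball (0:E) 1) := fun p => by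
      rw [Measure.addHaar_ball_of_pos volume p (by linarith : (0:ℝ) < α/2), hn]
    have hbig : volume (ball (0:E) (R + α/2))
        = ENNReal.ofReal ((R + α/2) ^ d) * volume (ball (0:E) 1) := by
      rw [Measure.addHaar_ball_of_pos volume _ (by linarith : (0:ℝ) < R + α/2), hn]
    have hle : (t.card : ℝ≥0∞) * ENNReal.ofReal ((α/2) ^ d) * volume (ball (0:E) 1)
        ≤ ENNReal.ofReal ((R + α/2) ^ d) * volume (ball (0:E) 1) := by
      calc (t.card : ℝ≥0∞) * ENNReal.ofReal ((α/2) ^ d) * volume (ball (0:E) 1)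
          = ∑ p ∈ t, volume (ball p (α/2)) := by
            rw [Finset.sum_congr rfl fun p _ => hball p, Finset.sum_const, nsmul_eq_mul, mul_assoc]
        _ = volume (⋃ p ∈ t, ball p (α/2)) := hmeas.symm
        _ ≤ volume (ball (0:E) (R + α/2)) := measure_mono hsub
        _ = _ := hbig
    have hv0 : volume (ball (0:E) 1) ≠ 0 := (measure_ball_pos _ _ one_pos).ne'
    have hvtop : volume (ball (0:E) 1) ≠ ⊤ := measure_ball_lt_top.ne
    rw [ENNReal.mul_le_mul_iff_left hv0 hvtop] at hle
    have hle2 : ENNReal.ofReal ((t.card : ℝ) * (α/2) ^ d) ≤ ENNReal.ofReal ((R + α/2) ^ d) := by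
      rwa [ENNReal.ofReal_mul (by positivity), ENNReal.ofReal_natCast]
    have hle3 : (t.card : ℝ) * (α/2) ^ d ≤ (R + α/2) ^ d :=
      (ENNReal.ofReal_le_ofReal_iff (by positivity)).1 hle2
    have hpos : (0:ℝ) < (α/2) ^ d := by positivity
    rw [hB, ← mul_le_mul_iff_of_pos_right hpos, ← mul_pow]
    calc (t.card : ℝ) * (α/2)^d ≤ (R + α/2)^d := hle3
      _ = ((1 + 2*R/α) * (α/2))^d := by
          congr 1
          field_simp
          ring
  have hMfin : M.Finite := by
    by_contra hinf
    obtain ⟨t, htM, htfin, htcard⟩ :=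
      Set.Infinite.exists_subset_ncard_eq (hinf : M.Infinite) (⌊B⌋₊ + 1)
    have h1 := key htfin.toFinset (by simpa using htM)
    rw [Set.ncard_eq_toFinset_card t htfin] at htcard
    rw [htcard] at h1
    push_cast at h1
    linarith [Nat.lt_floor_add_one B]
  refine ⟨hMfin.toFinset, key hMfin.toFinset (by simp), ?_⟩
  intro w hw
  by_contra hcon
  push_neg at hcon
  have hfar : ∀ p ∈ M, α < dist w p := by
    intro p hp
    have := hcon p (hMfin.mem_toFinset.2 hp)
    rw [dist_eq_norm]
    linarith
  have hwM : w ∉ M := fun hwM => by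
    have := hfar w hwM
    simp at this
    linarith
  have hins : insert w M ∈ S := by
    constructor
    · exact insert_subset (by simpa [mem_closedBall_zero_iff] using hw) hMball
    · have : Std.Symm (fun p q : E => α < dist p q) := ⟨?_⟩
      refine Set.pairwise_insert_of_symm |>.2 ⟨hMsep, fun p hp _ => hfar p hp⟩
      intro p q h
      rwa [dist_comm]
  have := hM.2 hins (subset_insert w M)
  exact hwM (this (mem_insert w M))

private lemma exp_sub_one_le {δ : ℝ} (h0 : 0 ≤ δ) (h2 : δ ≤ 2/7) :
    Real.exp δ - 1 ≤ 17/14 * δ := by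
  have hb := Real.exp_bound (x := δ) (by rw [abs_of_nonneg h0]; linarith) (n := 2) (by norm_num)
  have hs : ∑ m ∈ Finset.range 2, δ ^ m / m.factorial = 1 + δ := by
    simp [Finset.sum_range_succ]
  rw [hs, abs_of_nonneg h0] at hb
  have h3 : Real.exp δ - (1 + δ) ≤ δ ^ 2 * (3 / 4) := by
    have h4 := (abs_le.1 hb).2
    norm_num [Nat.factorial] at h4
    linarith
  nlinarith

private lemma softmax_tv {A : Type*} [Fintype A] [Nonempty A] (u v : A → ℝ) (δ : ℝ)
    (h0 : 0 ≤ δ) (h2 : δ ≤ 2/7) (h : ∀ a, |u a - v a| ≤ δ) :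
    ∑ a, |Real.exp (u a) / (∑ a', Real.exp (u a')) - Real.exp (v a) / (∑ a', Real.exp (v a'))|
      ≤ 17/7 * δ := by
  set Su := ∑ a', Real.exp (u a') with hSudef
  set Sv := ∑ a', Real.exp (v a') with hSvdef
  have hSu : 0 < Su := Finset.sum_pos (fun a _ => Real.exp_pos _) Finset.univ_nonempty
  have hSv : 0 < Sv := Finset.sum_pos (fun a _ => Real.exp_pos _) Finset.univ_nonempty
  have hexp1 : (1:ℝ) ≤ Real.exp δ := Real.one_le_exp h0
  have hdiff : ∀ a, |Real.exp (u a) - Real.exp (v a)| ≤ Real.exp (u a) * (Real.exp δ - 1) := by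
    intro a
    have hd1 : v a - u a ≤ δ := by have := abs_le.1 (h a); linarith [this.1]
    have hd2 : u a - v a ≤ δ := (abs_le.1 (h a)).2
    rcases le_total (u a) (v a) with hle | hle
    · rw [abs_sub_comm, abs_of_nonneg (sub_nonneg.2 (Real.exp_le_exp.2 hle))]
      have hid : Real.exp (v a) = Real.exp (u a) * Real.exp (v a - u a) := by
        rw [← Real.exp_add]; ring_nf
      have hb := Real.exp_le_exp.2 hd1
      nlinarith [Real.exp_pos (u a)]
    · rw [abs_of_nonneg (sub_nonneg.2 (Real.exp_le_exp.2 hle))]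
      have hid : Real.exp (u a) = Real.exp (v a) * Real.exp (u a - v a) := by
        rw [← Real.exp_add]; ring_nf
      have hb := Real.exp_le_exp.2 hd2
      have hmon : Real.exp (v a) ≤ Real.exp (u a) := Real.exp_le_exp.2 hle
      nlinarith [Real.exp_pos (v a)]
  have hsum : ∑ a, |Real.exp (u a) - Real.exp (v a)| ≤ (Real.exp δ - 1) * Su := by
    calc ∑ a, |Real.exp (u a) - Real.exp (v a)|
        ≤ ∑ a, Real.exp (u a) * (Real.exp δ - 1) := Finset.sum_le_sum fun a _ => hdiff a
      _ = (Real.exp δ - 1) * Su := by rw [← Finset.sum_mul, mul_comm]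
  have hSdiff : |Sv - Su| ≤ (Real.exp δ - 1) * Su := by
    have : Sv - Su = ∑ a, (Real.exp (v a) - Real.exp (u a)) := by
      rw [Finset.sum_sub_distrib]
    rw [this]
    refine (Finset.abs_sum_le_sum_abs _ _).trans ?_
    calc ∑ a, |Real.exp (v a) - Real.exp (u a)|
        = ∑ a, |Real.exp (u a) - Real.exp (v a)| := by
          refine Finset.sum_congr rfl fun a _ => abs_sub_comm _ _
      _ ≤ _ := hsum
  have hterm : ∀ a, |Real.exp (u a)/Su - Real.exp (v a)/Sv|
      ≤ |Real.exp (u a) - Real.exp (v a)|/Su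
        + Real.exp (v a) * (|Sv - Su|/(Su*Sv)) := by
    intro a
    have hid : Real.exp (u a)/Su - Real.exp (v a)/Sv
        = (Real.exp (u a) - Real.exp (v a))/Su
          + Real.exp (v a) * ((Sv - Su)/(Su*Sv)) := by
      field_simp
      ring
    rw [hid]
    refine (abs_add_le _ _).trans ?_
    rw [abs_div, abs_of_pos hSu, abs_mul, abs_div, abs_of_pos (mul_pos hSu hSv),
      abs_of_pos (Real.exp_pos _)]
  calc ∑ a, |Real.exp (u a)/Su - Real.exp (v a)/Sv|
      ≤ ∑ a, (|Real.exp (u a) - Real.exp (v a)|/Su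
        + Real.exp (v a) * (|Sv - Su|/(Su*Sv))) := Finset.sum_le_sum fun a _ => hterm a
    _ = (∑ a, |Real.exp (u a) - Real.exp (v a)|)/Su + Sv * (|Sv - Su|/(Su*Sv)) := by
        rw [Finset.sum_add_distrib, ← Finset.sum_div, ← Finset.sum_mul]
    _ ≤ (Real.exp δ - 1) + (Real.exp δ - 1) := by
        have e1 : (∑ a, |Real.exp (u a) - Real.exp (v a)|)/Su ≤ Real.exp δ - 1 := by
          rw [div_le_iff₀ hSu]; exact hsum
        have e2 : Sv * (|Sv - Su|/(Su*Sv)) = |Sv - Su|/Su := by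
          field_simp
        have e3 : |Sv - Su|/Su ≤ Real.exp δ - 1 := by
          rw [div_le_iff₀ hSu]; exact hSdiff
        rw [e2]; linarith
    _ ≤ 17/7 * δ := by
        have := exp_sub_one_le h0 h2
        linarith

open scoped BigOperators RealInnerProductSpace

/-- Covering number of the class of softmax-policy values of truncated linear Q-functions:
the class of functions `x ↦ Σ_a π(a|x;w₁) Q(x,a;w₂)` with `‖w₁‖ ≤ W·K`, `‖w₂‖ ≤ W` and
`max_{x,a} |Q(x,a;w₂)| ≤ C` admits an `ε`-cover in supremum distance of cardinality at most
`(1 + 7WCK/ε)^{2d}`. -/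
theorem stmt_9
    (X A : Type*) [Fintype X] [DecidableEq X] [Fintype A] [Nonempty X] [Nonempty A]
    (d : ℕ) (hd : 1 ≤ d)
    (φ : X → A → EuclideanSpace ℝ (Fin d))
    (hφ : ∀ x a, ‖φ x a‖ ≤ 1)
    (Z : Finset X)
    (Q : X → A → EuclideanSpace ℝ (Fin d) → ℝ)
    (hQ : ∀ x a w, Q x a w = (if x ∈ Z then (1 : ℝ) else 0) * ⟪φ x a, w⟫)
    (π : X → A → EuclideanSpace ℝ (Fin d) → ℝ)
    (hπ : ∀ x a w, π x a w = Real.exp (Q x a w) / ∑ a', Real.exp (Q x a' w))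
    (ε W C : ℝ) (hε : 0 < ε) (hW : 0 < W) (hC : 1 ≤ C)
    (K : ℕ) (hK : 1 ≤ K) :
    ∃ F : Finset (X → ℝ),
      (F.card : ℝ) ≤ (1 + 7 * W * C * K / ε) ^ (2 * d) ∧
      ∀ w₁ w₂ : EuclideanSpace ℝ (Fin d), ‖w₁‖ ≤ W * K → ‖w₂‖ ≤ W →
        (∀ x a, |Q x a w₂| ≤ C) →
        ∃ f ∈ F, ∀ x, |(∑ a, π x a w₁ * Q x a w₂) - f x| ≤ ε := by
  classical
  have hC0 : (0:ℝ) < C := lt_of_lt_of_le one_pos hC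
  have hK0 : (0:ℝ) < K := by exact_mod_cast hK
  have hCK : (1:ℝ) ≤ C * K := by
    have : (1:ℝ) ≤ (K:ℝ) := by exact_mod_cast hK
    nlinarith
  have hbase : (1:ℝ) ≤ 1 + 7 * W * C * K / ε := by
    have : (0:ℝ) ≤ 7 * W * C * K / ε := by positivity
    linarith
  -- basic facts about π
  have hSpos : ∀ (x : X) (w : EuclideanSpace ℝ (Fin d)),
      (0:ℝ) < ∑ a', Real.exp (Q x a' w) :=
    fun x w => Finset.sum_pos (fun a _ => Real.exp_pos _) Finset.univ_nonempty
  have hπpos : ∀ x a w, 0 ≤ π x a w := fun x a w => by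
    rw [hπ]; exact div_nonneg (Real.exp_pos _).le (hSpos x w).le
  have hπsum : ∀ x w, ∑ a, π x a w = 1 := fun x w => by
    simp_rw [hπ]
    rw [← Finset.sum_div, div_self (hSpos x w).ne']
  have habs : ∀ (x : X) (w₁ w₂ : EuclideanSpace ℝ (Fin d)), (∀ x a, |Q x a w₂| ≤ C) →
      |∑ a, π x a w₁ * Q x a w₂| ≤ C := by
    intro x w₁ w₂ hQC
    refine (Finset.abs_sum_le_sum_abs _ _).trans ?_
    calc ∑ a, |π x a w₁ * Q x a w₂|
        ≤ ∑ a, π x a w₁ * C := by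
          refine Finset.sum_le_sum fun a _ => ?_
          rw [abs_mul, abs_of_nonneg (hπpos x a w₁)]
          exact mul_le_mul_of_nonneg_left (hQC x a) (hπpos x a w₁)
      _ = C := by rw [← Finset.sum_mul, hπsum, one_mul]
  rcases le_or_gt C ε with hCε | hεC
  · -- trivial case : the zero function is an ε-cover
    refine ⟨{fun _ => 0}, ?_, ?_⟩
    · rw [Finset.card_singleton]
      exact_mod_cast one_le_pow₀ hbase
    · intro w₁ w₂ _ _ hQC
      refine ⟨_, Finset.mem_singleton_self _, fun x => ?_⟩
      have := habs x w₁ w₂ hQC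
      simpa using this.trans hCε
  · -- main case : ε ≤ C
    set α₁ : ℝ := 2 * ε / (7 * C) with hα₁def
    set α₂ : ℝ := 2 * ε / (7 * (C * K)) with hα₂def
    have hα₁pos : 0 < α₁ := by positivity
    have hα₂pos : 0 < α₂ := by positivity
    have hα₁small : α₁ ≤ 2/7 := by
      rw [hα₁def, div_le_div_iff₀ (by positivity) (by norm_num)]
      nlinarith
    obtain ⟨N₁, hN₁card, hN₁⟩ := ball_cover d (W * K) α₁ (by positivity) hα₁pos
    obtain ⟨N₂, hN₂card, hN₂⟩ := ball_cover d W α₂ (by positivity) hα₂pos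
    have hc1 : (N₁.card : ℝ) ≤ (1 + 7 * W * C * K / ε) ^ d := by
      have he : 1 + 2 * (W * (K:ℝ)) / α₁ = 1 + 7 * W * C * K / ε := by
        rw [hα₁def]; field_simp
      rwa [he] at hN₁card
    have hc2 : (N₂.card : ℝ) ≤ (1 + 7 * W * C * K / ε) ^ d := by
      have he : 1 + 2 * W / α₂ = 1 + 7 * W * C * K / ε := by
        rw [hα₂def]; field_simp
      rwa [he] at hN₂card
    refine ⟨(N₁ ×ˢ N₂).image (fun p => fun x => ∑ a, π x a p.1 * Q x a p.2), ?_, ?_⟩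
    · calc ((((N₁ ×ˢ N₂).image (fun p => fun x => ∑ a, π x a p.1 * Q x a p.2)).card : ℕ) : ℝ)
          ≤ ((N₁.card * N₂.card : ℕ) : ℝ) := by
            exact_mod_cast (Finset.card_image_le).trans_eq (Finset.card_product _ _)
        _ = (N₁.card : ℝ) * (N₂.card : ℝ) := by push_cast; ring
        _ ≤ (1 + 7 * W * C * K / ε) ^ d * (1 + 7 * W * C * K / ε) ^ d :=
            mul_le_mul hc1 hc2 (Nat.cast_nonneg _) (by positivity)
        _ = (1 + 7 * W * C * K / ε) ^ (2 * d) := by rw [← pow_add, two_mul]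
    · intro w₁ w₂ hw1 hw2 hQC
      obtain ⟨p₁, hp₁, hnear₁⟩ := hN₁ w₁ hw1
      obtain ⟨p₂, hp₂, hnear₂⟩ := hN₂ w₂ hw2
      refine ⟨_, Finset.mem_image_of_mem _ (show (p₁, p₂) ∈ N₁ ×ˢ N₂ from Finset.mem_product.2 ⟨hp₁, hp₂⟩), fun x => ?_⟩
      -- Lipschitz property of Q in w
      have hQlip : ∀ (a : A) (w w' : EuclideanSpace ℝ (Fin d)),
          |Q x a w - Q x a w'| ≤ ‖w - w'‖ := by
        intro a w w'
        rw [hQ, hQ]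
        split_ifs with hx
        · rw [one_mul, one_mul, ← inner_sub_right]
          refine (abs_real_inner_le_norm _ _).trans ?_
          calc ‖φ x a‖ * ‖w - w'‖ ≤ 1 * ‖w - w'‖ :=
                mul_le_mul_of_nonneg_right (hφ x a) (norm_nonneg _)
            _ = ‖w - w'‖ := one_mul _
        · simpa using norm_nonneg (w - w')
      -- total variation bound on the policies
      have hδ : ∀ a, |Q x a w₁ - Q x a p₁| ≤ α₁ := fun a => (hQlip a w₁ p₁).trans hnear₁
      have htv : ∑ a, |π x a w₁ - π x a p₁| ≤ 17/7 * α₁ := by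
        have := softmax_tv (fun a => Q x a w₁) (fun a => Q x a p₁) α₁
          hα₁pos.le hα₁small hδ
        simp_rw [hπ]
        exact this
      have hsplit : (∑ a, π x a w₁ * Q x a w₂) - (∑ a, π x a p₁ * Q x a p₂)
          = (∑ a, (π x a w₁ - π x a p₁) * Q x a w₂)
            + ∑ a, π x a p₁ * (Q x a w₂ - Q x a p₂) := by
        rw [← Finset.sum_sub_distrib, ← Finset.sum_add_distrib]
        exact Finset.sum_congr rfl fun a _ => by ring
      have hT1 : |∑ a, (π x a w₁ - π x a p₁) * Q x a w₂| ≤ C * (17/7 * α₁) := by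
        refine (Finset.abs_sum_le_sum_abs _ _).trans ?_
        calc ∑ a, |(π x a w₁ - π x a p₁) * Q x a w₂|
            ≤ ∑ a, |π x a w₁ - π x a p₁| * C := by
              refine Finset.sum_le_sum fun a _ => ?_
              rw [abs_mul]
              exact mul_le_mul_of_nonneg_left (hQC x a) (abs_nonneg _)
          _ = C * ∑ a, |π x a w₁ - π x a p₁| := by rw [← Finset.sum_mul, mul_comm]
          _ ≤ C * (17/7 * α₁) := mul_le_mul_of_nonneg_left htv hC0.le
      have hT2 : |∑ a, π x a p₁ * (Q x a w₂ - Q x a p₂)| ≤ α₂ := by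
        refine (Finset.abs_sum_le_sum_abs _ _).trans ?_
        calc ∑ a, |π x a p₁ * (Q x a w₂ - Q x a p₂)|
            ≤ ∑ a, π x a p₁ * α₂ := by
              refine Finset.sum_le_sum fun a _ => ?_
              rw [abs_mul, abs_of_nonneg (hπpos x a p₁)]
              exact mul_le_mul_of_nonneg_left ((hQlip a w₂ p₂).trans hnear₂) (hπpos x a p₁)
          _ = α₂ := by rw [← Finset.sum_mul, hπsum, one_mul]
      have hnum1 : C * (17/7 * α₁) = 34 * ε / 49 := by
        rw [hα₁def]; field_simp; ring
      have hnum2 : α₂ ≤ 2 * ε / 7 := by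
        rw [hα₂def, div_le_div_iff₀ (by positivity) (by norm_num)]
        nlinarith
      calc |(∑ a, π x a w₁ * Q x a w₂) - (fun x => ∑ a, π x a p₁ * Q x a p₂) x|
          = |(∑ a, (π x a w₁ - π x a p₁) * Q x a w₂)
            + ∑ a, π x a p₁ * (Q x a w₂ - Q x a p₂)| := by rw [← hsplit]
        _ ≤ |∑ a, (π x a w₁ - π x a p₁) * Q x a w₂|
            + |∑ a, π x a p₁ * (Q x a w₂ - Q x a p₂)| := abs_add_le _ _
        _ ≤ ε := by
            rw [hnum1] at hT1
            linarith
end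

section
/- Let d ≥ 1, H ≥ 1, K ≥ 1 be integers and δ ∈ (0,1). Let (F_τ)_{τ≥0} be a filtration on a probability space. Let (φ^τ)_{τ≥1} be an R^{dH}-valued process with each φ^τ F_{τ−1}-measurable and ‖φ^τ‖² ≤ H, and let (η_τ)_{τ≥1} be a real-valued process with each η_τ F_τ-measurable, |η_τ| ≤ H almost surely, and E[η_τ | F_{τ−1}] = 0 almost surely. Let θ ∈ R^{dH} be a fixed vector with ‖θ‖ ≤ √(dH), set v^τ = (φ^τ)ᵀθ + η_τ, and for k ≥ 1 define Λ^k = H·I_{dH} + Σ_{τ=1}^{k−1} φ^τ (φ^τ)ᵀ and the least-squares estimate θ̂^k = (Λ^k)^{−1} Σ_{τ=1}^{k−1} φ^τ v^τ. Then with probability at least 1 − δ, simultaneously for all k ∈ {1, …, K}: ‖θ − θ̂^k‖_{Λ^k} ≤ 2H·√( 2·d·H·log(2K/δ) ). -/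
open MeasureTheory Matrix
open scoped BigOperators ENNReal

namespace Stmt11Aux
open Real

variable {ι : Type*} [Fintype ι]

lemma sum_mulVec' {s : Finset ℕ} (M : ℕ → Matrix ι ι ℝ) (z : ι → ℝ) :
    (∑ τ ∈ s, M τ) *ᵥ z = ∑ τ ∈ s, (M τ *ᵥ z) := by
  ext i
  simp only [mulVec, dotProduct, Finset.sum_apply, Matrix.sum_apply, Finset.sum_mul]
  exact Finset.sum_comm

lemma sum_dotProduct' {s : Finset ℕ} (v : ℕ → ι → ℝ) (z : ι → ℝ) :
    (∑ τ ∈ s, v τ) ⬝ᵥ z = ∑ τ ∈ s, (v τ ⬝ᵥ z) := by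
  simp only [dotProduct, Finset.sum_apply, Finset.sum_mul]
  exact Finset.sum_comm

lemma vecMulVec_mulVec' (u v w : ι → ℝ) : vecMulVec u v *ᵥ w = (v ⬝ᵥ w) • u := by
  ext i
  simp only [mulVec, dotProduct, vecMulVec_apply, Pi.smul_apply, smul_eq_mul,
    Finset.sum_mul, Finset.mul_sum]
  refine Finset.sum_congr rfl fun j _ => by ring

lemma dot_mulVec_symm {P : Matrix ι ι ℝ} (hP : Pᵀ = P) (x y : ι → ℝ) :
    x ⬝ᵥ (P *ᵥ y) = y ⬝ᵥ (P *ᵥ x) := by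
  simp only [dotProduct, mulVec, Finset.mul_sum]
  rw [Finset.sum_comm]
  refine Finset.sum_congr rfl fun i _ => Finset.sum_congr rfl fun j _ => ?_
  have h : P j i = P i j := by
    have := congrFun (congrFun hP i) j
    simpa [Matrix.transpose_apply] using this
  rw [h]; ring

lemma quad_cs {P : Matrix ι ι ℝ} (hP : Pᵀ = P) (hpsd : ∀ z, 0 ≤ z ⬝ᵥ (P *ᵥ z))
    (x y : ι → ℝ) : (x ⬝ᵥ (P *ᵥ y)) ^ 2 ≤ (x ⬝ᵥ (P *ᵥ x)) * (y ⬝ᵥ (P *ᵥ y)) := by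
  have key : ∀ t : ℝ, 0 ≤ (y ⬝ᵥ (P *ᵥ y)) * (t * t) + (2 * (x ⬝ᵥ (P *ᵥ y))) * t
      + (x ⬝ᵥ (P *ᵥ x)) := by
    intro t
    have h := hpsd (x + t • y)
    have hexp : (x + t • y) ⬝ᵥ (P *ᵥ (x + t • y)) =
        (y ⬝ᵥ (P *ᵥ y)) * (t * t) + (2 * (x ⬝ᵥ (P *ᵥ y))) * t + (x ⬝ᵥ (P *ᵥ x)) := by
      simp only [mulVec_add, Matrix.mulVec_smul, dotProduct_add, add_dotProduct,
        dotProduct_smul, smul_dotProduct, smul_eq_mul, dot_mulVec_symm hP y x]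
      ring
    linarith [hexp ▸ h]
  have hd := discrim_le_zero key
  rw [discrim] at hd
  nlinarith [hd]

lemma quad_triangle {P : Matrix ι ι ℝ} (hP : Pᵀ = P) (hpsd : ∀ z, 0 ≤ z ⬝ᵥ (P *ᵥ z))
    (x y : ι → ℝ) :
    Real.sqrt ((x - y) ⬝ᵥ (P *ᵥ (x - y))) ≤
      Real.sqrt (x ⬝ᵥ (P *ᵥ x)) + Real.sqrt (y ⬝ᵥ (P *ᵥ y)) := by
  set qx := x ⬝ᵥ (P *ᵥ x) with hqx
  set qy := y ⬝ᵥ (P *ᵥ y) with hqy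
  have hB2 : (x ⬝ᵥ (P *ᵥ y)) ^ 2 ≤ qx * qy := quad_cs hP hpsd x y
  have hBle : -(x ⬝ᵥ (P *ᵥ y)) ≤ Real.sqrt qx * Real.sqrt qy := by
    have h1 : |x ⬝ᵥ (P *ᵥ y)| ≤ Real.sqrt (qx * qy) := Real.abs_le_sqrt hB2
    rw [Real.sqrt_mul (hpsd x)] at h1
    have := neg_abs_le (x ⬝ᵥ (P *ᵥ y))
    linarith [h1, abs_nonneg (x ⬝ᵥ (P *ᵥ y))]
  have hexp : (x - y) ⬝ᵥ (P *ᵥ (x - y)) = qx - 2 * (x ⬝ᵥ (P *ᵥ y)) + qy := by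
    rw [mulVec_sub, dotProduct_sub, sub_dotProduct, sub_dotProduct, dot_mulVec_symm hP y x]
    ring
  rw [hexp]
  have h2 : qx - 2 * (x ⬝ᵥ (P *ᵥ y)) + qy ≤ (Real.sqrt qx + Real.sqrt qy) ^ 2 := by
    have := Real.sq_sqrt (hpsd x)
    have := Real.sq_sqrt (hpsd y)
    nlinarith [hBle]
  calc Real.sqrt (qx - 2 * (x ⬝ᵥ (P *ᵥ y)) + qy) ≤
      Real.sqrt ((Real.sqrt qx + Real.sqrt qy) ^ 2) := Real.sqrt_le_sqrt h2
    _ = Real.sqrt qx + Real.sqrt qy := by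
        rw [Real.sqrt_sq (by positivity)]

lemma exp_mul_le_convex {t y c : ℝ} (hc : 0 < c) (hy : |y| ≤ c) :
    Real.exp (t * y) ≤ Real.cosh (t * c) + (y / c) * Real.sinh (t * c) := by
  obtain ⟨hy1, hy2⟩ := abs_le.mp hy
  have ha : (0:ℝ) ≤ (c - y) / (2 * c) := div_nonneg (by linarith) (by linarith)
  have hb : (0:ℝ) ≤ (y + c) / (2 * c) := by
    apply div_nonneg <;> linarith
  have hab : (c - y) / (2 * c) + (y + c) / (2 * c) = 1 := by field_simp; ring
  have h := convexOn_exp.2 (Set.mem_univ (-(t * c))) (Set.mem_univ (t * c)) ha hb hab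
  simp only [smul_eq_mul] at h
  have harg : (c - y) / (2 * c) * -(t * c) + (y + c) / (2 * c) * (t * c) = t * y := by
    field_simp; ring
  rw [harg] at h
  refine h.trans (le_of_eq ?_)
  rw [Real.cosh_eq, Real.sinh_eq]
  field_simp
  ring

lemma abs_sinh_le_exp_abs (x : ℝ) : |Real.sinh x| ≤ Real.exp |x| := by
  rw [Real.abs_sinh]
  calc Real.sinh |x| ≤ Real.cosh |x| := (Real.sinh_lt_cosh _).le
    _ ≤ Real.exp |x| := by
        rw [Real.cosh_eq]
        have h1 : Real.exp (-|x|) ≤ Real.exp |x| := Real.exp_le_exp.mpr (neg_le_self (abs_nonneg x))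
        linarith

lemma cosh_le_exp_abs' (x : ℝ) : Real.cosh x ≤ Real.exp |x| := by
  rw [Real.cosh_eq]
  have h1 : Real.exp (-x) ≤ Real.exp |x| := Real.exp_le_exp.mpr (neg_le_abs x)
  have h2 : Real.exp x ≤ Real.exp |x| := Real.exp_le_exp.mpr (le_abs_self x)
  linarith

lemma integral_mul_eq_zero {Ω : Type*} {m0 : MeasurableSpace Ω} {μ : Measure Ω}
    [IsProbabilityMeasure μ] {m : MeasurableSpace Ω} (hm : m ≤ m0) {U e : Ω → ℝ}
    (hU : StronglyMeasurable[m] U) (hUe : Integrable (fun ω => U ω * e ω) μ)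
    (he : Integrable e μ) (hmean : μ[e|m] =ᵐ[μ] fun _ => 0) :
    ∫ ω, U ω * e ω ∂μ = 0 := by
  have hmul : μ[(fun ω => U ω * e ω)|m] =ᵐ[μ] fun ω => U ω * (μ[e|m]) ω := by
    have := condExp_mul_of_stronglyMeasurable_left (μ := μ) (m := m) hU hUe he
    filter_upwards [this] with ω hω
    exact hω
  have hzero : μ[(fun ω => U ω * e ω)|m] =ᵐ[μ] fun _ => (0:ℝ) := by
    filter_upwards [hmul, hmean] with ω h1 h2
    rw [h1, h2]; ring
  calc ∫ ω, U ω * e ω ∂μ = ∫ ω, (μ[(fun ω => U ω * e ω)|m]) ω ∂μ :=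
        (integral_condExp hm).symm
    _ = ∫ _ω, (0:ℝ) ∂μ := integral_congr_ae hzero
    _ = 0 := integral_zero _ _


variable {Ω : Type*} {m0 : MeasurableSpace Ω}

/-- The exponential supermartingale evaluated at parameter `l`. -/
noncomputable def martFn {n : ℕ} (φ : ℕ → Ω → Fin n → ℝ) (η : ℕ → Ω → ℝ) (H : ℕ)
    (l : Fin n → ℝ) (k : ℕ) (ω : Ω) : ℝ :=
  Real.exp (∑ τ ∈ Finset.Icc 1 (k - 1),
    (η τ ω * (φ τ ω ⬝ᵥ l) - ((H:ℝ) ^ 2 / 2) * (φ τ ω ⬝ᵥ l) ^ 2))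

section mart

variable (μ : Measure Ω) [IsProbabilityMeasure μ] (𝓕 : Filtration ℕ m0)
  {n : ℕ} (H : ℕ) (φ : ℕ → Ω → Fin n → ℝ) (η : ℕ → Ω → ℝ)

lemma dot_meas_l {m : MeasurableSpace Ω} {f : Ω → Fin n → ℝ} (hf : Measurable[m] f)
    (l : Fin n → ℝ) : Measurable[m] (fun ω => f ω ⬝ᵥ l) := by
  apply Finset.measurable_sum
  intro i _
  exact ((measurable_pi_apply i).comp hf).mul_const _

lemma martFn_measurable
    (hφ_meas : ∀ τ, 1 ≤ τ → Measurable[𝓕 (τ - 1)] (φ τ))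
    (hη_meas : ∀ τ, 1 ≤ τ → Measurable[𝓕 τ] (η τ))
    (l : Fin n → ℝ) (k m : ℕ) (hk : k - 1 ≤ m) :
    Measurable[𝓕 m] (martFn φ η H l k) := by
  apply Measurable.exp
  apply Finset.measurable_sum
  intro τ hτ
  rw [Finset.mem_Icc] at hτ
  have hφm : Measurable[𝓕 m] (φ τ) :=
    (hφ_meas τ hτ.1).mono (𝓕.mono (by omega)) le_rfl
  have hηm : Measurable[𝓕 m] (η τ) :=
    (hη_meas τ hτ.1).mono (𝓕.mono (by omega)) le_rfl
  exact (hηm.mul (dot_meas_l hφm l)).sub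
    (((dot_meas_l hφm l).pow_const 2).const_mul _)

lemma martFn_nonneg (l : Fin n → ℝ) (k : ℕ) (ω : Ω) : 0 ≤ martFn φ η H l k ω :=
  (Real.exp_pos _).le

/-- pointwise bound for `|φ τ ω ⬝ᵥ l|`. -/
lemma dot_abs_le (hφ_bdd : ∀ τ ω, (∑ i, φ τ ω i ^ 2) ≤ H) (l : Fin n → ℝ) (τ : ℕ) (ω : Ω) :
    |φ τ ω ⬝ᵥ l| ≤ Real.sqrt ((H:ℝ) * ∑ i, l i ^ 2) := by
  apply Real.abs_le_sqrt
  calc (φ τ ω ⬝ᵥ l) ^ 2 ≤ (∑ i, φ τ ω i ^ 2) * (∑ i, l i ^ 2) :=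
        Finset.sum_mul_sq_le_sq_mul_sq _ _ _
    _ ≤ (H:ℝ) * ∑ i, l i ^ 2 := by
        apply mul_le_mul_of_nonneg_right (hφ_bdd τ ω)
        positivity

lemma martFn_ae_bound (hφ_bdd : ∀ τ ω, (∑ i, φ τ ω i ^ 2) ≤ H)
    (hη_bdd : ∀ τ, 1 ≤ τ → ∀ᵐ ω ∂μ, |η τ ω| ≤ H) (l : Fin n → ℝ) :
    ∀ᵐ ω ∂μ, ∀ k : ℕ,
      martFn φ η H l k ω ≤ Real.exp (k * ((H:ℝ) * Real.sqrt ((H:ℝ) * ∑ i, l i ^ 2))) := by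
  have hae : ∀ᵐ ω ∂μ, ∀ τ : ℕ, 1 ≤ τ → |η τ ω| ≤ H := by
    rw [ae_all_iff]
    intro τ
    by_cases hτ : 1 ≤ τ
    · filter_upwards [hη_bdd τ hτ] with ω h _; exact h
    · filter_upwards with ω h; omega
  filter_upwards [hae] with ω hω k
  rw [martFn, Real.exp_le_exp]
  set cl := Real.sqrt ((H:ℝ) * ∑ i, l i ^ 2) with hcl
  have hclnn : 0 ≤ cl := Real.sqrt_nonneg _
  calc ∑ τ ∈ Finset.Icc 1 (k - 1),
        (η τ ω * (φ τ ω ⬝ᵥ l) - ((H:ℝ) ^ 2 / 2) * (φ τ ω ⬝ᵥ l) ^ 2)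
      ≤ ∑ τ ∈ Finset.Icc 1 (k - 1), (H:ℝ) * cl := by
        apply Finset.sum_le_sum
        intro τ hτ
        rw [Finset.mem_Icc] at hτ
        have h1 : |η τ ω| ≤ (H:ℝ) := hω τ hτ.1
        have h2 : |φ τ ω ⬝ᵥ l| ≤ cl := dot_abs_le H φ hφ_bdd l τ ω
        have h3 : η τ ω * (φ τ ω ⬝ᵥ l) ≤ (H:ℝ) * cl := by
          calc η τ ω * (φ τ ω ⬝ᵥ l) ≤ |η τ ω * (φ τ ω ⬝ᵥ l)| := le_abs_self _
            _ = |η τ ω| * |φ τ ω ⬝ᵥ l| := abs_mul _ _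
            _ ≤ (H:ℝ) * cl := by
                apply mul_le_mul h1 h2 (abs_nonneg _) (by positivity)
        nlinarith [sq_nonneg (φ τ ω ⬝ᵥ l), sq_nonneg (H:ℝ)]
    _ = (Finset.Icc 1 (k-1)).card * ((H:ℝ) * cl) := by rw [Finset.sum_const, nsmul_eq_mul]
    _ ≤ k * ((H:ℝ) * cl) := by
        apply mul_le_mul_of_nonneg_right _ (by positivity)
        rw [Nat.card_Icc]
        norm_cast
        omega

lemma martFn_integrable (hH : 1 ≤ H) (hφ_bdd : ∀ τ ω, (∑ i, φ τ ω i ^ 2) ≤ H)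
    (hφ_meas : ∀ τ, 1 ≤ τ → Measurable[𝓕 (τ - 1)] (φ τ))
    (hη_meas : ∀ τ, 1 ≤ τ → Measurable[𝓕 τ] (η τ))
    (hη_bdd : ∀ τ, 1 ≤ τ → ∀ᵐ ω ∂μ, |η τ ω| ≤ H) (l : Fin n → ℝ) (k : ℕ) :
    Integrable (martFn φ η H l k) μ := by
  apply Integrable.mono' (integrable_const
    (Real.exp (k * ((H:ℝ) * Real.sqrt ((H:ℝ) * ∑ i, l i ^ 2)))))
  · exact ((martFn_measurable 𝓕 H φ η hφ_meas hη_meas l k (k-1) le_rfl).mono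
      (𝓕.le _) le_rfl).aestronglyMeasurable
  · filter_upwards [martFn_ae_bound μ H φ η hφ_bdd hη_bdd l] with ω hω
    rw [Real.norm_eq_abs, abs_of_nonneg (martFn_nonneg H φ η l k ω)]
    exact hω k

/-- Claim A : the supermartingale property gives `∫ martFn ≤ 1`. -/
lemma integral_martFn_le (hH : 1 ≤ H)
    (hφ_meas : ∀ τ, 1 ≤ τ → Measurable[𝓕 (τ - 1)] (φ τ))
    (hφ_bdd : ∀ τ ω, (∑ i, φ τ ω i ^ 2) ≤ H)
    (hη_meas : ∀ τ, 1 ≤ τ → Measurable[𝓕 τ] (η τ))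
    (hη_bdd : ∀ τ, 1 ≤ τ → ∀ᵐ ω ∂μ, |η τ ω| ≤ H)
    (hη_mean : ∀ τ, 1 ≤ τ → μ[η τ | 𝓕 (τ - 1)] =ᵐ[μ] fun _ => 0)
    (l : Fin n → ℝ) (k : ℕ) :
    ∫ ω, martFn φ η H l k ω ∂μ ≤ 1 := by
  induction k with
  | zero =>
      simp [martFn, Finset.Icc_eq_empty_of_lt]
  | succ k ih =>
      rcases Nat.eq_zero_or_pos k with hk0 | hk1
      · subst hk0
        simp [martFn, show Finset.Icc 1 0 = ∅ from rfl]
      obtain ⟨j, rfl⟩ : ∃ j, k = j + 1 := ⟨k - 1, by omega⟩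
      -- notation
      set cl := Real.sqrt ((H:ℝ) * ∑ i, l i ^ 2) with hcl
      have hclnn : 0 ≤ cl := Real.sqrt_nonneg _
      have hHpos : (0:ℝ) < H := by exact_mod_cast hH
      set t : Ω → ℝ := fun ω => φ (j+1) ω ⬝ᵥ l with ht
      set e : Ω → ℝ := fun ω => η (j+1) ω with he
      set W : Ω → ℝ := fun ω =>
        martFn φ η H l (j+1) ω * Real.exp (-((H:ℝ)^2/2) * t ω ^ 2) with hW
      have hWnn : ∀ ω, 0 ≤ W ω := fun ω =>
        mul_nonneg (martFn_nonneg H φ η l (j+1) ω) (Real.exp_pos _).le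
      -- decomposition of martFn (j+2)
      have hdec : ∀ ω, martFn φ η H l (j+2) ω = W ω * Real.exp (t ω * e ω) := by
        intro ω
        simp only [hW, martFn]
        rw [← Real.exp_add, ← Real.exp_add]
        congr 1
        have : ∑ τ ∈ Finset.Icc 1 (j+2-1),
            (η τ ω * (φ τ ω ⬝ᵥ l) - ((H:ℝ)^2/2) * (φ τ ω ⬝ᵥ l)^2) =
            ∑ τ ∈ Finset.Icc 1 (j+1-1),
            (η τ ω * (φ τ ω ⬝ᵥ l) - ((H:ℝ)^2/2) * (φ τ ω ⬝ᵥ l)^2)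
            + (η (j+1) ω * (φ (j+1) ω ⬝ᵥ l) - ((H:ℝ)^2/2) * (φ (j+1) ω ⬝ᵥ l)^2) := by
          have h2 : j + 2 - 1 = (j + 1 - 1) + 1 := by omega
          rw [h2, Finset.sum_Icc_succ_top (by omega)]
          norm_num
        rw [this, ht, he]
        ring
      -- measurability w.r.t. 𝓕 j
      have htmeas : Measurable[𝓕 j] t := by
        have := hφ_meas (j+1) (by omega)
        change Measurable[𝓕 j] (φ (j+1)) at this
        exact dot_meas_l this l
      have hMmeas : Measurable[𝓕 j] (martFn φ η H l (j+1)) :=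
        martFn_measurable 𝓕 H φ η hφ_meas hη_meas l (j+1) j (by omega)
      have hWmeas : Measurable[𝓕 j] W := by
        apply hMmeas.mul
        exact ((htmeas.pow_const 2).const_mul (-((H:ℝ)^2/2))).exp
      have hemeas : Measurable[𝓕 (j+1)] e := hη_meas (j+1) (by omega)
      set g1 : Ω → ℝ := fun ω => W ω * Real.cosh (t ω * H) with hg1
      set g2 : Ω → ℝ := fun ω => W ω * Real.sinh (t ω * H) / H with hg2
      have hg2meas : Measurable[𝓕 j] g2 :=
        (hWmeas.mul (Real.continuous_sinh.measurable.comp (htmeas.mul_const _))).div_const _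
      have hg1meas : Measurable[𝓕 j] g1 :=
        hWmeas.mul (Real.continuous_cosh.measurable.comp (htmeas.mul_const _))
      -- pointwise a.e. inequality from convexity of exp
      have hae : ∀ᵐ ω ∂μ, martFn φ η H l (j+2) ω ≤ g1 ω + g2 ω * e ω := by
        filter_upwards [hη_bdd (j+1) (by omega)] with ω hη1
        rw [hdec ω]
        have hconv := exp_mul_le_convex (t := t ω) hHpos hη1
        have hmul := mul_le_mul_of_nonneg_left hconv (hWnn ω)
        calc W ω * Real.exp (t ω * e ω)
            ≤ W ω * (Real.cosh (t ω * H) + (e ω / H) * Real.sinh (t ω * H)) := hmul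
          _ = g1 ω + g2 ω * e ω := by rw [hg1, hg2]; field_simp
      -- g1 ≤ martFn (j+1) pointwise
      have hg1le : ∀ ω, g1 ω ≤ martFn φ η H l (j+1) ω := by
        intro ω
        have hch : Real.cosh (t ω * H) ≤ Real.exp ((H:ℝ)^2/2 * t ω^2) := by
          calc Real.cosh (t ω * H) ≤ Real.exp ((t ω * H)^2/2) := Real.cosh_le_exp_half_sq _
            _ = Real.exp ((H:ℝ)^2/2 * t ω ^2) := by congr 1; ring
        have hcancel : (-((H:ℝ)^2/2) * t ω^2) + ((H:ℝ)^2/2 * t ω^2) = 0 := by ring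
        calc g1 ω ≤ W ω * Real.exp ((H:ℝ)^2/2 * t ω^2) :=
              mul_le_mul_of_nonneg_left hch (hWnn ω)
          _ = martFn φ η H l (j+1) ω := by
              rw [hW, mul_assoc, ← Real.exp_add, hcancel, Real.exp_zero, mul_one]
      have hg1nn : ∀ ω, 0 ≤ g1 ω := fun ω =>
        mul_nonneg (hWnn ω) (Real.cosh_pos _).le
      -- integrability
      have hMint1 : Integrable (martFn φ η H l (j+1)) μ :=
        martFn_integrable μ 𝓕 H φ η hH hφ_bdd hφ_meas hη_meas hη_bdd l (j+1)
      have hMint2 : Integrable (martFn φ η H l (j+2)) μ :=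
        martFn_integrable μ 𝓕 H φ η hH hφ_bdd hφ_meas hη_meas hη_bdd l (j+2)
      have hg1int : Integrable g1 μ := by
        apply Integrable.mono' hMint1
          ((hg1meas.mono (𝓕.le j) le_rfl).aestronglyMeasurable)
        filter_upwards with ω
        rw [Real.norm_eq_abs, abs_of_nonneg (hg1nn ω)]
        exact hg1le ω
      have htabs : ∀ ω, |t ω| ≤ cl := fun ω => dot_abs_le H φ hφ_bdd l (j+1) ω
      have hg2e_bound : ∀ᵐ ω ∂μ, ‖g2 ω * e ω‖ ≤
          Real.exp ((j+1) * ((H:ℝ) * cl)) * Real.exp (cl * H) := by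
        filter_upwards [martFn_ae_bound μ H φ η hφ_bdd hη_bdd l,
          hη_bdd (j+1) (by omega)] with ω hb hη1
        have hb1 : martFn φ η H l (j+1) ω ≤ Real.exp ((j+1) * ((H:ℝ) * cl)) := by
          have := hb (j+1); push_cast at this ⊢; exact this
        have hWle : W ω ≤ Real.exp ((j+1) * ((H:ℝ) * cl)) := by
          have h1 : Real.exp (-((H:ℝ)^2/2) * t ω ^2) ≤ 1 := by
            rw [Real.exp_le_one_iff]; nlinarith [sq_nonneg (t ω)]
          calc W ω ≤ martFn φ η H l (j+1) ω * 1 := by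
                apply mul_le_mul_of_nonneg_left h1 (martFn_nonneg H φ η l (j+1) ω)
            _ ≤ Real.exp ((j+1) * ((H:ℝ) * cl)) := by rw [mul_one]; exact hb1
        have hsinh : |Real.sinh (t ω * H)| ≤ Real.exp (cl * H) := by
          calc |Real.sinh (t ω * H)| ≤ Real.exp |t ω * H| := abs_sinh_le_exp_abs _
            _ ≤ Real.exp (cl * H) := by
                rw [Real.exp_le_exp, abs_mul, Nat.abs_cast]
                exact mul_le_mul_of_nonneg_right (htabs ω) (by positivity)
        have key : W ω * |Real.sinh (t ω * H)| * |e ω| ≤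
            Real.exp ((j+1) * ((H:ℝ) * cl)) * Real.exp (cl * H) * H := by
          apply mul_le_mul _ hη1 (abs_nonneg _) (by positivity)
          exact mul_le_mul hWle hsinh (abs_nonneg _) (by positivity)
        have habs : |g2 ω * e ω| = W ω * |Real.sinh (t ω * H)| * |e ω| / H := by
          rw [hg2, abs_mul, abs_div, abs_mul, Nat.abs_cast, abs_of_nonneg (hWnn ω)]
          ring
        rw [Real.norm_eq_abs, habs, div_le_iff₀ hHpos]
        calc W ω * |Real.sinh (t ω * H)| * |e ω| ≤
            Real.exp ((j+1) * ((H:ℝ) * cl)) * Real.exp (cl * H) * H := key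
          _ = Real.exp ((j+1) * ((H:ℝ) * cl)) * Real.exp (cl * H) * H := rfl
      have hg2emeas : Measurable (fun ω => g2 ω * e ω) :=
        (hg2meas.mono (𝓕.le j) le_rfl).mul
          ((hemeas.mono (𝓕.le (j+1)) le_rfl))
      have hg2eint : Integrable (fun ω => g2 ω * e ω) μ :=
        Integrable.mono' (integrable_const _) hg2emeas.aestronglyMeasurable hg2e_bound
      have heint : Integrable e μ := by
        apply Integrable.mono' (integrable_const (H:ℝ))
          ((hemeas.mono (𝓕.le (j+1)) le_rfl)).aestronglyMeasurable
        filter_upwards [hη_bdd (j+1) (by omega)] with ω hω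
        simpa using hω
      -- the conditional expectation step
      have hmean' : μ[e|𝓕 j] =ᵐ[μ] fun _ => 0 := by
        have := hη_mean (j+1) (by omega)
        simpa using this
      have hzero : ∫ ω, g2 ω * e ω ∂μ = 0 :=
        integral_mul_eq_zero (𝓕.le j) (hg2meas.stronglyMeasurable) hg2eint heint hmean'
      -- put everything together
      calc ∫ ω, martFn φ η H l (j+2) ω ∂μ
          ≤ ∫ ω, (g1 ω + g2 ω * e ω) ∂μ :=
            integral_mono_ae hMint2 (hg1int.add hg2eint) hae
        _ = ∫ ω, g1 ω ∂μ + ∫ ω, g2 ω * e ω ∂μ := integral_add hg1int hg2eint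
        _ = ∫ ω, g1 ω ∂μ := by rw [hzero, add_zero]
        _ ≤ ∫ ω, martFn φ η H l (j+1) ω ∂μ := integral_mono hg1int hMint1 hg1le
        _ ≤ 1 := ih

lemma lintegral_martFn_le (hH : 1 ≤ H)
    (hφ_meas : ∀ τ, 1 ≤ τ → Measurable[𝓕 (τ - 1)] (φ τ))
    (hφ_bdd : ∀ τ ω, (∑ i, φ τ ω i ^ 2) ≤ H)
    (hη_meas : ∀ τ, 1 ≤ τ → Measurable[𝓕 τ] (η τ))
    (hη_bdd : ∀ τ, 1 ≤ τ → ∀ᵐ ω ∂μ, |η τ ω| ≤ H)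
    (hη_mean : ∀ τ, 1 ≤ τ → μ[η τ | 𝓕 (τ - 1)] =ᵐ[μ] fun _ => 0)
    (l : Fin n → ℝ) (k : ℕ) :
    ∫⁻ ω, ENNReal.ofReal (martFn φ η H l k ω) ∂μ ≤ 1 := by
  rw [← ofReal_integral_eq_lintegral_ofReal
    (martFn_integrable μ 𝓕 H φ η hH hφ_bdd hφ_meas hη_meas hη_bdd l k)
    (Filter.Eventually.of_forall (fun ω => martFn_nonneg H φ η l k ω))]
  calc ENNReal.ofReal (∫ ω, martFn φ η H l k ω ∂μ) ≤ ENNReal.ofReal 1 :=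
        ENNReal.ofReal_le_ofReal
          (integral_martFn_le μ 𝓕 H φ η hH hφ_meas hφ_bdd hη_meas hη_bdd hη_mean l k)
    _ = 1 := ENNReal.ofReal_one

end mart

/-- Gaussian mixture weight. -/
noncomputable def gw (n H : ℕ) (l : Fin n → ℝ) : ℝ :=
  Real.sqrt ((H:ℝ)^3 / (2*Real.pi)) ^ n * Real.exp (-((H:ℝ)^3/2) * ∑ i, l i ^ 2)

lemma gw_nonneg (n H : ℕ) (l : Fin n → ℝ) : 0 ≤ gw n H l := by
  unfold gw; positivity

lemma gw_continuous (n H : ℕ) : Continuous (gw n H) := by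
  unfold gw
  apply continuous_const.mul
  apply Real.continuous_exp.comp
  apply Continuous.mul continuous_const
  exact continuous_finset_sum _ (fun i _ => (continuous_apply i).pow 2)

lemma gw_prod_form (n H : ℕ) (l : Fin n → ℝ) :
    gw n H l = Real.sqrt ((H:ℝ)^3 / (2*Real.pi)) ^ n *
      ∏ i, Real.exp (-((H:ℝ)^3/2) * l i ^ 2) := by
  rw [gw, ← Real.exp_sum, Finset.mul_sum]

lemma gw_integrable (n H : ℕ) (hH : 1 ≤ H) : Integrable (gw n H) := by
  have ha : (0:ℝ) < (H:ℝ)^3/2 := by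
    have : (1:ℝ) ≤ H := by exact_mod_cast hH
    positivity
  have h1 : Integrable (fun x : ℝ => Real.exp (-((H:ℝ)^3/2) * x ^ 2)) :=
    integrable_exp_neg_mul_sq ha
  have h2 : Integrable (fun l : Fin n → ℝ => ∏ i, Real.exp (-((H:ℝ)^3/2) * l i ^ 2)) :=
    Integrable.fintype_prod (f := fun _ x => Real.exp (-((H:ℝ)^3/2) * x ^ 2)) (fun _ => h1)
  have := h2.const_mul (Real.sqrt ((H:ℝ)^3 / (2*Real.pi)) ^ n)
  apply this.congr
  filter_upwards with l
  rw [gw_prod_form]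

lemma gw_integral (n H : ℕ) (hH : 1 ≤ H) : ∫ l : Fin n → ℝ, gw n H l = 1 := by
  have hHpos : (0:ℝ) < H := by exact_mod_cast hH
  have ha : (0:ℝ) < (H:ℝ)^3/2 := by positivity
  have h1 : ∫ l : Fin n → ℝ, gw n H l = Real.sqrt ((H:ℝ)^3 / (2*Real.pi)) ^ n *
      ∫ l : Fin n → ℝ, ∏ i, Real.exp (-((H:ℝ)^3/2) * l i ^ 2) := by
    rw [← integral_const_mul]
    congr 1
    funext l
    rw [gw_prod_form]
  rw [h1, volume_pi, integral_fintype_prod_eq_pow (ι := Fin n) (fun x : ℝ => Real.exp (-((H:ℝ)^3/2) * x ^ 2)),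
    integral_gaussian, Fintype.card_fin, ← mul_pow, ← Real.sqrt_mul (by positivity)]
  have : (H:ℝ)^3 / (2*Real.pi) * (Real.pi / ((H:ℝ)^3/2)) = 1 := by
    field_simp
  rw [this, Real.sqrt_one, one_pow]
/-- Mixture of the exponential supermartingale over a Gaussian prior. -/
noncomputable def Gmix {n : ℕ} (φ : ℕ → Ω → Fin n → ℝ) (η : ℕ → Ω → ℝ) (H k : ℕ)
    (ω : Ω) : ℝ≥0∞ :=
  ∫⁻ l, ENNReal.ofReal (gw n H l * martFn φ η H l k ω)

section mix

variable (μ : Measure Ω) [IsProbabilityMeasure μ] (𝓕 : Filtration ℕ m0)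
  {n : ℕ} (H : ℕ) (φ : ℕ → Ω → Fin n → ℝ) (η : ℕ → Ω → ℝ)

lemma mart_joint_meas
    (hφ_meas : ∀ τ, 1 ≤ τ → Measurable[𝓕 (τ - 1)] (φ τ))
    (hη_meas : ∀ τ, 1 ≤ τ → Measurable[𝓕 τ] (η τ)) (k : ℕ) :
    Measurable (fun p : Ω × (Fin n → ℝ) => gw n H p.2 * martFn φ η H p.2 k p.1) := by
  apply Measurable.mul ((gw_continuous n H).measurable.comp measurable_snd)
  simp only [martFn]
  apply Measurable.exp
  apply Finset.measurable_sum
  intro τ hτ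
  rw [Finset.mem_Icc] at hτ
  have hφm : Measurable (φ τ) := (hφ_meas τ hτ.1).mono (𝓕.le _) le_rfl
  have hηm : Measurable (η τ) := (hη_meas τ hτ.1).mono (𝓕.le _) le_rfl
  have hdot : Measurable (fun p : Ω × (Fin n → ℝ) => φ τ p.1 ⬝ᵥ p.2) := by
    apply Finset.measurable_sum
    intro i _
    exact (((measurable_pi_apply i).comp hφm).comp measurable_fst).mul
      ((measurable_pi_apply i).comp measurable_snd)
  exact ((hηm.comp measurable_fst).mul hdot).sub ((hdot.pow_const 2).const_mul _)

lemma Gmix_meas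
    (hφ_meas : ∀ τ, 1 ≤ τ → Measurable[𝓕 (τ - 1)] (φ τ))
    (hη_meas : ∀ τ, 1 ≤ τ → Measurable[𝓕 τ] (η τ)) (k : ℕ) :
    Measurable (Gmix φ η H k) := by
  have hjoint := (mart_joint_meas 𝓕 H φ η hφ_meas hη_meas k).ennreal_ofReal
  exact Measurable.lintegral_prod_right
    (f := fun ω l => ENNReal.ofReal (gw n H l * martFn φ η H l k ω)) hjoint

lemma lintegral_Gmix_le (hH : 1 ≤ H)
    (hφ_meas : ∀ τ, 1 ≤ τ → Measurable[𝓕 (τ - 1)] (φ τ))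
    (hφ_bdd : ∀ τ ω, (∑ i, φ τ ω i ^ 2) ≤ H)
    (hη_meas : ∀ τ, 1 ≤ τ → Measurable[𝓕 τ] (η τ))
    (hη_bdd : ∀ τ, 1 ≤ τ → ∀ᵐ ω ∂μ, |η τ ω| ≤ H)
    (hη_mean : ∀ τ, 1 ≤ τ → μ[η τ | 𝓕 (τ - 1)] =ᵐ[μ] fun _ => 0) (k : ℕ) :
    ∫⁻ ω, Gmix φ η H k ω ∂μ ≤ 1 := by
  have hjoint := (mart_joint_meas 𝓕 H φ η hφ_meas hη_meas k).ennreal_ofReal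
  have hswap : ∫⁻ ω, ∫⁻ l, ENNReal.ofReal (gw n H l * martFn φ η H l k ω) ∂volume ∂μ
      = ∫⁻ l, ∫⁻ ω, ENNReal.ofReal (gw n H l * martFn φ η H l k ω) ∂μ ∂volume :=
    lintegral_lintegral_swap hjoint.aemeasurable
  have hGdef : ∫⁻ ω, Gmix φ η H k ω ∂μ
      = ∫⁻ ω, ∫⁻ l, ENNReal.ofReal (gw n H l * martFn φ η H l k ω) ∂volume ∂μ := rfl
  rw [hGdef, hswap]
  have hmart_m : ∀ l : Fin n → ℝ, Measurable (fun ω => ENNReal.ofReal (martFn φ η H l k ω)) :=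
    fun l => ((martFn_measurable 𝓕 H φ η hφ_meas hη_meas l k (k-1) le_rfl).mono
      (𝓕.le _) le_rfl).ennreal_ofReal
  calc ∫⁻ l, ∫⁻ ω, ENNReal.ofReal (gw n H l * martFn φ η H l k ω) ∂μ ∂volume
      ≤ ∫⁻ l, ENNReal.ofReal (gw n H l) ∂volume := by
        apply lintegral_mono
        intro l
        show (∫⁻ ω, ENNReal.ofReal (gw n H l * martFn φ η H l k ω) ∂μ)
          ≤ ENNReal.ofReal (gw n H l)
        have heq : (fun ω => ENNReal.ofReal (gw n H l * martFn φ η H l k ω))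
            = fun ω => ENNReal.ofReal (gw n H l) * ENNReal.ofReal (martFn φ η H l k ω) := by
          funext ω; rw [ENNReal.ofReal_mul (gw_nonneg n H l)]
        rw [heq, lintegral_const_mul _ (hmart_m l)]
        calc ENNReal.ofReal (gw n H l) * ∫⁻ ω, ENNReal.ofReal (martFn φ η H l k ω) ∂μ
            ≤ ENNReal.ofReal (gw n H l) * 1 := by
              apply mul_le_mul_right
              exact lintegral_martFn_le μ 𝓕 H φ η hH hφ_meas hφ_bdd hη_meas hη_bdd hη_mean l k
          _ = ENNReal.ofReal (gw n H l) := mul_one _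
    _ = 1 := by
        rw [← ofReal_integral_eq_lintegral_ofReal (gw_integrable n H hH)
          (Filter.Eventually.of_forall (gw_nonneg n H)), gw_integral n H hH, ENNReal.ofReal_one]

lemma Gmix_markov (hH : 1 ≤ H)
    (hφ_meas : ∀ τ, 1 ≤ τ → Measurable[𝓕 (τ - 1)] (φ τ))
    (hφ_bdd : ∀ τ ω, (∑ i, φ τ ω i ^ 2) ≤ H)
    (hη_meas : ∀ τ, 1 ≤ τ → Measurable[𝓕 τ] (η τ))
    (hη_bdd : ∀ τ, 1 ≤ τ → ∀ᵐ ω ∂μ, |η τ ω| ≤ H)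
    (hη_mean : ∀ τ, 1 ≤ τ → μ[η τ | 𝓕 (τ - 1)] =ᵐ[μ] fun _ => 0) (k : ℕ)
    {c : ℝ≥0∞} (hc0 : c ≠ 0) (hctop : c ≠ ⊤) :
    μ {ω | c ≤ Gmix φ η H k ω} ≤ c⁻¹ := by
  have h := mul_meas_ge_le_lintegral₀
    (μ := μ) (Gmix_meas 𝓕 H φ η hφ_meas hη_meas k).aemeasurable c
  have h1 : c * μ {ω | c ≤ Gmix φ η H k ω} ≤ 1 :=
    h.trans (lintegral_Gmix_le μ 𝓕 H φ η hH hφ_meas hφ_bdd hη_meas hη_bdd hη_mean k)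
  calc μ {ω | c ≤ Gmix φ η H k ω}
      = c⁻¹ * (c * μ {ω | c ≤ Gmix φ η H k ω}) := by
        rw [← mul_assoc, ENNReal.inv_mul_cancel hc0 hctop, one_mul]
    _ ≤ c⁻¹ * 1 := mul_le_mul_right h1 _
    _ = c⁻¹ := mul_one _

end mix

/-- The regularized Gram matrix. -/
noncomputable def LamM (n H : ℕ) (ψ : ℕ → Fin n → ℝ) (s : Finset ℕ) :
    Matrix (Fin n) (Fin n) ℝ :=
  (H:ℝ) • (1 : Matrix (Fin n) (Fin n) ℝ) + ∑ τ ∈ s, vecMulVec (ψ τ) (ψ τ)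

section matfacts

variable {n H : ℕ} (ψ : ℕ → Fin n → ℝ) (s : Finset ℕ)

lemma dotProduct_sum' (z : Fin n → ℝ) (v : ℕ → Fin n → ℝ) :
    z ⬝ᵥ (∑ τ ∈ s, v τ) = ∑ τ ∈ s, (z ⬝ᵥ v τ) := by
  rw [dotProduct_comm, sum_dotProduct']
  exact Finset.sum_congr rfl fun τ _ => dotProduct_comm _ _

lemma LamM_expand (z : Fin n → ℝ) :
    z ⬝ᵥ (LamM n H ψ s *ᵥ z) = (H:ℝ) * (∑ i, z i ^ 2) + ∑ τ ∈ s, (ψ τ ⬝ᵥ z) ^ 2 := by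
  rw [LamM, add_mulVec, Matrix.smul_mulVec, one_mulVec, sum_mulVec', dotProduct_add,
    dotProduct_smul, dotProduct_sum']
  congr 1
  · rw [smul_eq_mul]
    congr 1
    exact Finset.sum_congr rfl fun i _ => (sq (z i)).symm
  · refine Finset.sum_congr rfl fun τ _ => ?_
    rw [vecMulVec_mulVec', dotProduct_smul, smul_eq_mul, dotProduct_comm, sq]

lemma LamM_symm : (LamM n H ψ s)ᵀ = LamM n H ψ s := by
  rw [LamM, Matrix.transpose_add, Matrix.transpose_smul, Matrix.transpose_one]
  congr 1
  rw [Matrix.transpose_sum]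
  refine Finset.sum_congr rfl fun τ _ => ?_
  ext i j
  simp only [Matrix.transpose_apply, vecMulVec_apply]
  ring

variable (hH : 1 ≤ H)
include hH

lemma LamM_posdef : (LamM n H ψ s).PosDef := by
  refine Matrix.PosDef.of_dotProduct_mulVec_pos ?_ ?_
  · rw [Matrix.IsHermitian, Matrix.conjTranspose_eq_transpose_of_trivial, LamM_symm]
  · intro x hx
    have hsx : star x = x := by
      funext i; exact star_trivial _
    rw [hsx, LamM_expand]
    have hsum : 0 < ∑ i, x i ^ 2 := by
      have hxne : ∃ i, x i ≠ 0 := by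
        by_contra h; push_neg at h; exact hx (funext h)
      obtain ⟨i, hi⟩ := hxne
      exact Finset.sum_pos' (fun j _ => sq_nonneg _) ⟨i, Finset.mem_univ i, by positivity⟩
    have hHpos : (0:ℝ) < H := by exact_mod_cast hH
    have hq : 0 ≤ ∑ τ ∈ s, (ψ τ ⬝ᵥ x) ^ 2 := Finset.sum_nonneg fun τ _ => sq_nonneg _
    nlinarith

lemma LamM_det_isUnit : IsUnit (LamM n H ψ s).det :=
  isUnit_iff_ne_zero.2 (LamM_posdef ψ s hH).det_pos.ne'

lemma LamM_mulVec_inv (y : Fin n → ℝ) :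
    LamM n H ψ s *ᵥ ((LamM n H ψ s)⁻¹ *ᵥ y) = y := by
  rw [Matrix.mulVec_mulVec, Matrix.mul_nonsing_inv _ (LamM_det_isUnit ψ s hH), one_mulVec]

lemma LamM_inv_mulVec (y : Fin n → ℝ) :
    (LamM n H ψ s)⁻¹ *ᵥ (LamM n H ψ s *ᵥ y) = y := by
  rw [Matrix.mulVec_mulVec, Matrix.nonsing_inv_mul _ (LamM_det_isUnit ψ s hH), one_mulVec]

lemma LamM_inv_symm : ((LamM n H ψ s)⁻¹)ᵀ = (LamM n H ψ s)⁻¹ := by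
  rw [Matrix.transpose_nonsing_inv, LamM_symm]

lemma LamM_inv_quad_eq (z : Fin n → ℝ) :
    z ⬝ᵥ ((LamM n H ψ s)⁻¹ *ᵥ z) =
      ((LamM n H ψ s)⁻¹ *ᵥ z) ⬝ᵥ (LamM n H ψ s *ᵥ ((LamM n H ψ s)⁻¹ *ᵥ z)) := by
  set w := (LamM n H ψ s)⁻¹ *ᵥ z with hw
  have hwz : LamM n H ψ s *ᵥ w = z := LamM_mulVec_inv ψ s hH z
  calc z ⬝ᵥ w = (LamM n H ψ s *ᵥ w) ⬝ᵥ w := by rw [hwz]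
    _ = w ⬝ᵥ (LamM n H ψ s *ᵥ w) := dotProduct_comm _ _

lemma LamM_inv_psd (z : Fin n → ℝ) : 0 ≤ z ⬝ᵥ ((LamM n H ψ s)⁻¹ *ᵥ z) := by
  rw [LamM_inv_quad_eq ψ s hH, LamM_expand]
  have hHpos : (0:ℝ) ≤ H := by positivity
  have h1 : 0 ≤ ∑ i, ((LamM n H ψ s)⁻¹ *ᵥ z) i ^ 2 := Finset.sum_nonneg fun i _ => sq_nonneg _
  have h2 : 0 ≤ ∑ τ ∈ s, (ψ τ ⬝ᵥ ((LamM n H ψ s)⁻¹ *ᵥ z)) ^ 2 :=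
    Finset.sum_nonneg fun τ _ => sq_nonneg _
  positivity

end matfacts

set_option maxHeartbeats 8000000 in
/-- From a bound on the Gaussian mixture one gets the self-normalized bound. -/
lemma fstar_bound {n H K k : ℕ} (hH : 1 ≤ H) (hK : 1 ≤ K) (hk1 : 1 ≤ k) (hk : k ≤ K)
    {δ : ℝ} (hδ : 0 < δ) (hδ1 : δ < 1)
    (ψ : ℕ → Fin n → ℝ) (hψ : ∀ τ, (∑ i, ψ τ i ^ 2) ≤ H) (ε : ℕ → ℝ)
    (hG : (∫⁻ l : Fin n → ℝ, ENNReal.ofReal (gw n H l *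
        Real.exp (∑ τ ∈ Finset.Icc 1 (k-1),
          (ε τ * (ψ τ ⬝ᵥ l) - ((H:ℝ)^2/2) * (ψ τ ⬝ᵥ l)^2)))) < ENNReal.ofReal (K/δ)) :
    (∑ τ ∈ Finset.Icc 1 (k-1), ε τ • ψ τ) ⬝ᵥ
      ((LamM n H ψ (Finset.Icc 1 (k-1)))⁻¹ *ᵥ (∑ τ ∈ Finset.Icc 1 (k-1), ε τ • ψ τ)) ≤
    2*(H:ℝ)^2 * (Real.log (K/δ) + (n/2) * (1 + Real.log (Real.pi/2) + Real.log K)) := by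
  classical
  have hHpos : (0:ℝ) < H := by exact_mod_cast hH
  have hKpos : (0:ℝ) < K := by exact_mod_cast hK
  set s : Finset ℕ := Finset.Icc 1 (k-1) with hs
  set S : Fin n → ℝ := ∑ τ ∈ s, ε τ • ψ τ with hS
  set Λ : Matrix (Fin n) (Fin n) ℝ := LamM n H ψ s with hΛdef
  set P : Matrix (Fin n) (Fin n) ℝ := Λ⁻¹ with hPdef
  set qS : ℝ := S ⬝ᵥ (P *ᵥ S) with hqS
  set A : Matrix (Fin n) (Fin n) ℝ := (H:ℝ)^2 • Λ with hA
  set lstar : Fin n → ℝ := ((H:ℝ)^2)⁻¹ • (P *ᵥ S) with hlstar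
  set r' : ℝ := (Real.sqrt ((H:ℝ)^3 * K))⁻¹ with hr'
  have hr'pos : 0 < r' := by
    rw [hr']
    apply inv_pos.2
    apply Real.sqrt_pos.2
    positivity
  have hr'sq : r' ^ 2 = ((H:ℝ)^3 * K)⁻¹ := by
    rw [hr', inv_pow, Real.sq_sqrt (by positivity)]
  -- basic matrix facts
  have hAsymm : Aᵀ = A := by rw [hA, Matrix.transpose_smul, hΛdef, LamM_symm]
  have hAlstar : A *ᵥ lstar = S := by
    rw [hA, hlstar, Matrix.mulVec_smul, Matrix.smul_mulVec, hPdef, hΛdef,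
      LamM_mulVec_inv ψ s hH, smul_smul, inv_mul_cancel₀ (by positivity), one_smul]
  have hAquad : ∀ z : Fin n → ℝ, z ⬝ᵥ (A *ᵥ z) =
      (H:ℝ)^2 * ((H:ℝ) * (∑ i, z i ^ 2) + ∑ τ ∈ s, (ψ τ ⬝ᵥ z) ^ 2) := by
    intro z
    rw [hA, Matrix.smul_mulVec, dotProduct_smul, smul_eq_mul, hΛdef, LamM_expand]
  -- the exponent as a quadratic function
  set E : (Fin n → ℝ) → ℝ := fun l => S ⬝ᵥ l - (1/2) * (l ⬝ᵥ (A *ᵥ l)) with hE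
  have hexp_eq : ∀ l : Fin n → ℝ, gw n H l *
      Real.exp (∑ τ ∈ s, (ε τ * (ψ τ ⬝ᵥ l) - ((H:ℝ)^2/2) * (ψ τ ⬝ᵥ l)^2)) =
      Real.sqrt ((H:ℝ)^3 / (2*Real.pi)) ^ n * Real.exp (E l) := by
    intro l
    have h1 : S ⬝ᵥ l = ∑ τ ∈ s, ε τ * (ψ τ ⬝ᵥ l) := by
      rw [hS, sum_dotProduct']
      exact Finset.sum_congr rfl fun τ _ => smul_dotProduct _ _ _
    have h2 : E l = S ⬝ᵥ l - (1/2) * (l ⬝ᵥ (A *ᵥ l)) := by simp only [hE]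
    rw [gw, mul_assoc, ← Real.exp_add]
    congr 2
    rw [h2, hAquad l, h1, Finset.sum_sub_distrib, ← Finset.mul_sum]
    ring
  -- quadratic expansion around the maximizer
  have hlAlstar : ∀ l : Fin n → ℝ, l ⬝ᵥ (A *ᵥ lstar) = S ⬝ᵥ l := by
    intro l; rw [hAlstar, dotProduct_comm]
  have hlstarAl : ∀ l : Fin n → ℝ, lstar ⬝ᵥ (A *ᵥ l) = S ⬝ᵥ l := by
    intro l; rw [dot_mulVec_symm hAsymm, hlAlstar]
  have hlstarAlstar : lstar ⬝ᵥ (A *ᵥ lstar) = qS / (H:ℝ)^2 := by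
    rw [hAlstar, hlstar, smul_dotProduct, smul_eq_mul, dotProduct_comm, ← hqS]
    field_simp
  have hEquad : ∀ l : Fin n → ℝ,
      E l = qS/(2*(H:ℝ)^2) - (1/2) * ((l - lstar) ⬝ᵥ (A *ᵥ (l - lstar))) := by
    intro l
    have hx : (l - lstar) ⬝ᵥ (A *ᵥ (l - lstar)) =
        l ⬝ᵥ (A *ᵥ l) - 2 * (S ⬝ᵥ l) + qS / (H:ℝ)^2 := by
      rw [Matrix.mulVec_sub, dotProduct_sub, sub_dotProduct, sub_dotProduct,
        hlAlstar l, hlstarAl l, hlstarAlstar]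
      ring
    have h2 : E l = S ⬝ᵥ l - (1/2) * (l ⬝ᵥ (A *ᵥ l)) := by simp only [hE]
    rw [h2, hx]
    field_simp
    ring
  -- lower bound on E over the box
  set fstar : ℝ := qS/(2*(H:ℝ)^2) with hfstar
  set box : Set (Fin n → ℝ) :=
    Set.Icc (lstar - fun _ => r') (lstar + fun _ => r') with hbox
  have hElb : ∀ l ∈ box, fstar - n/2 ≤ E l := by
    intro l hl
    rw [Set.mem_Icc] at hl
    have hui : ∀ i, |(l - lstar) i| ≤ r' := by
      intro i
      rw [abs_le]
      constructor
      · have := hl.1 i; simp only [Pi.sub_apply] at this ⊢; linarith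
      · have := hl.2 i; simp only [Pi.add_apply, Pi.sub_apply] at this ⊢; linarith
    set u : Fin n → ℝ := l - lstar with hu
    have husq : ∑ i, u i ^ 2 ≤ n * r' ^ 2 := by
      calc ∑ i, u i ^ 2 ≤ ∑ _i : Fin n, r' ^ 2 := by
            apply Finset.sum_le_sum
            intro i _
            have := hui i
            nlinarith [abs_nonneg (u i), sq_abs (u i)]
        _ = n * r' ^ 2 := by rw [Finset.sum_const, Finset.card_univ, Fintype.card_fin,
            nsmul_eq_mul]
    have hucross : ∀ τ, (ψ τ ⬝ᵥ u) ^ 2 ≤ (H:ℝ) * ∑ i, u i ^ 2 := by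
      intro τ
      calc (ψ τ ⬝ᵥ u) ^ 2 ≤ (∑ i, ψ τ i ^ 2) * (∑ i, u i ^ 2) :=
            Finset.sum_mul_sq_le_sq_mul_sq _ _ _
        _ ≤ (H:ℝ) * ∑ i, u i ^ 2 := by
            apply mul_le_mul_of_nonneg_right (hψ τ)
            exact Finset.sum_nonneg fun i _ => sq_nonneg _
    have hcard : (s.card : ℝ) = (k:ℝ) - 1 := by
      rw [hs, Nat.card_Icc, show k - 1 + 1 - 1 = k - 1 from by omega,
        Nat.cast_sub hk1, Nat.cast_one]
    have hquad_le : u ⬝ᵥ (A *ᵥ u) ≤ (n:ℝ) := by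
      rw [hAquad]
      have hsum2 : ∑ τ ∈ s, (ψ τ ⬝ᵥ u) ^ 2 ≤ ((k:ℝ) - 1) * ((H:ℝ) * ∑ i, u i ^ 2) := by
        calc ∑ τ ∈ s, (ψ τ ⬝ᵥ u) ^ 2 ≤ ∑ _τ ∈ s, (H:ℝ) * ∑ i, u i ^ 2 :=
              Finset.sum_le_sum fun τ _ => hucross τ
          _ = (s.card : ℝ) * ((H:ℝ) * ∑ i, u i ^ 2) := by
              rw [Finset.sum_const, nsmul_eq_mul]
          _ = ((k:ℝ) - 1) * ((H:ℝ) * ∑ i, u i ^ 2) := by rw [hcard]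
      have hkK : (k:ℝ) ≤ K := by exact_mod_cast hk
      have husqnn : 0 ≤ ∑ i, u i ^ 2 := Finset.sum_nonneg fun i _ => sq_nonneg _
      have hk1R : (1:ℝ) ≤ k := by exact_mod_cast hk1
      -- H^2 * (H * Σu² + Σ(ψ⬝u)²) ≤ H^2 * (H Σu² + (k-1) H Σu²) = k H³ Σu² ≤ k H³ n r'²
      -- = k n / K ≤ n
      have step1 : (H:ℝ)^2 * ((H:ℝ) * (∑ i, u i ^ 2) + ∑ τ ∈ s, (ψ τ ⬝ᵥ u) ^ 2)
          ≤ (k:ℝ) * (H:ℝ)^3 * (∑ i, u i ^ 2) := by nlinarith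
      have step2 : (k:ℝ) * (H:ℝ)^3 * (∑ i, u i ^ 2) ≤ (k:ℝ) * (H:ℝ)^3 * ((n:ℝ) * r'^2) := by
        apply mul_le_mul_of_nonneg_left husq (by positivity)
      have step3 : (k:ℝ) * (H:ℝ)^3 * ((n:ℝ) * r'^2) ≤ (n:ℝ) := by
        rw [hr'sq]
        have heq3 : (k:ℝ) * (H:ℝ)^3 * ((n:ℝ) * ((H:ℝ)^3*(K:ℝ))⁻¹) =
            (n:ℝ) * ((k:ℝ)/(K:ℝ)) := by field_simp
        rw [heq3]
        have hfrac : (k:ℝ)/(K:ℝ) ≤ 1 := by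
          rw [div_le_one hKpos]; exact hkK
        nlinarith [Nat.cast_nonneg (α := ℝ) n]
      linarith
    rw [hEquad]
    have h9 : (l - lstar) ⬝ᵥ (A *ᵥ (l - lstar)) ≤ (n:ℝ) := hquad_le
    linarith
  -- lower bound the mixture integral by the box contribution
  set cN : ℝ := Real.sqrt ((H:ℝ)^3 / (2*Real.pi)) ^ n with hcN
  have hcNpos : 0 < cN := by
    rw [hcN]
    exact pow_pos (Real.sqrt_pos.2 (by positivity)) n
  set clow : ℝ := cN * Real.exp (fstar - n/2) with hclow
  have hclowpos : 0 < clow := by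
    rw [hclow]; positivity
  have hlower : ENNReal.ofReal (clow * (2*r')^n) ≤ ∫⁻ l : Fin n → ℝ,
      ENNReal.ofReal (gw n H l * Real.exp (∑ τ ∈ s,
        (ε τ * (ψ τ ⬝ᵥ l) - ((H:ℝ)^2/2) * (ψ τ ⬝ᵥ l)^2))) := by
    have hpoint : ∀ l : Fin n → ℝ,
        box.indicator (fun _ => ENNReal.ofReal clow) l ≤
        ENNReal.ofReal (gw n H l * Real.exp (∑ τ ∈ s,
          (ε τ * (ψ τ ⬝ᵥ l) - ((H:ℝ)^2/2) * (ψ τ ⬝ᵥ l)^2))) := by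
      intro l
      rw [Set.indicator_apply]
      split_ifs with hl
      · rw [hexp_eq l]
        apply ENNReal.ofReal_le_ofReal
        rw [hclow]
        exact mul_le_mul_of_nonneg_left (Real.exp_le_exp.2 (hElb l hl)) hcNpos.le
      · exact zero_le
    calc ENNReal.ofReal (clow * (2*r')^n)
        = ENNReal.ofReal clow * volume box := by
          rw [hbox, Real.volume_Icc_pi]
          have heq2 : ∀ i : Fin n, ENNReal.ofReal (((lstar + fun _ : Fin n => r') : Fin n → ℝ) i
              - ((lstar - fun _ : Fin n => r') : Fin n → ℝ) i) = ENNReal.ofReal (2*r') := by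
            intro i
            congr 1
            simp only [Pi.add_apply, Pi.sub_apply]
            ring
          rw [Finset.prod_congr rfl (fun i _ => heq2 i), Finset.prod_const,
            Finset.card_univ, Fintype.card_fin, ← ENNReal.ofReal_pow (by positivity),
            ← ENNReal.ofReal_mul hclowpos.le]
      _ = ∫⁻ l, box.indicator (fun _ => ENNReal.ofReal clow) l := by
          rw [lintegral_indicator measurableSet_Icc, setLIntegral_const, mul_comm]
      _ ≤ _ := lintegral_mono hpoint
  have hKδpos : (0:ℝ) < (K:ℝ)/δ := by positivity
  have hreal : clow * (2*r')^n < (K:ℝ)/δ :=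
    (ENNReal.ofReal_lt_ofReal_iff hKδpos).1 (lt_of_le_of_lt hlower hG)
  -- take logarithms
  have hlog : Real.log clow + n * Real.log (2*r') ≤ Real.log ((K:ℝ)/δ) := by
    have h3 : Real.log (clow * (2*r')^n) ≤ Real.log ((K:ℝ)/δ) :=
      Real.log_le_log (by positivity) hreal.le
    rw [Real.log_mul (ne_of_gt hclowpos) (by positivity), Real.log_pow] at h3
    exact_mod_cast h3
  have hlogclow : Real.log clow =
      n * (Real.log ((H:ℝ)^3 / (2*Real.pi)) / 2) + (fstar - n/2) := by
    rw [hclow, Real.log_mul (ne_of_gt hcNpos) (Real.exp_ne_zero _), Real.log_exp, hcN,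
      Real.log_pow, Real.log_sqrt (by positivity)]
  have hlog2r : Real.log (2*r') = Real.log 2 - (3 * Real.log H + Real.log K)/2 := by
    rw [show (2:ℝ)*r' = 2 * r' from rfl, Real.log_mul two_ne_zero (ne_of_gt hr'pos), hr',
      Real.log_inv, Real.log_sqrt (by positivity),
      Real.log_mul (by positivity) (by positivity), Real.log_pow]
    push_cast
    ring
  have hlogHpi : Real.log ((H:ℝ)^3/(2*Real.pi)) =
      3*Real.log H - (Real.log 2 + Real.log Real.pi) := by
    rw [Real.log_div (by positivity) (by positivity), Real.log_pow,
      Real.log_mul two_ne_zero (ne_of_gt Real.pi_pos)]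
    push_cast
    ring
  have hlogπ2 : Real.log (Real.pi/2) = Real.log Real.pi - Real.log 2 :=
    Real.log_div (ne_of_gt Real.pi_pos) two_ne_zero
  have hfinal : fstar ≤ Real.log ((K:ℝ)/δ) + (n:ℝ)/2
      + ((n:ℝ)/2) * (Real.log (Real.pi/2) + Real.log K) := by
    rw [hlogclow, hlog2r, hlogHpi] at hlog
    rw [hlogπ2]
    linarith
  have hqS_eq : qS = 2*(H:ℝ)^2 * fstar := by
    rw [hfstar]
    field_simp
  rw [hqS_eq]
  have hmul := mul_le_mul_of_nonneg_left hfinal (show (0:ℝ) ≤ 2*(H:ℝ)^2 by positivity)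
  refine hmul.trans (le_of_eq ?_)
  ring

end Stmt11Aux

open Stmt11Aux in
set_option maxHeartbeats 8000000 in
/-- Aggregate-reward least-squares error bound: with `v^τ = (φ^τ)ᵀθ + η_τ`, where
`‖φ^τ‖² ≤ H`, `|η_τ| ≤ H`, `E[η_τ | 𝓕_{τ−1}] = 0`, `‖θ‖ ≤ √(dH)`,
`Λ^k = H·I + Σ_{τ<k} φ^τ(φ^τ)ᵀ` and `θ̂^k = (Λ^k)⁻¹ Σ_{τ<k} φ^τ v^τ`, with probability at
least `1 − δ`, simultaneously for all `k ∈ {1,…,K}`,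
`‖θ − θ̂^k‖_{Λ^k} ≤ 2H√(2dH log(2K/δ))`. -/
theorem stmt_11
    {Ω : Type*} {m0 : MeasurableSpace Ω} (μ : Measure Ω) [IsProbabilityMeasure μ]
    (𝓕 : Filtration ℕ m0)
    (d H K : ℕ) (hd : 1 ≤ d) (hH : 1 ≤ H) (hK : 1 ≤ K)
    (δ : ℝ) (hδ : 0 < δ) (hδ1 : δ < 1)
    (φ : ℕ → Ω → Fin (d * H) → ℝ)
    (hφ_meas : ∀ τ, 1 ≤ τ → Measurable[𝓕 (τ - 1)] (φ τ))
    (hφ_bdd : ∀ τ ω, (∑ i, φ τ ω i ^ 2) ≤ H)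
    (η : ℕ → Ω → ℝ)
    (hη_meas : ∀ τ, 1 ≤ τ → Measurable[𝓕 τ] (η τ))
    (hη_bdd : ∀ τ, 1 ≤ τ → ∀ᵐ ω ∂μ, |η τ ω| ≤ H)
    (hη_mean : ∀ τ, 1 ≤ τ → μ[η τ | 𝓕 (τ - 1)] =ᵐ[μ] fun _ => 0)
    (θ : Fin (d * H) → ℝ) (hθ : (∑ i, θ i ^ 2) ≤ d * H)
    (v : ℕ → Ω → ℝ) (hv : ∀ τ ω, v τ ω = φ τ ω ⬝ᵥ θ + η τ ω)
    (Λ : ℕ → Ω → Matrix (Fin (d * H)) (Fin (d * H)) ℝ)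
    (hΛ : ∀ k ω, Λ k ω = (H : ℝ) • (1 : Matrix (Fin (d * H)) (Fin (d * H)) ℝ) +
      ∑ τ ∈ Finset.Icc 1 (k - 1), vecMulVec (φ τ ω) (φ τ ω))
    (θhat : ℕ → Ω → Fin (d * H) → ℝ)
    (hθhat : ∀ k ω, θhat k ω = (Λ k ω)⁻¹ *ᵥ ∑ τ ∈ Finset.Icc 1 (k - 1), v τ ω • φ τ ω) :
    1 - ENNReal.ofReal δ ≤
      μ {ω | ∀ k ∈ Finset.Icc 1 K,
        Real.sqrt ((θ - θhat k ω) ⬝ᵥ (Λ k ω *ᵥ (θ - θhat k ω))) ≤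
          2 * H * Real.sqrt (2 * d * H * Real.log (2 * K / δ))} := by
  classical
  have hHpos : (0:ℝ) < H := by exact_mod_cast hH
  have hKpos : (0:ℝ) < K := by exact_mod_cast hK
  have hdpos : (0:ℝ) < d := by exact_mod_cast hd
  have hd1 : (1:ℝ) ≤ d := by exact_mod_cast hd
  have hH1 : (1:ℝ) ≤ H := by exact_mod_cast hH
  set c : ℝ≥0∞ := ENNReal.ofReal ((K:ℝ)/δ) with hc
  have hc0 : c ≠ 0 := ne_of_gt (ENNReal.ofReal_pos.2 (by positivity))
  have hctop : c ≠ ⊤ := ENNReal.ofReal_ne_top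
  set bad : Set Ω := ⋃ k ∈ Finset.Icc 1 K, {ω | c ≤ Gmix φ η H k ω} with hbad
  have hGmeas : ∀ k, Measurable (Gmix φ η H k) :=
    fun k => Gmix_meas 𝓕 H φ η hφ_meas hη_meas k
  have hbad_meas : MeasurableSet bad := by
    apply Finset.measurableSet_biUnion
    intro k _
    exact measurableSet_le measurable_const (hGmeas k)
  -- union bound
  have hbadle : μ bad ≤ ENNReal.ofReal δ := by
    have hmarkov : ∀ k ∈ Finset.Icc 1 K, μ {ω | c ≤ Gmix φ η H k ω} ≤ c⁻¹ :=
      fun k _ => Gmix_markov μ 𝓕 H φ η hH hφ_meas hφ_bdd hη_meas hη_bdd hη_mean k hc0 hctop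
    have hcinv : c⁻¹ = ENNReal.ofReal (δ/(K:ℝ)) := by
      rw [hc, ← ENNReal.ofReal_inv_of_pos (by positivity), inv_div]
    calc μ bad ≤ ∑ k ∈ Finset.Icc 1 K, μ {ω | c ≤ Gmix φ η H k ω} :=
          measure_biUnion_finset_le _ _
      _ ≤ ∑ k ∈ Finset.Icc 1 K, c⁻¹ := Finset.sum_le_sum hmarkov
      _ = (Finset.Icc 1 K).card • c⁻¹ := by rw [Finset.sum_const]
      _ = (K : ℝ≥0∞) * ENNReal.ofReal (δ/(K:ℝ)) := by
          rw [hcinv, Nat.card_Icc, nsmul_eq_mul]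
          norm_num
      _ = ENNReal.ofReal ((K:ℝ) * (δ/(K:ℝ))) := by
          rw [ENNReal.ofReal_mul (by positivity), ENNReal.ofReal_natCast]
      _ = ENNReal.ofReal δ := by
          congr 1
          field_simp
  have hcompl : 1 - ENNReal.ofReal δ ≤ μ badᶜ := by
    rw [measure_compl hbad_meas (measure_ne_top μ bad), measure_univ]
    exact tsub_le_tsub_left hbadle 1
  refine le_trans hcompl (measure_mono ?_)
  -- pointwise: on the complement of the bad event the bound holds
  intro ω hω
  simp only [hbad, Set.mem_compl_iff, Set.mem_iUnion, Set.mem_setOf_eq, not_exists,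
    not_le, exists_prop, not_and] at hω
  intro k hk
  rw [Finset.mem_Icc] at hk
  obtain ⟨hk1, hk2⟩ := hk
  have hGlt : Gmix φ η H k ω < c := hω k (Finset.mem_Icc.mpr ⟨hk1, hk2⟩)
  -- apply the self-normalized bound
  set ψ : ℕ → Fin (d*H) → ℝ := fun τ => φ τ ω with hψdef
  set s : Finset ℕ := Finset.Icc 1 (k-1) with hs
  set S : Fin (d*H) → ℝ := ∑ τ ∈ s, η τ ω • ψ τ with hS
  have hψbdd : ∀ τ, (∑ i, ψ τ i ^ 2) ≤ (H:ℝ) := fun τ => hφ_bdd τ ω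
  have hqS : S ⬝ᵥ ((LamM (d*H) H ψ s)⁻¹ *ᵥ S) ≤
      2*(H:ℝ)^2 * (Real.log ((K:ℝ)/δ) + (((d*H:ℕ):ℝ))/2 *
        (1 + Real.log (Real.pi/2) + Real.log K)) := by
    have hb := fstar_bound hH hK hk1 hk2 hδ hδ1 ψ hψbdd (fun τ => η τ ω) ?_
    · exact hb.trans (le_of_eq (by push_cast; ring))
    · exact hGlt
  -- matrix algebra
  set Λω : Matrix (Fin (d*H)) (Fin (d*H)) ℝ := LamM (d*H) H ψ s with hΛω
  set P : Matrix (Fin (d*H)) (Fin (d*H)) ℝ := Λω⁻¹ with hP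
  have hΛeq : Λ k ω = Λω := by rw [hΛ k ω]; rfl
  set y : Fin (d*H) → ℝ := (H:ℝ) • θ - S with hy
  have hdiff : Λω *ᵥ (θ - θhat k ω) = y := by
    rw [hθhat k ω, hΛeq, Matrix.mulVec_sub]
    have h1 : Λω *ᵥ (Λω⁻¹ *ᵥ ∑ τ ∈ s, v τ ω • φ τ ω) = ∑ τ ∈ s, v τ ω • φ τ ω :=
      LamM_mulVec_inv ψ s hH _
    rw [h1]
    have h2 : Λω *ᵥ θ = (H:ℝ) • θ + ∑ τ ∈ s, (ψ τ ⬝ᵥ θ) • ψ τ := by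
      rw [hΛω, LamM, Matrix.add_mulVec, Matrix.smul_mulVec, one_mulVec, sum_mulVec']
      congr 1
      exact Finset.sum_congr rfl fun τ _ => vecMulVec_mulVec' _ _ _
    have h3 : ∑ τ ∈ s, v τ ω • φ τ ω = (∑ τ ∈ s, (ψ τ ⬝ᵥ θ) • ψ τ) + S := by
      rw [hS, ← Finset.sum_add_distrib]
      refine Finset.sum_congr rfl fun τ _ => ?_
      rw [hv τ ω, add_smul]
    rw [h2, h3, hy]
    abel
  have hxP : θ - θhat k ω = P *ᵥ y := by
    have h4 := LamM_inv_mulVec ψ s hH (θ - θhat k ω)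
    rw [hdiff] at h4
    rw [hP]
    exact h4.symm
  have hquad : (θ - θhat k ω) ⬝ᵥ (Λ k ω *ᵥ (θ - θhat k ω)) = y ⬝ᵥ (P *ᵥ y) := by
    rw [hΛeq, hdiff, hxP, dotProduct_comm]
  -- triangle inequality
  have htri : Real.sqrt (y ⬝ᵥ (P *ᵥ y)) ≤
      Real.sqrt (((H:ℝ) • θ) ⬝ᵥ (P *ᵥ ((H:ℝ) • θ))) + Real.sqrt (S ⬝ᵥ (P *ᵥ S)) := by
    rw [hy]
    exact quad_triangle (LamM_inv_symm ψ s hH) (LamM_inv_psd ψ s hH) _ _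
  -- bound for the θ-part
  have hqθ : ((H:ℝ) • θ) ⬝ᵥ (P *ᵥ ((H:ℝ) • θ)) ≤ (d:ℝ) * (H:ℝ)^2 := by
    set w : Fin (d*H) → ℝ := P *ᵥ θ with hw
    have hkey : θ ⬝ᵥ (P *ᵥ θ) = w ⬝ᵥ (Λω *ᵥ w) := LamM_inv_quad_eq ψ s hH θ
    have hexp2 : w ⬝ᵥ (Λω *ᵥ w) = (H:ℝ) * (∑ i, w i ^ 2) + ∑ τ ∈ s, (ψ τ ⬝ᵥ w) ^ 2 :=
      LamM_expand ψ s w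
    have ht0 : 0 ≤ θ ⬝ᵥ (P *ᵥ θ) := LamM_inv_psd ψ s hH θ
    have hwsq : 0 ≤ ∑ i, w i ^ 2 := Finset.sum_nonneg fun i _ => sq_nonneg _
    have hcross : 0 ≤ ∑ τ ∈ s, (ψ τ ⬝ᵥ w) ^ 2 := Finset.sum_nonneg fun τ _ => sq_nonneg _
    have hge : (H:ℝ) * (∑ i, w i ^ 2) ≤ θ ⬝ᵥ (P *ᵥ θ) := by
      rw [hkey, hexp2]; linarith
    have hdotw : θ ⬝ᵥ (P *ᵥ θ) = θ ⬝ᵥ w := rfl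
    have hcs : (θ ⬝ᵥ w) ^ 2 ≤ (∑ i, θ i ^ 2) * (∑ i, w i ^ 2) := by
      have := Finset.sum_mul_sq_le_sq_mul_sq Finset.univ θ w
      exact this
    have hθR : (∑ i, θ i ^ 2) ≤ (d:ℝ) * H := by exact_mod_cast hθ
    have hθ0 : 0 ≤ ∑ i, θ i ^ 2 := Finset.sum_nonneg fun i _ => sq_nonneg _
    have htled : θ ⬝ᵥ (P *ᵥ θ) ≤ (d:ℝ) := by
      nlinarith [hcs, hge, ht0, hθR, hwsq, hθ0, hdotw]
    have hsmul : ((H:ℝ) • θ) ⬝ᵥ (P *ᵥ ((H:ℝ) • θ)) = (H:ℝ)^2 * (θ ⬝ᵥ (P *ᵥ θ)) := by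
      rw [Matrix.mulVec_smul, smul_dotProduct, dotProduct_smul]
      simp only [smul_eq_mul]
      ring
    rw [hsmul]
    nlinarith [htled]
  -- numeric conclusion
  set L : ℝ := Real.log (2*(K:ℝ)/δ) with hL
  have hLeq : L = Real.log 2 + Real.log K - Real.log δ := by
    rw [hL, Real.log_div (by positivity) (ne_of_gt hδ), Real.log_mul two_ne_zero
      (by positivity)]
  have hlog2 : (0.6931471803:ℝ) < Real.log 2 := Real.log_two_gt_d9
  have hlogK : 0 ≤ Real.log K := Real.log_nonneg (by exact_mod_cast hK)
  have hlogδ : Real.log δ < 0 := Real.log_neg hδ hδ1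
  have hlogπ2 : Real.log (Real.pi/2) ≤ 0.575 := by
    have h1 : Real.log (Real.pi/2) ≤ Real.pi/2 - 1 :=
      Real.log_le_sub_one_of_pos (by positivity)
    have h2 : Real.pi < 3.15 := Real.pi_lt_d2
    linarith
  have hLpos : 0 < L := by rw [hLeq]; linarith
  set Bg : ℝ := 2*(H:ℝ)^2 * (Real.log ((K:ℝ)/δ) + (((d*H:ℕ):ℝ))/2 *
    (1 + Real.log (Real.pi/2) + Real.log K)) with hBg
  have hlogKδ : Real.log ((K:ℝ)/δ) = Real.log K - Real.log δ :=
    Real.log_div (by positivity) (ne_of_gt hδ)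
  have hlogπ2' : -1 < Real.log (Real.pi/2) := by
    have : (0:ℝ) < Real.log (Real.pi/2) := Real.log_pos (by nlinarith [Real.pi_gt_three])
    linarith
  have hnr : ((d*H:ℕ):ℝ) = (d:ℝ)*(H:ℝ) := by push_cast; ring
  have hBgpos : 0 ≤ Bg := by
    rw [hBg, hlogKδ, hnr]
    have h1 : 0 ≤ Real.log K - Real.log δ := by linarith
    have h2 : 0 ≤ 1 + Real.log (Real.pi/2) + Real.log K := by linarith
    have h3 : 0 ≤ (d:ℝ)*(H:ℝ)/2 := by positivity
    nlinarith [mul_nonneg h3 h2]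
  have hkey4 : 2 * ((d:ℝ) * (H:ℝ)^2 + Bg) ≤ 8 * (d:ℝ) * (H:ℝ)^3 * L := by
    rw [hBg, hlogKδ, hLeq, hnr]
    have e3 : 2 + Real.log (Real.pi/2) + 3*Real.log K - 2*Real.log δ ≤
        4*Real.log 2 + 4*Real.log K - 4*Real.log δ := by linarith
    have hpos3 : (0:ℝ) ≤ 2*((d:ℝ)*(H:ℝ)^3) := by positivity
    have e4 := mul_le_mul_of_nonneg_left e3 hpos3
    have eH : (H:ℝ)^2 ≤ (d:ℝ)*(H:ℝ)^3 := by
      nlinarith [mul_nonneg (sub_nonneg.2 hd1) (pow_pos hHpos 3).le,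
        mul_nonneg (pow_pos hHpos 2).le (sub_nonneg.2 hH1)]
    have e1 : 4*(H:ℝ)^2 * (Real.log K - Real.log δ) ≤
        4*((d:ℝ)*(H:ℝ)^3) * (Real.log K - Real.log δ) := by
      have h1 : 0 ≤ Real.log K - Real.log δ := by linarith
      nlinarith [mul_le_mul_of_nonneg_right eH h1]
    have e2 : 2*(d:ℝ)*(H:ℝ)^2 ≤ 2*(d:ℝ)*(H:ℝ)^3 := by
      nlinarith [mul_nonneg (mul_nonneg hdpos.le (pow_pos hHpos 2).le) (sub_nonneg.2 hH1)]
    nlinarith [e1, e2, e4]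
  calc Real.sqrt ((θ - θhat k ω) ⬝ᵥ (Λ k ω *ᵥ (θ - θhat k ω)))
      = Real.sqrt (y ⬝ᵥ (P *ᵥ y)) := by rw [hquad]
    _ ≤ Real.sqrt (((H:ℝ) • θ) ⬝ᵥ (P *ᵥ ((H:ℝ) • θ))) + Real.sqrt (S ⬝ᵥ (P *ᵥ S)) := htri
    _ ≤ Real.sqrt ((d:ℝ) * (H:ℝ)^2) + Real.sqrt Bg :=
        add_le_add (Real.sqrt_le_sqrt hqθ) (Real.sqrt_le_sqrt hqS)
    _ ≤ Real.sqrt (2 * ((d:ℝ) * (H:ℝ)^2 + Bg)) := by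
        have ha0 : (0:ℝ) ≤ (d:ℝ) * (H:ℝ)^2 := by positivity
        have h1 := Real.sq_sqrt ha0
        have h2 := Real.sq_sqrt hBgpos
        have h3 := Real.sqrt_nonneg ((d:ℝ) * (H:ℝ)^2)
        have h4 := Real.sqrt_nonneg Bg
        rw [show Real.sqrt ((d:ℝ) * (H:ℝ)^2) + Real.sqrt Bg =
          Real.sqrt ((Real.sqrt ((d:ℝ) * (H:ℝ)^2) + Real.sqrt Bg)^2) from
          (Real.sqrt_sq (by positivity)).symm]
        apply Real.sqrt_le_sqrt
        nlinarith [sq_nonneg (Real.sqrt ((d:ℝ) * (H:ℝ)^2) - Real.sqrt Bg)]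
    _ ≤ Real.sqrt (8 * (d:ℝ) * (H:ℝ)^3 * L) := Real.sqrt_le_sqrt hkey4
    _ = 2 * (H:ℝ) * Real.sqrt (2 * (d:ℝ) * (H:ℝ) * L) := by
        rw [show 8 * (d:ℝ) * (H:ℝ)^3 * L = (2*(H:ℝ))^2 * (2 * (d:ℝ) * (H:ℝ) * L) by ring,
          Real.sqrt_mul (by positivity), Real.sqrt_sq (by positivity)]
end

section
/- Let X (states) and A (actions) be finite nonempty sets, H ≥ 1 an integer, and x_1 ∈ X. Let P_h(x'|x,a) ≥ 0, for h ∈ [H], be sub-stochastic transition functions satisfying Σ_{x'∈X} P_h(x'|x,a) ≤ 1 for all (x,a), and let r_h : X × A → R. Let π and π̂ be policies, i.e., for each h ∈ [H] and x ∈ X, π_h(·|x) and π̂_h(·|x) are probability distributions on A. Define V^π by backward recursion: V^π_{H+1} ≡ 0 and V^π_h(x) = Σ_{a} π_h(a|x)·( r_h(x,a) + Σ_{x'} P_h(x'|x,a)·V^π_{h+1}(x') ). Define the occupancy measures of π by μ_1(x,a) = 1{x = x_1}·π_1(a|x) and μ_{h+1}(x',a') = ( Σ_{x,a} μ_h(x,a)·P_h(x'|x,a)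 )·π_{h+1}(a'|x'), and set ρ_h(x) = Σ_a μ_h(x,a). Let Q̂_h : X × A → R, h ∈ [H], be arbitrary functions, and define V̂_h(x) = Σ_a π̂_h(a|x)·Q̂_h(x,a) for h ∈ [H] and V̂_{H+1} ≡ 0. Then: V^π_1(x_1) − V̂_1(x_1) = Σ_{h=1}^{H} Σ_{x∈X} ρ_h(x)·Σ_{a∈A} Q̂_h(x,a)·( π_h(a|x) − π̂_h(a|x) ) + Σ_{h=1}^{H} Σ_{x∈X, a∈A} μ_h(x,a)·( r_h(x,a) + Σ_{x'∈X} P_h(x'|x,a)·V̂_{h+1}(x') − Q̂_h(x,a) ). -/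
open scoped BigOperators

/-- Extended value difference lemma for finite-horizon sub-stochastic MDPs:
`V^π_1(x_1) − V̂_1(x_1)
  = Σ_h Σ_x ρ_h(x) Σ_a Q̂_h(x,a)(π_h(a|x) − π̂_h(a|x))
    + Σ_h Σ_{x,a} μ_h(x,a)(r_h(x,a) + Σ_{x'} P_h(x'|x,a) V̂_{h+1}(x') − Q̂_h(x,a))`,
where `μ_h` is the occupancy measure of `π` and `ρ_h(x) = Σ_a μ_h(x,a)`. -/
theorem stmt_13
    (X A : Type*) [Fintype X] [Fintype A] [Nonempty X] [Nonempty A] [DecidableEq X]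
    (H : ℕ) (hH : 1 ≤ H) (x₁ : X)
    (P : ℕ → X → A → X → ℝ)
    (hP_nonneg : ∀ h x a x', 0 ≤ P h x a x')
    (hP_sub : ∀ h x a, (∑ x', P h x a x') ≤ 1)
    (r : ℕ → X → A → ℝ)
    (π πhat : ℕ → X → A → ℝ)
    (hπ_nonneg : ∀ h x a, 0 ≤ π h x a) (hπ_sum : ∀ h x, (∑ a, π h x a) = 1)
    (hπhat_nonneg : ∀ h x a, 0 ≤ πhat h x a) (hπhat_sum : ∀ h x, (∑ a, πhat h x a) = 1)
    (Vπ : ℕ → X → ℝ)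
    (hVπ_top : ∀ x, Vπ (H + 1) x = 0)
    (hVπ_rec : ∀ h, 1 ≤ h → h ≤ H → ∀ x,
      Vπ h x = ∑ a, π h x a * (r h x a + ∑ x', P h x a x' * Vπ (h + 1) x'))
    (μ : ℕ → X → A → ℝ)
    (hμ_init : ∀ x a, μ 1 x a = (if x = x₁ then (1 : ℝ) else 0) * π 1 x a)
    (hμ_rec : ∀ h, 1 ≤ h → h < H → ∀ x' a',
      μ (h + 1) x' a' = (∑ x, ∑ a, μ h x a * P h x a x') * π (h + 1) x' a')
    (Qhat : ℕ → X → A → ℝ)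
    (Vhat : ℕ → X → ℝ)
    (hVhat_top : ∀ x, Vhat (H + 1) x = 0)
    (hVhat : ∀ h, 1 ≤ h → h ≤ H → ∀ x, Vhat h x = ∑ a, πhat h x a * Qhat h x a) :
    Vπ 1 x₁ - Vhat 1 x₁ =
      (∑ h ∈ Finset.Icc 1 H, ∑ x, (∑ a, μ h x a) *
          ∑ a, Qhat h x a * (π h x a - πhat h x a)) +
        ∑ h ∈ Finset.Icc 1 H, ∑ x, ∑ a, μ h x a *
          (r h x a + (∑ x', P h x a x' * Vhat (h + 1) x') - Qhat h x a) := by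
  -- μ_h(x,a) = ρ_h(x) · π_h(a|x)
  have hμπ : ∀ h, 1 ≤ h → h ≤ H → ∀ x a, μ h x a = (∑ a', μ h x a') * π h x a := by
    intro h h1 hhH x a
    match h, h1 with
    | 1, _ =>
        simp only [hμ_init, ← Finset.sum_mul]
        rw [← Finset.mul_sum, hπ_sum, mul_one]
    | (k+2), _ =>
        have hk : 1 ≤ k + 1 := by omega
        have hk' : k + 1 < H := by omega
        simp only [hμ_rec (k+1) hk hk']
        rw [← Finset.mul_sum, hπ_sum, mul_one]
  have key : ∀ d h, h + d = H + 1 → 1 ≤ h →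
      ∑ x, (∑ a, μ h x a) * (Vπ h x - Vhat h x) =
        ∑ j ∈ Finset.Icc h H,
          ((∑ x, (∑ a, μ j x a) * ∑ a, Qhat j x a * (π j x a - πhat j x a)) +
           ∑ x, ∑ a, μ j x a *
             (r j x a + (∑ x', P j x a x' * Vhat (j + 1) x') - Qhat j x a)) := by
    intro d
    induction d with
    | zero =>
        intro h hh _
        have : h = H + 1 := by omega
        subst this
        rw [Finset.Icc_eq_empty (by omega)]
        simp [hVπ_top, hVhat_top]
    | succ d ih =>
        intro h hh h1
        have hhH : h ≤ H := by omega
        have hins : Finset.Icc h H = insert h (Finset.Icc (h+1) H) := by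
          ext k
          simp only [Finset.mem_Icc, Finset.mem_insert]
          omega
        rw [hins, Finset.sum_insert (by simp), ← ih (h+1) (by omega) (by omega)]
        -- next-step occupancy
        have hstep : ∑ x', (∑ a', μ (h+1) x' a') * (Vπ (h+1) x' - Vhat (h+1) x')
            = ∑ x', (∑ x, ∑ a, μ h x a * P h x a x') * (Vπ (h+1) x' - Vhat (h+1) x') := by
          rcases eq_or_lt_of_le hhH with heq | hlt
          · subst heq; simp [hVπ_top, hVhat_top]
          · refine Finset.sum_congr rfl fun x' _ => ?_
            congr 1
            simp only [hμ_rec h h1 hlt]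
            rw [← Finset.mul_sum, hπ_sum, mul_one]
        rw [hstep]
        -- expand recursions and μ = ρ·π
        have hexp : ∀ x ∈ (Finset.univ : Finset X),
            (∑ a, μ h x a) * (Vπ h x - Vhat h x) =
            (∑ a, (∑ a', μ h x a') * π h x a *
              (r h x a + ∑ x', P h x a x' * Vπ (h + 1) x'))
            - ∑ a, (∑ a', μ h x a') * (πhat h x a * Qhat h x a) := by
          intro x _
          rw [hVπ_rec h h1 hhH, hVhat h h1 hhH, mul_sub, Finset.mul_sum, Finset.mul_sum]
          congr 1
          refine Finset.sum_congr rfl fun a _ => by ring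
        rw [Finset.sum_congr rfl hexp]
        -- rewrite all μ's on RHS as ρ·π
        simp only [Finset.sum_congr rfl (fun x _ => Finset.sum_congr rfl
          (fun a _ => by rw [hμπ h h1 hhH x a] :
            ∀ a ∈ (Finset.univ : Finset A), μ h x a *
              (r h x a + (∑ x', P h x a x' * Vhat (h + 1) x') - Qhat h x a)
              = (∑ a', μ h x a') * π h x a *
                (r h x a + (∑ x', P h x a x' * Vhat (h + 1) x') - Qhat h x a)))]
        -- swap the x' sum
        have hswap : ∑ x', (∑ x, ∑ a, μ h x a * P h x a x') * (Vπ (h+1) x' - Vhat (h+1) x')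
            = ∑ x, ∑ a, (∑ a', μ h x a') * π h x a *
                (∑ x', P h x a x' * (Vπ (h+1) x' - Vhat (h+1) x')) := by
          calc ∑ x', (∑ x, ∑ a, μ h x a * P h x a x') * (Vπ (h+1) x' - Vhat (h+1) x')
              = ∑ x', ∑ x, ∑ a, μ h x a * P h x a x' * (Vπ (h+1) x' - Vhat (h+1) x') := by
                refine Finset.sum_congr rfl fun x' _ => ?_
                rw [Finset.sum_mul]
                exact Finset.sum_congr rfl fun x _ => by rw [Finset.sum_mul]
            _ = ∑ x, ∑ x', ∑ a, μ h x a * P h x a x' * (Vπ (h+1) x' - Vhat (h+1) x') :=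
                Finset.sum_comm
            _ = ∑ x, ∑ a, ∑ x', μ h x a * P h x a x' * (Vπ (h+1) x' - Vhat (h+1) x') :=
                Finset.sum_congr rfl fun x _ => Finset.sum_comm
            _ = ∑ x, ∑ a, (∑ a', μ h x a') * π h x a *
                (∑ x', P h x a x' * (Vπ (h+1) x' - Vhat (h+1) x')) := by
                refine Finset.sum_congr rfl fun x _ => Finset.sum_congr rfl fun a _ => ?_
                rw [Finset.mul_sum]
                exact Finset.sum_congr rfl fun x' _ => by rw [hμπ h h1 hhH x a]; ring
        rw [hswap]
        -- now pure algebra over sums in x, a, x'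
        simp only [← Finset.sum_sub_distrib, ← Finset.sum_add_distrib, Finset.mul_sum,
          mul_sub, sub_mul, add_mul, mul_add]
        refine Finset.sum_congr rfl fun x _ => Finset.sum_congr rfl fun a _ => ?_
        rw [Finset.sum_sub_distrib]
        ring
  have E1 := key H 1 (by omega) le_rfl
  have hρ1 : ∀ x, (∑ a, μ 1 x a) = if x = x₁ then (1:ℝ) else 0 := by
    intro x
    simp only [hμ_init, ← Finset.sum_mul]
    rw [← Finset.mul_sum, hπ_sum, mul_one]
  rw [Finset.sum_congr rfl (fun x _ => by rw [hρ1 x] :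
    ∀ x ∈ (Finset.univ : Finset X), (∑ a, μ 1 x a) * (Vπ 1 x - Vhat 1 x)
      = (if x = x₁ then (1:ℝ) else 0) * (Vπ 1 x - Vhat 1 x))] at E1
  simp only [ite_mul, one_mul, zero_mul, Finset.sum_ite_eq', Finset.mem_univ,
    if_true] at E1
  rw [E1, Finset.sum_add_distrib]
end

section
/- Let d ≥ 1 and K ≥ 1 be integers and let z_1, …, z_{K−1} ∈ R^d satisfy ‖z_s‖ ≤ 1 for all s. For k ∈ {1, …, K} define Λ^k = I_d + Σ_{s=1}^{k−1} z_s z_sᵀ. If 1 ≤ k_1 < k_2 < ⋯ < k_n ≤ K are indices such that det(Λ^{k_{j+1}}) ≥ 2·det(Λ^{k_j}) for all 1 ≤ j ≤ n−1, then n ≤ 1 + d·log₂ K. -/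
open Matrix
open scoped BigOperators

lemma outer_psd {d : ℕ} (v : Fin d → ℝ) : (vecMulVec v v).PosSemidef := by
  rw [posSemidef_iff_dotProduct_mulVec]
  constructor
  · ext i j; simp [Matrix.conjTranspose_apply, vecMulVec_apply, mul_comm]
  · intro x
    have hrow : ∀ i, (vecMulVec v v *ᵥ x) i = v i * ∑ j, v j * x j := by
      intro i
      simp only [mulVec, vecMulVec_apply, dotProduct, Finset.mul_sum]
      exact Finset.sum_congr rfl fun j _ => by ring
    have key : ∑ i, x i * (v i * ∑ j, v j * x j) = (∑ i, v i * x i) * ∑ j, v j * x j := by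
      rw [Finset.sum_mul]
      exact Finset.sum_congr rfl fun i _ => by ring
    have h : (star x) ⬝ᵥ (vecMulVec v v *ᵥ x) = (∑ i, v i * x i)^2 := by
      simp only [star_trivial, dotProduct, hrow, key, sq]
    rw [h]; positivity

lemma outer_trace {d : ℕ} (v : Fin d → ℝ) : (vecMulVec v v).trace = ∑ i, v i ^ 2 := by
  simp [Matrix.trace, Matrix.diag, vecMulVec_apply, sq]

lemma trace_eq_sum_eig {d : ℕ} {A : Matrix (Fin d) (Fin d) ℝ} (hA : A.IsHermitian) :
    A.trace = ∑ i, hA.eigenvalues i := by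
  conv_lhs => rw [hA.spectral_theorem, Unitary.conjStarAlgAut_apply]
  rw [Matrix.trace_mul_cycle, (Matrix.mem_unitaryGroup_iff').mp (hA.eigenvectorUnitary).2,
    one_mul, Matrix.trace_diagonal]
  simp

lemma det_one_add {d : ℕ} {M : Matrix (Fin d) (Fin d) ℝ} (hM : M.PosSemidef) :
    (1 + M).det = ∏ i, (1 + hM.1.eigenvalues i) := by
  set U := (hM.1.eigenvectorUnitary : Matrix (Fin d) (Fin d) ℝ) with hU
  have h1 : U * star U = 1 := (Matrix.mem_unitaryGroup_iff).mp (hM.1.eigenvectorUnitary).2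
  have key : 1 + M = U * (1 + diagonal (RCLike.ofReal ∘ hM.1.eigenvalues)) * star U := by
    rw [mul_add, add_mul, mul_one, h1]
    congr 1
    exact hM.1.spectral_theorem
  rw [key, det_mul_right_comm, h1, one_mul]
  have : (1 : Matrix (Fin d) (Fin d) ℝ) + diagonal (RCLike.ofReal ∘ hM.1.eigenvalues)
      = diagonal (fun i => 1 + hM.1.eigenvalues i) := by
    rw [← Matrix.diagonal_one, ← Matrix.diagonal_add]
    congr 1
  rw [this, det_diagonal]

/-- Epoch-counting via determinant doubling: with `Λ^k = I + Σ_{s<k} z_s z_sᵀ`, `‖z_s‖ ≤ 1`,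
any indices `1 ≤ k_1 < ⋯ < k_n ≤ K` along which the determinant at least doubles satisfy
`n ≤ 1 + d log₂ K`. -/
theorem stmt_14
    (d K : ℕ) (hd : 1 ≤ d) (hK : 1 ≤ K)
    (z : ℕ → Fin d → ℝ)
    (hz : ∀ s, Real.sqrt (∑ i, z s i ^ 2) ≤ 1)
    (Λ : ℕ → Matrix (Fin d) (Fin d) ℝ)
    (hΛ : ∀ k, Λ k = (1 : Matrix (Fin d) (Fin d) ℝ) +
      ∑ s ∈ Finset.Icc 1 (k - 1), vecMulVec (z s) (z s))
    (n : ℕ) (k : Fin n → ℕ)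
    (hk_mono : StrictMono k)
    (hk_lb : ∀ j, 1 ≤ k j) (hk_ub : ∀ j, k j ≤ K)
    (hdet : ∀ j : Fin n, ∀ hj : (j : ℕ) + 1 < n,
      2 * (Λ (k j)).det ≤ (Λ (k ⟨(j : ℕ) + 1, hj⟩)).det) :
    (n : ℝ) ≤ 1 + d * Real.logb 2 K := by
  have hlogK : 0 ≤ Real.logb 2 K := Real.logb_nonneg one_lt_two (by exact_mod_cast hK)
  by_cases hn : n = 0
  · subst hn
    simp only [Nat.cast_zero]
    have : (0:ℝ) ≤ (d:ℝ) * Real.logb 2 K := mul_nonneg (Nat.cast_nonneg d) hlogK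
    linarith
  have hn1 : 1 ≤ n := Nat.one_le_iff_ne_zero.mpr hn
  set M : ℕ → Matrix (Fin d) (Fin d) ℝ :=
    fun m => ∑ s ∈ Finset.Icc 1 (m-1), vecMulVec (z s) (z s) with hMdef
  have hpsd : ∀ m, (M m).PosSemidef := by
    intro m
    exact Finset.sum_induction _ _ (fun a b ha hb => ha.add hb) Matrix.PosSemidef.zero
      (fun s _ => outer_psd (z s))
  have hzsq : ∀ s, ∑ i, z s i ^ 2 ≤ 1 := by
    intro s
    have h0 : 0 ≤ ∑ i, z s i ^ 2 := Finset.sum_nonneg fun i _ => sq_nonneg _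
    nlinarith [Real.sq_sqrt h0, Real.sqrt_nonneg (∑ i, z s i ^ 2), hz s]
  have htr : ∀ m, m ≤ K → (M m).trace ≤ (K:ℝ) - 1 := by
    intro m hm
    rw [hMdef, Matrix.trace_sum]
    calc ∑ s ∈ Finset.Icc 1 (m-1), (vecMulVec (z s) (z s)).trace
        ≤ ∑ s ∈ Finset.Icc 1 (m-1), 1 :=
          Finset.sum_le_sum fun s _ => by rw [outer_trace]; exact hzsq s
      _ = ((m - 1 : ℕ) : ℝ) := by simp [Nat.card_Icc]
      _ ≤ ((K - 1 : ℕ) : ℝ) := by exact_mod_cast Nat.sub_le_sub_right hm 1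
      _ = (K:ℝ) - 1 := by rw [Nat.cast_sub hK, Nat.cast_one]
  have hdet_lb : ∀ m, 1 ≤ (Λ m).det := by
    intro m
    rw [hΛ m, det_one_add (hpsd m)]
    calc (1:ℝ) = ∏ _i : Fin d, (1:ℝ) := by simp
      _ ≤ ∏ i, (1 + (hpsd m).1.eigenvalues i) :=
          Finset.prod_le_prod (fun i _ => zero_le_one)
            (fun i _ => by linarith [(hpsd m).eigenvalues_nonneg i])
  have hdet_ub : ∀ m, m ≤ K → (Λ m).det ≤ (K:ℝ)^d := by
    intro m hm
    rw [hΛ m, det_one_add (hpsd m)]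
    have heig : ∀ i, 1 + (hpsd m).1.eigenvalues i ≤ (K:ℝ) := by
      intro i
      have h1 : (hpsd m).1.eigenvalues i ≤ ∑ j, (hpsd m).1.eigenvalues j :=
        Finset.single_le_sum (fun j _ => (hpsd m).eigenvalues_nonneg j) (Finset.mem_univ i)
      have h2 : (M m).trace = ∑ j, (hpsd m).1.eigenvalues j := trace_eq_sum_eig (hpsd m).1
      have h3 := htr m hm
      rw [h2] at h3
      linarith
    calc ∏ i, (1 + (hpsd m).1.eigenvalues i) ≤ ∏ _i : Fin d, (K:ℝ) :=
          Finset.prod_le_prod (fun i _ => by linarith [(hpsd m).eigenvalues_nonneg i])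
            (fun i _ => heig i)
      _ = (K:ℝ)^d := by simp
  have hdouble : ∀ j : Fin n, (2:ℝ)^(j:ℕ) ≤ (Λ (k j)).det := by
    rintro ⟨j, hj⟩
    induction j with
    | zero => simpa using hdet_lb (k ⟨0, hj⟩)
    | succ m ih =>
      have hm : m < n := Nat.lt_of_succ_lt hj
      have h2 := hdet ⟨m, hm⟩ hj
      have ihm := ih hm
      calc (2:ℝ)^(m+1) = 2 * 2^m := by ring
        _ ≤ 2 * (Λ (k ⟨m, hm⟩)).det := by linarith
        _ ≤ (Λ (k ⟨m+1, hj⟩)).det := h2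
  have h1 : (2:ℝ)^(n-1) ≤ (K:ℝ)^d := by
    refine le_trans (hdouble ⟨n-1, Nat.sub_lt hn1 one_pos⟩) (hdet_ub _ (hk_ub _))
  have h2 : ((n:ℝ) - 1) ≤ (d:ℝ) * Real.logb 2 K := by
    have hx : (0:ℝ) < 2^(n-1) := by positivity
    have hy : (0:ℝ) < (K:ℝ)^d := by positivity
    have := (Real.logb_le_logb one_lt_two hx hy).mpr h1
    rw [Real.logb_pow, Real.logb_pow, Real.logb_self_eq_one one_lt_two, mul_one] at this
    have hc : ((n - 1 : ℕ) : ℝ) = (n:ℝ) - 1 := by rw [Nat.cast_sub hn1, Nat.cast_one]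
    rw [hc] at this
    exact this
  linarith
end

section
/- Let X be a nonempty set, A a finite nonempty set, d ≥ 1 an integer, and φ : X × A → R^d with ‖φ(x,a)‖ ≤ 1 for all (x,a). Let R ≥ 0, L > 0, B > 0, λ > 0, and ε > 0. Consider the class 𝒱 of all functions V : X → R of the form V(x) = clip_R[ max_{a∈A} ( θᵀφ(x,a) + β·√( φ(x,a)ᵀ Λ^{−1} φ(x,a) ) ) ], where the parameters satisfy ‖θ‖ ≤ L, β ∈ [0, B], and Λ is a d×d real symmetric positive definite matrix with smallest eigenvalue at least λ. Then there exists a finite set F of functions X → R of cardinality at most (1 + 4L/ε)^d · (1 + 8√d·B²/(λ·ε²))^{d²} such that every member of 𝒱 is within supremum distance ε of some element of F. -/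
open Matrix Metric
open scoped BigOperators

section Helpers
open Metric MeasureTheory
open scoped ENNReal NNReal


lemma sep_card_bound {ι : Type*} [Fintype ι] [Nonempty ι] {r δ : ℝ} (hr : 0 ≤ r) (hδ : 0 < δ)
    (s : Finset (EuclideanSpace ℝ ι)) (hs : ∀ x ∈ s, x ∈ closedBall (0 : EuclideanSpace ℝ ι) r)
    (hsep : ∀ x ∈ s, ∀ y ∈ s, x ≠ y → δ ≤ dist x y) :
    (s.card : ℝ) ≤ (1 + 2 * r / δ) ^ (Fintype.card ι) := by
  classical
  set n := Fintype.card ι with hn'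
  have hn : Module.finrank ℝ (EuclideanSpace ℝ ι) = n := finrank_euclideanSpace
  have hdisj : (s : Set (EuclideanSpace ℝ ι)).PairwiseDisjoint (fun x => ball x (δ / 2)) := by
    intro x hx y hy hxy
    apply ball_disjoint_ball
    simpa using hsep x hx y hy hxy
  have hsum : ∑ x ∈ s, volume (ball x (δ / 2)) = volume (⋃ x ∈ s, ball x (δ / 2)) :=
    (measure_biUnion_finset hdisj (fun x _ => measurableSet_ball)).symm
  have hsub : (⋃ x ∈ s, ball x (δ / 2)) ⊆ ball (0 : EuclideanSpace ℝ ι) (r + δ / 2) := by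
    intro z hz
    simp only [Set.mem_iUnion] at hz
    obtain ⟨x, hx, hzx⟩ := hz
    have hxr : dist x 0 ≤ r := hs x hx
    have : dist z 0 < r + δ / 2 :=
      calc dist z 0 ≤ dist z x + dist x 0 := dist_triangle _ _ _
        _ < δ / 2 + r := add_lt_add_of_lt_of_le (mem_ball.mp hzx) hxr
        _ = r + δ / 2 := by ring
    simpa [mem_ball] using this
  have hball : ∀ x : EuclideanSpace ℝ ι, volume (ball x (δ / 2)) =
      ENNReal.ofReal ((δ / 2) ^ n) * volume (ball (0 : EuclideanSpace ℝ ι) 1) := by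
    intro x
    rw [Measure.addHaar_ball volume x (by linarith : (0:ℝ) ≤ δ / 2), hn]
  have hbig : volume (ball (0 : EuclideanSpace ℝ ι) (r + δ / 2)) =
      ENNReal.ofReal ((r + δ / 2) ^ n) * volume (ball (0 : EuclideanSpace ℝ ι) 1) := by
    rw [Measure.addHaar_ball volume _ (by linarith : (0:ℝ) ≤ r + δ / 2), hn]
  have hc0 : volume (ball (0 : EuclideanSpace ℝ ι) 1) ≠ 0 := (measure_ball_pos volume _ one_pos).ne'
  have hct : volume (ball (0 : EuclideanSpace ℝ ι) 1) ≠ ⊤ := measure_ball_lt_top.ne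
  have h1 : (s.card : ℝ≥0∞) * ENNReal.ofReal ((δ / 2) ^ n) * volume (ball (0 : EuclideanSpace ℝ ι) 1)
      ≤ ENNReal.ofReal ((r + δ / 2) ^ n) * volume (ball (0 : EuclideanSpace ℝ ι) 1) := by
    calc (s.card : ℝ≥0∞) * ENNReal.ofReal ((δ / 2) ^ n) * volume (ball (0 : EuclideanSpace ℝ ι) 1)
        = ∑ x ∈ s, volume (ball x (δ / 2)) := by
          rw [Finset.sum_congr rfl (fun x _ => hball x), Finset.sum_const, nsmul_eq_mul, mul_assoc]
      _ = volume (⋃ x ∈ s, ball x (δ / 2)) := hsum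
      _ ≤ volume (ball (0 : EuclideanSpace ℝ ι) (r + δ / 2)) := measure_mono hsub
      _ = _ := hbig
  have h2 : (s.card : ℝ≥0∞) * ENNReal.ofReal ((δ / 2) ^ n) ≤ ENNReal.ofReal ((r + δ / 2) ^ n) :=
    (ENNReal.mul_le_mul_iff_left hc0 hct).mp h1
  -- convert to reals
  have hδn : 0 < (δ / 2) ^ n := by positivity
  have h3 : (s.card : ℝ) * (δ / 2) ^ n ≤ (r + δ / 2) ^ n := by
    rw [← ENNReal.ofReal_natCast s.card, ← ENNReal.ofReal_mul (by positivity)] at h2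
    exact (ENNReal.ofReal_le_ofReal_iff (by positivity)).mp h2
  have h4 : (s.card : ℝ) ≤ ((r + δ / 2) / (δ / 2)) ^ n := by
    rw [div_pow]
    rw [le_div_iff₀ hδn]
    exact h3
  calc (s.card : ℝ) ≤ ((r + δ / 2) / (δ / 2)) ^ n := h4
    _ = (1 + 2 * r / δ) ^ n := by
        congr 1
        field_simp
        ring


lemma exists_net {ι : Type*} [Fintype ι] [Nonempty ι] {r δ : ℝ} (hr : 0 ≤ r) (hδ : 0 < δ) :
    ∃ s : Finset (EuclideanSpace ℝ ι),
      (s.card : ℝ) ≤ (1 + 2 * r / δ) ^ (Fintype.card ι) ∧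
      ∀ x ∈ closedBall (0 : EuclideanSpace ℝ ι) r, ∃ y ∈ s, dist x y ≤ δ := by
  classical
  set P : Finset (EuclideanSpace ℝ ι) → Prop := fun s =>
    (∀ x ∈ s, x ∈ closedBall (0 : EuclideanSpace ℝ ι) r) ∧
    (∀ x ∈ s, ∀ y ∈ s, x ≠ y → δ ≤ dist x y) with hP
  set K : Set ℕ := {k | ∃ s, P s ∧ s.card = k} with hK
  have hK0 : 0 ∈ K := ⟨∅, ⟨by simp, by simp⟩, rfl⟩
  have hbdd : BddAbove K := by
    refine ⟨Nat.floor ((1 + 2 * r / δ) ^ (Fintype.card ι)), ?_⟩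
    rintro k ⟨s, ⟨h1, h2⟩, rfl⟩
    exact Nat.le_floor (sep_card_bound hr hδ s h1 h2)
  have hmem := Nat.sSup_mem ⟨0, hK0⟩ hbdd
  obtain ⟨s, hPs, hcard⟩ := hmem
  refine ⟨s, ?_, ?_⟩
  · exact sep_card_bound hr hδ s hPs.1 hPs.2
  · intro x hx
    by_contra hcon
    push_neg at hcon
    have hxs : x ∉ s := fun hxs => absurd (hcon x hxs) (by simp; linarith)
    have hP' : P (insert x s) := by
      constructor
      · intro y hy
        rcases Finset.mem_insert.mp hy with rfl | hy
        · exact hx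
        · exact hPs.1 y hy
      · intro y hy z hz hyz
        rcases Finset.mem_insert.mp hy with hy1 | hy2
        · rcases Finset.mem_insert.mp hz with hz1 | hz2
          · exact absurd (hy1.trans hz1.symm) hyz
          · rw [hy1]; exact (hcon z hz2).le
        · rcases Finset.mem_insert.mp hz with hz1 | hz2
          · rw [hz1, dist_comm]; exact (hcon y hy2).le
          · exact hPs.2 y hy2 z hz2 hyz
    have : (insert x s).card ∈ K := ⟨_, hP', rfl⟩
    have hle := le_csSup hbdd this
    rw [Finset.card_insert_of_notMem hxs, hcard] at hle
    omega

lemma my_sqrt_add_le {x y : ℝ} (hx : 0 ≤ x) (hy : 0 ≤ y) :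
    Real.sqrt (x + y) ≤ Real.sqrt x + Real.sqrt y := by
  have h1 : x + y ≤ (Real.sqrt x + Real.sqrt y) ^ 2 := by
    have := Real.sq_sqrt hx; have := Real.sq_sqrt hy
    have := Real.sqrt_nonneg x; have := Real.sqrt_nonneg y
    nlinarith [mul_nonneg (Real.sqrt_nonneg x) (Real.sqrt_nonneg y)]
  calc Real.sqrt (x + y) ≤ Real.sqrt ((Real.sqrt x + Real.sqrt y) ^ 2) := Real.sqrt_le_sqrt h1
    _ = _ := Real.sqrt_sq (by positivity)

lemma sqrt_sub_le' (a b : ℝ) : Real.sqrt a ≤ Real.sqrt |a - b| + Real.sqrt b := by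
  rcases le_total a 0 with ha | ha
  · rw [Real.sqrt_eq_zero_of_nonpos ha]; positivity
  rcases le_total b 0 with hb | hb
  · have h0 : a ≤ |a - b| := le_trans (by linarith) (le_abs_self _)
    calc Real.sqrt a ≤ Real.sqrt |a - b| := Real.sqrt_le_sqrt h0
      _ ≤ _ := le_add_of_nonneg_right (Real.sqrt_nonneg _)
  · have h1 : a ≤ |a - b| + b := by
      rcases abs_cases (a - b) with ⟨h, _⟩ | ⟨h, _⟩ <;> linarith
    calc Real.sqrt a ≤ Real.sqrt (|a - b| + b) := Real.sqrt_le_sqrt h1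
      _ ≤ Real.sqrt |a - b| + Real.sqrt b := my_sqrt_add_le (abs_nonneg _) hb

lemma abs_sqrt_sub_sqrt (a b : ℝ) : |Real.sqrt a - Real.sqrt b| ≤ Real.sqrt |a - b| := by
  rw [abs_sub_le_iff]
  constructor
  · linarith [sqrt_sub_le' a b]
  · rw [abs_sub_comm] ; linarith [sqrt_sub_le' b a]

-- Cauchy-Schwarz with abs
lemma abs_sum_mul_le {ι : Type*} (s : Finset ι) (f g : ι → ℝ) :
    |∑ i ∈ s, f i * g i| ≤ Real.sqrt (∑ i ∈ s, f i ^ 2) * Real.sqrt (∑ i ∈ s, g i ^ 2) := by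
  have h := Finset.sum_mul_sq_le_sq_mul_sq s f g
  calc |∑ i ∈ s, f i * g i| = Real.sqrt ((∑ i ∈ s, f i * g i) ^ 2) := (Real.sqrt_sq_eq_abs _).symm
    _ ≤ Real.sqrt ((∑ i ∈ s, f i ^ 2) * ∑ i ∈ s, g i ^ 2) := Real.sqrt_le_sqrt h
    _ = _ := Real.sqrt_mul (by positivity) _

-- clip is 1-Lipschitz
lemma clip_lipschitz (R s t e : ℝ) (h : |s - t| ≤ e) :
    |min R (max (-R) s) - min R (max (-R) t)| ≤ e := by
  rw [abs_sub_le_iff] at h ⊢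
  constructor <;>
  · simp only [min_def, max_def]
    split_ifs <;> linarith [h.1, h.2]

-- sup' difference
lemma sup'_abs_le {A : Type*} [Fintype A] [Nonempty A] (f g : A → ℝ) (e : ℝ)
    (h : ∀ a, |f a - g a| ≤ e) :
    |Finset.univ.sup' Finset.univ_nonempty f - Finset.univ.sup' Finset.univ_nonempty g| ≤ e := by
  rw [abs_sub_le_iff]
  constructor
  · rw [sub_le_iff_le_add]
    apply Finset.sup'_le
    intro a _
    have h2 := Finset.le_sup' g (Finset.mem_univ a)
    have h3 := (abs_sub_le_iff.mp (h a)).1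
    linarith
  · rw [sub_le_iff_le_add]
    apply Finset.sup'_le
    intro a _
    have h2 := Finset.le_sup' f (Finset.mem_univ a)
    have h3 := (abs_sub_le_iff.mp (h a)).2
    linarith


-- quadratic form of inverse bounded
lemma quadform_inv_le {d : ℕ} {lam : ℝ} (hlam : 0 < lam) {Λ : Matrix (Fin d) (Fin d) ℝ}
    (hΛ : Λ.PosDef) (hlow : (Λ - lam • (1 : Matrix (Fin d) (Fin d) ℝ)).PosSemidef)
    (v : Fin d → ℝ) :
    v ⬝ᵥ (Λ⁻¹ *ᵥ v) ≤ (1 / lam) * (v ⬝ᵥ v) := by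
  set u := Λ⁻¹ *ᵥ v with hu
  have hv : Λ *ᵥ u = v := by
    rw [hu, mulVec_mulVec, Matrix.mul_nonsing_inv _ (Matrix.isUnit_iff_isUnit_det _ |>.1 hΛ.isUnit), one_mulVec]
  have hq : lam * (u ⬝ᵥ u) ≤ u ⬝ᵥ (Λ *ᵥ u) := by
    have h0 := hlow.dotProduct_mulVec_nonneg u
    simp only [star_trivial, sub_mulVec, dotProduct_sub, smul_mulVec, one_mulVec,
      dotProduct_smul, smul_eq_mul] at h0
    linarith
  have hvu : u ⬝ᵥ (Λ *ᵥ u) = v ⬝ᵥ u := by rw [hv]; exact dotProduct_comm u v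
  have hcs : (v ⬝ᵥ u) ^ 2 ≤ (v ⬝ᵥ v) * (u ⬝ᵥ u) := by
    have := Finset.sum_mul_sq_le_sq_mul_sq Finset.univ v u
    simpa [dotProduct, pow_two, Finset.mul_sum, mul_comm, mul_assoc] using this
  have hvv : 0 ≤ v ⬝ᵥ v := Finset.sum_nonneg fun i _ => mul_self_nonneg _
  have huu : 0 ≤ u ⬝ᵥ u := Finset.sum_nonneg fun i _ => mul_self_nonneg _
  have hq' : lam * (u ⬝ᵥ u) ≤ v ⬝ᵥ u := by rw [← hvu]; exact hq
  have hb0 : 0 ≤ v ⬝ᵥ u := le_trans (by nlinarith) hq'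
  have key : lam * (v ⬝ᵥ u) ≤ v ⬝ᵥ v := by
    rcases eq_or_lt_of_le huu with ha | ha
    · have hb2 : (v ⬝ᵥ u) ^ 2 ≤ 0 := by rw [← ha] at hcs; linarith
      have : v ⬝ᵥ u = 0 := by nlinarith [sq_nonneg (v ⬝ᵥ u)]
      rw [this]; simpa using hvv
    · nlinarith [mul_le_mul_of_nonneg_right hq' hb0, hcs, ha]
  rw [one_div, inv_mul_eq_div, le_div_iff₀ hlam]
  linarith

section PSDCS
variable {d : ℕ} {M : Matrix (Fin d) (Fin d) ℝ}

lemma symm_dot (hM : M.IsHermitian) (x y : Fin d → ℝ) :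
    x ⬝ᵥ (M *ᵥ y) = y ⬝ᵥ (M *ᵥ x) := by
  have ht : Mᵀ = M := by
    rw [← Matrix.conjTranspose_eq_transpose_of_trivial]; exact hM.eq
  rw [dotProduct_mulVec, ← mulVec_transpose, ht, dotProduct_comm]

lemma psd_cs (hM : M.PosSemidef) (x y : Fin d → ℝ) :
    (x ⬝ᵥ (M *ᵥ y)) ^ 2 ≤ (x ⬝ᵥ (M *ᵥ x)) * (y ⬝ᵥ (M *ᵥ y)) := by
  have h : ∀ t : ℝ, 0 ≤ (y ⬝ᵥ (M *ᵥ y)) * (t * t) + (2 * (x ⬝ᵥ (M *ᵥ y))) * t + x ⬝ᵥ (M *ᵥ x) := by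
    intro t
    have h0 := hM.dotProduct_mulVec_nonneg (x + t • y)
    simp only [star_trivial, mulVec_add, mulVec_smul, dotProduct_add, add_dotProduct,
      dotProduct_smul, smul_dotProduct, smul_eq_mul] at h0
    have hsym := symm_dot hM.1 x y
    rw [← hsym] at h0
    ring_nf at h0 ⊢
    linarith
  have hd := discrim_le_zero h
  rw [discrim] at hd
  nlinarith [hd]

lemma psd_opnorm {c : ℝ} (hM : M.PosSemidef) (hc : 0 ≤ c)
    (hq : ∀ v, v ⬝ᵥ (M *ᵥ v) ≤ c * (v ⬝ᵥ v)) (v : Fin d → ℝ) :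
    (M *ᵥ v) ⬝ᵥ (M *ᵥ v) ≤ c ^ 2 * (v ⬝ᵥ v) := by
  set w := M *ᵥ v with hw
  have h1 : w ⬝ᵥ w = v ⬝ᵥ (M *ᵥ w) := symm_dot hM.1 w v
  have ha : 0 ≤ w ⬝ᵥ w := Finset.sum_nonneg fun i _ => mul_self_nonneg _
  have hvv : 0 ≤ v ⬝ᵥ v := Finset.sum_nonneg fun i _ => mul_self_nonneg _
  have hcs := psd_cs hM v w
  have h2 : (w ⬝ᵥ w) ^ 2 ≤ (c * (v ⬝ᵥ v)) * (c * (w ⬝ᵥ w)) := by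
    calc (w ⬝ᵥ w) ^ 2 = (v ⬝ᵥ (M *ᵥ w)) ^ 2 := by rw [h1]
      _ ≤ (v ⬝ᵥ (M *ᵥ v)) * (w ⬝ᵥ (M *ᵥ w)) := hcs
      _ ≤ (c * (v ⬝ᵥ v)) * (c * (w ⬝ᵥ w)) := by
          apply mul_le_mul (hq v) (hq w) (by simpa using hM.dotProduct_mulVec_nonneg w)
          exact mul_nonneg hc hvv
  rcases eq_or_lt_of_le ha with ha0 | ha0
  · rw [← ha0]; positivity
  · nlinarith [h2, ha0]

end PSDCS

lemma frobenius_inv_le {d : ℕ} {lam : ℝ} (hlam : 0 < lam) {Λ : Matrix (Fin d) (Fin d) ℝ}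
    (hΛ : Λ.PosDef) (hlow : (Λ - lam • (1 : Matrix (Fin d) (Fin d) ℝ)).PosSemidef) :
    ∑ i, ∑ j, (Λ⁻¹ i j) ^ 2 ≤ d * (1 / lam) ^ 2 := by
  have hMpsd : (Λ⁻¹).PosSemidef := hΛ.inv.posSemidef
  have hq : ∀ v, v ⬝ᵥ (Λ⁻¹ *ᵥ v) ≤ (1/lam) * (v ⬝ᵥ v) := quadform_inv_le hlam hΛ hlow
  have hop := psd_opnorm hMpsd (by positivity) hq
  have hcol : ∀ j : Fin d, ∑ i, (Λ⁻¹ i j) ^ 2 ≤ (1/lam) ^ 2 := by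
    intro j
    have h := hop (Pi.single j 1)
    simp only [dotProduct, mulVec, Pi.single_apply, mul_ite, mul_one, mul_zero,
      Finset.sum_ite_eq', Finset.mem_univ, if_true] at h
    calc ∑ i, (Λ⁻¹ i j) ^ 2 = ∑ i, Λ⁻¹ i j * Λ⁻¹ i j := by
          refine Finset.sum_congr rfl fun i _ => by ring
      _ ≤ (1/lam) ^ 2 * 1 := by simpa using h
      _ = (1/lam) ^ 2 := mul_one _
  calc ∑ i, ∑ j, (Λ⁻¹ i j) ^ 2 = ∑ j, ∑ i, (Λ⁻¹ i j) ^ 2 := Finset.sum_comm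
    _ ≤ ∑ _j : Fin d, (1/lam) ^ 2 := Finset.sum_le_sum fun j _ => hcol j
    _ = d * (1/lam) ^ 2 := by simp [mul_comm]

end Helpers

/-- Covering number of the class of clipped optimistic value functions
`V(x) = clip_R[max_a (θᵀφ(x,a) + β √(φ(x,a)ᵀ Λ⁻¹ φ(x,a)))]` with `‖θ‖ ≤ L`, `β ∈ [0,B]`
and `Λ` symmetric positive definite with smallest eigenvalue at least `λ`: there is an
`ε`-cover in supremum distance of cardinality at most
`(1 + 4L/ε)^d · (1 + 8√d B²/(λ ε²))^{d²}`. -/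

theorem stmt_15
    (X A : Type*) [Nonempty X] [Fintype A] [Nonempty A]
    (d : ℕ) (hd : 1 ≤ d)
    (φ : X → A → Fin d → ℝ)
    (hφ : ∀ x a, Real.sqrt (∑ i, φ x a i ^ 2) ≤ 1)
    (R L B lam ε : ℝ) (hR : 0 ≤ R) (hL : 0 < L) (hB : 0 < B) (hlam : 0 < lam)
    (hε : 0 < ε) :
    ∃ F : Finset (X → ℝ),
      (F.card : ℝ) ≤
          (1 + 4 * L / ε) ^ d * (1 + 8 * Real.sqrt d * B ^ 2 / (lam * ε ^ 2)) ^ (d ^ 2) ∧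
      ∀ (θ : Fin d → ℝ) (β : ℝ) (Λ : Matrix (Fin d) (Fin d) ℝ),
        Real.sqrt (∑ i, θ i ^ 2) ≤ L → 0 ≤ β → β ≤ B →
        Λ.PosDef → (Λ - lam • (1 : Matrix (Fin d) (Fin d) ℝ)).PosSemidef →
        ∃ f ∈ F, ∀ x,
          |min R (max (-R)
              (Finset.univ.sup' Finset.univ_nonempty (fun a =>
                θ ⬝ᵥ φ x a + β * Real.sqrt (φ x a ⬝ᵥ (Λ⁻¹ *ᵥ φ x a))))) -
            f x| ≤ ε := by
  classical
  haveI : Nonempty (Fin d) := ⟨⟨0, hd⟩⟩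
  have hε2 : (0:ℝ) < ε / 2 := by linarith
  obtain ⟨s1, hs1card, hs1⟩ := exists_net (ι := Fin d) (r := L) (δ := ε / 2) hL.le hε2
  set r2 : ℝ := Real.sqrt d * B ^ 2 / lam with hr2
  have hdnn : (0:ℝ) ≤ d := Nat.cast_nonneg d
  have hr2nn : 0 ≤ r2 := by positivity
  have hδ2 : (0:ℝ) < ε ^ 2 / 4 := by positivity
  obtain ⟨s2, hs2card, hs2⟩ :=
    exists_net (ι := Fin d × Fin d) (r := r2) (δ := ε ^ 2 / 4) hr2nn hδ2
  set G : (EuclideanSpace ℝ (Fin d)) × (EuclideanSpace ℝ (Fin d × Fin d)) → (X → ℝ) :=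
    fun p x =>
      min R (max (-R) (Finset.univ.sup' Finset.univ_nonempty (fun a =>
        (∑ i, p.1 i * φ x a i) +
          Real.sqrt (∑ i, ∑ j, p.2 (i, j) * φ x a i * φ x a j)))) with hG
  refine ⟨(s1 ×ˢ s2).image G, ?_, ?_⟩
  · -- cardinality bound
    have hb1 : (1:ℝ) + 2 * L / (ε / 2) = 1 + 4 * L / ε := by
      field_simp
      ring
    have hb2 : (1:ℝ) + 2 * r2 / (ε ^ 2 / 4) = 1 + 8 * Real.sqrt d * B ^ 2 / (lam * ε ^ 2) := by
      rw [hr2]; field_simp; ring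
    rw [hb1, Fintype.card_fin] at hs1card
    rw [hb2, Fintype.card_prod, Fintype.card_fin] at hs2card
    have hcard : ((s1 ×ˢ s2).image G).card ≤ s1.card * s2.card :=
      le_trans (Finset.card_image_le) (le_of_eq (Finset.card_product s1 s2))
    calc (((s1 ×ˢ s2).image G).card : ℝ) ≤ (s1.card : ℝ) * (s2.card : ℝ) := by
          exact_mod_cast hcard
      _ ≤ (1 + 4 * L / ε) ^ d * (1 + 8 * Real.sqrt d * B ^ 2 / (lam * ε ^ 2)) ^ (d * d) := by
          apply mul_le_mul hs1card hs2card (Nat.cast_nonneg _)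
          positivity
      _ = _ := by ring
  · -- coverage
    intro θ β Λ hθ hβ0 hβB hpd hpsd
    -- the θ component
    set θE : EuclideanSpace ℝ (Fin d) := WithLp.toLp 2 θ with hθE
    have hθball : θE ∈ closedBall (0 : EuclideanSpace ℝ (Fin d)) L := by
      rw [mem_closedBall_zero_iff, EuclideanSpace.norm_eq]
      simpa [Real.norm_eq_abs, sq_abs] using hθ
    obtain ⟨θ', hθ's, hθ'd⟩ := hs1 θE hθball
    -- the matrix component
    set ME : EuclideanSpace ℝ (Fin d × Fin d) := WithLp.toLp 2 (fun p => β ^ 2 * Λ⁻¹ p.1 p.2) with hME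
    have hfrob := frobenius_inv_le hlam hpd hpsd
    have hMEball : ME ∈ closedBall (0 : EuclideanSpace ℝ (Fin d × Fin d)) r2 := by
      rw [mem_closedBall_zero_iff, EuclideanSpace.norm_eq]
      have hsum : ∑ p : Fin d × Fin d, ‖ME p‖ ^ 2 = β ^ 4 * ∑ i, ∑ j, (Λ⁻¹ i j) ^ 2 := by
        rw [Fintype.sum_prod_type, Finset.mul_sum]
        refine Finset.sum_congr rfl fun i _ => ?_
        rw [Finset.mul_sum]
        refine Finset.sum_congr rfl fun j _ => ?_
        have hn : ‖ME (i, j)‖ ^ 2 = (β ^ 2 * Λ⁻¹ i j) ^ 2 := by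
          rw [Real.norm_eq_abs, sq_abs]
        rw [hn]; ring
      rw [hsum]
      have hβ4 : β ^ 4 ≤ B ^ 4 := pow_le_pow_left₀ hβ0 hβB 4
      have hfr0 : 0 ≤ ∑ i, ∑ j, (Λ⁻¹ i j) ^ 2 := by positivity
      have hr2sq : r2 ^ 2 = B ^ 4 * ((d:ℝ) * (1 / lam) ^ 2) := by
        rw [hr2]
        rw [div_pow, mul_pow, Real.sq_sqrt hdnn]
        field_simp
      have hle : β ^ 4 * ∑ i, ∑ j, (Λ⁻¹ i j) ^ 2 ≤ r2 ^ 2 := by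
        rw [hr2sq]
        exact mul_le_mul hβ4 hfrob hfr0 (by positivity)
      calc Real.sqrt (β ^ 4 * ∑ i, ∑ j, (Λ⁻¹ i j) ^ 2) ≤ Real.sqrt (r2 ^ 2) :=
            Real.sqrt_le_sqrt hle
        _ = r2 := Real.sqrt_sq hr2nn
    obtain ⟨M', hM's, hM'd⟩ := hs2 ME hMEball
    refine ⟨G (θ', M'), Finset.mem_image_of_mem G (Finset.mem_product.mpr ⟨hθ's, hM's⟩), ?_⟩
    intro x
    apply clip_lipschitz
    apply sup'_abs_le
    intro a
    set w : Fin d → ℝ := φ x a with hw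
    have hw1 : Real.sqrt (∑ i, w i ^ 2) ≤ 1 := hφ x a
    have hwsq : ∑ i, w i ^ 2 ≤ 1 := by
      have h0 : (0:ℝ) ≤ ∑ i, w i ^ 2 := by positivity
      nlinarith [Real.sq_sqrt h0, Real.sqrt_nonneg (∑ i, w i ^ 2)]
    -- rewrite β √(wᵀΛ⁻¹w) as √(qform of ME)
    have hq1 : β * Real.sqrt (w ⬝ᵥ (Λ⁻¹ *ᵥ w)) =
        Real.sqrt (∑ i, ∑ j, ME (i, j) * w i * w j) := by
      have he : ∑ i, ∑ j, ME (i, j) * w i * w j = β ^ 2 * (w ⬝ᵥ (Λ⁻¹ *ᵥ w)) := by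
        simp only [hME, dotProduct, mulVec, Finset.mul_sum]
        refine Finset.sum_congr rfl fun i _ => ?_
        refine Finset.sum_congr rfl fun j _ => ?_
        ring
      rw [he, Real.sqrt_mul (sq_nonneg β), Real.sqrt_sq hβ0]
    -- first term
    have hdist1 : Real.sqrt (∑ i, (θ i - θ' i) ^ 2) ≤ ε / 2 := by
      have : dist θE θ' = Real.sqrt (∑ i, (θ i - θ' i) ^ 2) := by
        rw [EuclideanSpace.dist_eq]
        congr 1
        exact Finset.sum_congr rfl fun i _ => by rw [Real.dist_eq, sq_abs]
      rw [← this]; exact hθ'd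
    have h2 : |θ ⬝ᵥ w - ∑ i, θ' i * w i| ≤ ε / 2 := by
      have he : θ ⬝ᵥ w - ∑ i, θ' i * w i = ∑ i, (θ i - θ' i) * w i := by
        simp [dotProduct, Finset.sum_sub_distrib, sub_mul]
      rw [he]
      calc |∑ i, (θ i - θ' i) * w i|
          ≤ Real.sqrt (∑ i, (θ i - θ' i) ^ 2) * Real.sqrt (∑ i, w i ^ 2) :=
            abs_sum_mul_le _ _ _
        _ ≤ (ε / 2) * 1 := mul_le_mul hdist1 hw1 (Real.sqrt_nonneg _) (by linarith)
        _ = ε / 2 := mul_one _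
    -- second term
    have hdist2 : Real.sqrt (∑ p : Fin d × Fin d, (ME p - M' p) ^ 2) ≤ ε ^ 2 / 4 := by
      have : dist ME M' = Real.sqrt (∑ p : Fin d × Fin d, (ME p - M' p) ^ 2) := by
        rw [EuclideanSpace.dist_eq]
        congr 1
        exact Finset.sum_congr rfl fun p _ => by rw [Real.dist_eq, sq_abs]
      rw [← this]; exact hM'd
    have hqd : |(∑ i, ∑ j, ME (i, j) * w i * w j) - ∑ i, ∑ j, M' (i, j) * w i * w j|
        ≤ ε ^ 2 / 4 := by
      have he : (∑ i, ∑ j, ME (i, j) * w i * w j) - ∑ i, ∑ j, M' (i, j) * w i * w j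
          = ∑ p : Fin d × Fin d, (ME p - M' p) * (w p.1 * w p.2) := by
        rw [Fintype.sum_prod_type, ← Finset.sum_sub_distrib]
        refine Finset.sum_congr rfl fun i _ => ?_
        rw [← Finset.sum_sub_distrib]
        exact Finset.sum_congr rfl fun j _ => by ring
      rw [he]
      have hsq : Real.sqrt (∑ p : Fin d × Fin d, (w p.1 * w p.2) ^ 2) ≤ 1 := by
        have he2 : ∑ p : Fin d × Fin d, (w p.1 * w p.2) ^ 2
            = (∑ i, w i ^ 2) * (∑ j, w j ^ 2) := by
          rw [Fintype.sum_prod_type, Finset.sum_mul_sum]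
          exact Finset.sum_congr rfl fun i _ => Finset.sum_congr rfl fun j _ => by ring
        rw [he2]
        have h0 : (0:ℝ) ≤ ∑ i, w i ^ 2 := by positivity
        calc Real.sqrt ((∑ i, w i ^ 2) * (∑ j, w j ^ 2)) ≤ Real.sqrt (1 * 1) := by
              apply Real.sqrt_le_sqrt
              exact mul_le_mul hwsq hwsq h0 (by linarith)
          _ = 1 := by rw [mul_one, Real.sqrt_one]
      calc |∑ p : Fin d × Fin d, (ME p - M' p) * (w p.1 * w p.2)|
          ≤ Real.sqrt (∑ p : Fin d × Fin d, (ME p - M' p) ^ 2) *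
            Real.sqrt (∑ p : Fin d × Fin d, (w p.1 * w p.2) ^ 2) := abs_sum_mul_le _ _ _
        _ ≤ (ε ^ 2 / 4) * 1 :=
            mul_le_mul hdist2 hsq (Real.sqrt_nonneg _) (by positivity)
        _ = ε ^ 2 / 4 := mul_one _
    have h3 : |Real.sqrt (∑ i, ∑ j, ME (i, j) * w i * w j) -
        Real.sqrt (∑ i, ∑ j, M' (i, j) * w i * w j)| ≤ ε / 2 := by
      calc |Real.sqrt (∑ i, ∑ j, ME (i, j) * w i * w j) -
            Real.sqrt (∑ i, ∑ j, M' (i, j) * w i * w j)|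
          ≤ Real.sqrt |(∑ i, ∑ j, ME (i, j) * w i * w j) -
              ∑ i, ∑ j, M' (i, j) * w i * w j| := abs_sqrt_sub_sqrt _ _
        _ ≤ Real.sqrt (ε ^ 2 / 4) := Real.sqrt_le_sqrt hqd
        _ = ε / 2 := by
            rw [show ε ^ 2 / 4 = (ε / 2) ^ 2 by ring, Real.sqrt_sq (by linarith)]
    -- combine
    have := abs_add_le (θ ⬝ᵥ w - ∑ i, θ' i * w i)
      (Real.sqrt (∑ i, ∑ j, ME (i, j) * w i * w j) -
        Real.sqrt (∑ i, ∑ j, M' (i, j) * w i * w j))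
    calc |θ ⬝ᵥ w + β * Real.sqrt (w ⬝ᵥ (Λ⁻¹ *ᵥ w)) -
          ((∑ i, θ' i * w i) + Real.sqrt (∑ i, ∑ j, M' (i, j) * w i * w j))|
        = |(θ ⬝ᵥ w - ∑ i, θ' i * w i) +
            (Real.sqrt (∑ i, ∑ j, ME (i, j) * w i * w j) -
              Real.sqrt (∑ i, ∑ j, M' (i, j) * w i * w j))| := by
          rw [hq1]; ring_nf
      _ ≤ |θ ⬝ᵥ w - ∑ i, θ' i * w i| +
            |Real.sqrt (∑ i, ∑ j, ME (i, j) * w i * w j) -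
              Real.sqrt (∑ i, ∑ j, M' (i, j) * w i * w j)| := abs_add_le _ _
      _ ≤ ε / 2 + ε / 2 := add_le_add h2 h3
      _ = ε := by ring
end
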